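/- arXiv:2405.05793 — 7 statements merged into one kernel-verified Lean document; each statement's English description precedes it below -/
import Mathlib

section
/- Let (P_n) be the renewal covering of the natural numbers. Then the random sequence λ_n = ∏_{k=1}^n (1 − 1/P_k) converges to 0 almost surely. -/
open MeasureTheory ProbabilityTheory Filter

/-- The renewal covering of the natural numbers: a random increasing sequence `P` with
`P 1 = 2` almost surely, and such that, conditionally on the values
`P 1 = a 1, ..., P n = a n`, the increment `P (n+1) − P n` is distributed as a geometric
random variable with parameter `λ_n = ∏_{k=1}^n (1 − 1/a k)`, independently of the past. -/
structure RenewalCovering {Ω : Type*} [MeasurableSpace Ω] (μ : Measure Ω) where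
  P : ℕ → Ω → ℕ
  meas : ∀ n, Measurable (P n)
  incr : ∀ᵐ ω ∂μ, ∀ n, 1 ≤ n → P n ω < P (n + 1) ω
  init : ∀ᵐ ω ∂μ, P 1 ω = 2
  cond : ∀ n : ℕ, 1 ≤ n → ∀ a : ℕ → ℕ,
    (∀ i, 1 ≤ i → i < n → a i < a (i + 1)) → a 1 = 2 →
    ∀ j : ℕ, 1 ≤ j →
    μ {ω | P (n + 1) ω = a n + j ∧ ∀ i, 1 ≤ i → i ≤ n → P i ω = a i}
      = ENNReal.ofReal
          ((1 - ∏ k ∈ Finset.Icc 1 n, (1 - 1 / (a k : ℝ))) ^ (j - 1)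
            * ∏ k ∈ Finset.Icc 1 n, (1 - 1 / (a k : ℝ)))
        * μ {ω | ∀ i, 1 ≤ i → i ≤ n → P i ω = a i}

/-- The random parameter `λ_n = ∏_{k=1}^n (1 − 1/P_k)`. -/
noncomputable def RenewalCovering.lam {Ω : Type*} [MeasurableSpace Ω] {μ : Measure Ω}
    (R : RenewalCovering μ) (n : ℕ) (ω : Ω) : ℝ :=
  ∏ k ∈ Finset.Icc 1 n, (1 - 1 / (R.P k ω : ℝ))

/-! ### Auxiliary analytic lemmas -/

/-- The series `∑ 1/((n+1)(log(n+1)+1))` diverges (Cauchy condensation). -/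
lemma aux_not_summable :
    ¬ Summable (fun n : ℕ => 1 / (((n : ℝ) + 1) * (Real.log (n + 1) + 1))) := by
  set f : ℕ → ℝ := fun n => 1 / (((n : ℝ) + 1) * (Real.log (n + 1) + 1)) with hf
  have hpos : ∀ n : ℕ, 0 < ((n : ℝ) + 1) * (Real.log (n + 1) + 1) := by
    intro n
    have h1 : (0:ℝ) < (n : ℝ) + 1 := by positivity
    have h2 : (0:ℝ) ≤ Real.log (n + 1) := Real.log_nonneg (by push_cast; linarith)
    nlinarith
  intro h
  have hnonneg : ∀ n, 0 ≤ f n := fun n => le_of_lt (one_div_pos.2 (hpos n))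
  have hmono : ∀ ⦃m n : ℕ⦄, 0 < m → m ≤ n → f n ≤ f m := by
    intro m n hm hmn
    apply one_div_le_one_div_of_le (hpos m)
    have h1 : Real.log ((m:ℝ) + 1) ≤ Real.log ((n:ℝ) + 1) :=
      Real.log_le_log (by positivity) (by exact_mod_cast by omega)
    have h2 : (m : ℝ) + 1 ≤ (n : ℝ) + 1 := by exact_mod_cast by omega
    nlinarith [Real.log_nonneg (show (1:ℝ) ≤ (m:ℝ)+1 by linarith)]
  have hcond := (summable_condensed_iff_of_nonneg hnonneg hmono).2 h
  have hlb : ∀ k : ℕ, 1 / (2 * ((k:ℝ) + 2)) ≤ 2 ^ k * f (2 ^ k) := by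
    intro k
    have hcast : ((2 ^ k : ℕ) : ℝ) = 2 ^ k := by push_cast; ring
    have h2k : (1:ℝ) ≤ 2 ^ k := one_le_pow₀ (by norm_num)
    have hlog2 : Real.log 2 ≤ 1 := by
      have := Real.log_le_sub_one_of_pos (show (0:ℝ) < 2 by norm_num); linarith
    have hloge : Real.log ((2:ℝ) ^ k + 1) ≤ (k + 1 : ℝ) := by
      have h1 : (2:ℝ) ^ k + 1 ≤ 2 ^ (k+1) := by
        rw [pow_succ]; nlinarith
      have h2 : Real.log ((2:ℝ) ^ k + 1) ≤ Real.log ((2:ℝ) ^ (k+1)) :=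
        Real.log_le_log (by positivity) h1
      rw [Real.log_pow] at h2
      calc Real.log ((2:ℝ) ^ k + 1) ≤ (k+1 : ℕ) * Real.log 2 := h2
        _ ≤ (k + 1 : ℝ) := by
            push_cast
            nlinarith [Real.log_nonneg (show (1:ℝ) ≤ 2 by norm_num)]
    have key : ((2:ℝ) ^ k + 1) * (Real.log ((2:ℝ) ^ k + 1) + 1) ≤ 2 ^ k * (2 * ((k:ℝ) + 2)) := by
      have h1 : (2:ℝ) ^ k + 1 ≤ 2 * 2 ^ k := by nlinarith
      have h2 : Real.log ((2:ℝ) ^ k + 1) + 1 ≤ (k:ℝ) + 2 := by linarith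
      have h3 : (0:ℝ) ≤ Real.log ((2:ℝ)^k + 1) + 1 := by
        nlinarith [Real.log_nonneg (show (1:ℝ) ≤ (2:ℝ)^k + 1 by linarith)]
      calc ((2:ℝ) ^ k + 1) * (Real.log ((2:ℝ) ^ k + 1) + 1)
          ≤ (2 * 2 ^ k) * ((k:ℝ) + 2) := mul_le_mul h1 h2 h3 (by positivity)
        _ = 2 ^ k * (2 * ((k:ℝ) + 2)) := by ring
    rw [hf]
    simp only [hcast, mul_one_div]
    rw [div_le_div_iff₀ (by positivity)
      (by push_cast; exact hpos (2^k) |>.trans_le (le_of_eq (by rw [hcast])))]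
    push_cast
    nlinarith [key, hpos (2^k), Real.log_nonneg (show (1:ℝ) ≤ (2:ℝ)^k + 1 by linarith)]
  have hsum2 : Summable (fun k : ℕ => 1 / (2 * ((k:ℝ) + 2))) :=
    Summable.of_nonneg_of_le (fun k => by positivity) hlb hcond
  have hsum3 : Summable (fun k : ℕ => 1 / ((k:ℝ) + 2)) := by
    have := hsum2.mul_left 2
    refine this.congr (fun k => ?_)
    rw [mul_one_div, ← div_div, div_self two_ne_zero]
  have hsum4 : Summable (fun k : ℕ => 1 / ((k + 2 : ℕ) : ℝ)) := by
    convert hsum3 using 2 with k; push_cast; ring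
  exact Real.not_summable_one_div_natCast ((summable_nat_add_iff 2).1 hsum4)

noncomputable def epsm (m : ℕ) : ℝ := 1 / ((m : ℝ) + 2)

noncomputable def cm (m : ℕ) : ℝ := 2 / (-Real.log (1 - epsm m))

noncomputable def jf (m n : ℕ) : ℕ := ⌈cm m * Real.log n⌉₊ + 1

lemma epsm_pos (m : ℕ) : 0 < epsm m := by
  have : (0:ℝ) < (m:ℝ) + 2 := by positivity
  exact one_div_pos.2 this

lemma epsm_lt_one (m : ℕ) : epsm m < 1 := by
  rw [epsm, div_lt_one (by positivity)]
  have : (0:ℝ) ≤ (m:ℝ) := Nat.cast_nonneg m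
  linarith

lemma log_r_neg (m : ℕ) : Real.log (1 - epsm m) < 0 :=
  Real.log_neg (by linarith [epsm_lt_one m]) (by linarith [epsm_pos m])

lemma cm_pos (m : ℕ) : 0 < cm m := by
  have := log_r_neg m
  rw [cm]
  exact div_pos two_pos (by linarith)

lemma jf_bound (m n : ℕ) (hn : 1 ≤ n) :
    (1 - epsm m) ^ (jf m n - 1) ≤ 1 / (n : ℝ) ^ 2 := by
  set r := 1 - epsm m with hr
  have hr0 : 0 < r := by have := epsm_lt_one m; rw [hr]; linarith
  have hr1 : r < 1 := by have := epsm_pos m; rw [hr]; linarith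
  have hlogn : 0 ≤ Real.log n := Real.log_nonneg (by exact_mod_cast hn)
  have hx0 : 0 ≤ cm m * Real.log n := mul_nonneg (cm_pos m).le hlogn
  have h1 : jf m n - 1 = ⌈cm m * Real.log n⌉₊ := by simp [jf]
  rw [h1]
  have h2 : r ^ (⌈cm m * Real.log n⌉₊ : ℕ) = r ^ ((⌈cm m * Real.log n⌉₊ : ℕ) : ℝ) := by
    rw [Real.rpow_natCast]
  rw [h2]
  have h3 : r ^ ((⌈cm m * Real.log n⌉₊ : ℕ) : ℝ) ≤ r ^ (cm m * Real.log n) :=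
    Real.rpow_le_rpow_of_exponent_ge hr0 hr1.le (Nat.le_ceil _)
  refine h3.trans ?_
  have hlr : Real.log r ≠ 0 := ne_of_lt (log_r_neg m)
  have h4 : r ^ (cm m * Real.log n) = Real.exp (Real.log r * (cm m * Real.log n)) := by
    rw [Real.rpow_def_of_pos hr0]
  have hq : Real.log r / (-Real.log r) = -1 := by rw [div_neg, div_self hlr]
  have h5 : Real.log r * (cm m * Real.log n) = -(2 * Real.log n) := by
    have : Real.log r * (cm m * Real.log n)
        = (Real.log r / (-Real.log r)) * (2 * Real.log n) := by
      rw [cm, ← hr]; ring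
    rw [this, hq]; ring
  rw [h4, h5]
  have h6 : -(2 * Real.log n) = -Real.log ((n:ℝ) ^ 2) := by
    rw [Real.log_pow]; push_cast; ring
  have hn0 : (0:ℝ) < (n:ℝ) := by exact_mod_cast hn
  rw [h6, Real.exp_neg, Real.exp_log (by positivity : (0:ℝ) < (n:ℝ)^2)]
  rw [one_div]

namespace RenewalCovering

variable {Ω : Type*} [MeasurableSpace Ω] {μ : Measure Ω}

/-- The pointwise "good" event: strictly increasing and starting at 2. -/
def Good (R : RenewalCovering μ) (ω : Ω) : Prop :=
  (∀ n, 1 ≤ n → R.P n ω < R.P (n + 1) ω) ∧ R.P 1 ω = 2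

def aOf (n : ℕ) (v : Fin n → ℕ) : ℕ → ℕ := fun i => if h : i - 1 < n then v ⟨i - 1, h⟩ else 0

def Adm (n : ℕ) (v : Fin n → ℕ) : Prop :=
  (∀ i, 1 ≤ i → i < n → aOf n v i < aOf n v (i + 1)) ∧ aOf n v 1 = 2

noncomputable def Lam (n : ℕ) (v : Fin n → ℕ) : ℝ :=
  ∏ k ∈ Finset.Icc 1 n, (1 - 1 / (aOf n v k : ℝ))

lemma Adm.two_le {n : ℕ} {v : Fin n → ℕ} (h : Adm n v) :
    ∀ k, 1 ≤ k → k ≤ n → 2 ≤ aOf n v k := by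
  intro k hk1 hkn
  induction k with
  | zero => omega
  | succ k ih =>
    by_cases hk0 : k = 0
    · subst hk0; exact le_of_eq h.2.symm
    · have h1 : 1 ≤ k := by omega
      have h2 := h.1 k h1 (by omega)
      have h3 := ih h1 (by omega)
      omega

lemma Lam_pos {n : ℕ} {v : Fin n → ℕ} (h : Adm n v) : 0 < Lam n v := by
  apply Finset.prod_pos
  intro k hk
  rw [Finset.mem_Icc] at hk
  have h2 : (2 : ℝ) ≤ (aOf n v k : ℝ) := by exact_mod_cast h.two_le k hk.1 hk.2
  have : 1 / (aOf n v k : ℝ) ≤ 1 / 2 := one_div_le_one_div_of_le (by norm_num) h2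
  linarith

lemma Lam_le_one {n : ℕ} {v : Fin n → ℕ} (h : Adm n v) : Lam n v ≤ 1 := by
  apply Finset.prod_le_one
  · intro k hk
    rw [Finset.mem_Icc] at hk
    have h2 : (2 : ℝ) ≤ (aOf n v k : ℝ) := by exact_mod_cast h.two_le k hk.1 hk.2
    have : 1 / (aOf n v k : ℝ) ≤ 1 / 2 := one_div_le_one_div_of_le (by norm_num) h2
    linarith
  · intro k hk
    have : (0:ℝ) ≤ 1 / (aOf n v k : ℝ) := by positivity
    linarith

lemma measurable_cyl (R : RenewalCovering μ) (n : ℕ) (a : ℕ → ℕ) :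
    MeasurableSet {ω | ∀ i, 1 ≤ i → i ≤ n → R.P i ω = a i} := by
  have : {ω | ∀ i, 1 ≤ i → i ≤ n → R.P i ω = a i}
      = ⋂ i ∈ Finset.Icc 1 n, (R.P i) ⁻¹' {a i} := by
    ext ω
    simp only [Set.mem_setOf_eq, Set.mem_iInter, Set.mem_preimage, Set.mem_singleton_iff,
      Finset.mem_Icc]
    constructor
    · rintro h i ⟨h1, h2⟩; exact h i h1 h2
    · intro h i h1 h2; exact h i ⟨h1, h2⟩
  rw [this]
  exact MeasurableSet.biInter (Finset.Icc 1 n).countable_toSet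
    (fun i _ => (R.meas i) (measurableSet_singleton _))

lemma cyl_disjoint (R : RenewalCovering μ) {n : ℕ} {v w : Fin n → ℕ} (hvw : v ≠ w) :
    Disjoint {ω | ∀ i, 1 ≤ i → i ≤ n → R.P i ω = aOf n v i}
      {ω | ∀ i, 1 ≤ i → i ≤ n → R.P i ω = aOf n w i} := by
  rw [Set.disjoint_left]
  intro ω h1 h2
  obtain ⟨k, hk⟩ := Function.ne_iff.1 hvw
  have e1 := h1 (k.1 + 1) (by omega) (Nat.succ_le_of_lt k.isLt)
  have e2 := h2 (k.1 + 1) (by omega) (Nat.succ_le_of_lt k.isLt)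
  apply hk
  have hlt : k.1 + 1 - 1 < n := by have := k.isLt; omega
  rw [aOf, dif_pos hlt] at e1 e2
  have : v ⟨k.1 + 1 - 1, hlt⟩ = w ⟨k.1 + 1 - 1, hlt⟩ := by rw [← e1, ← e2]
  simpa using this

lemma geom_tail {L : ℝ} (h0 : 0 < L) (h1 : L ≤ 1) {j : ℕ} (hj : 1 ≤ j) :
    ∑' i : ℕ, ENNReal.ofReal ((1 - L) ^ (j + i - 1) * L) = ENNReal.ofReal ((1 - L) ^ (j - 1)) := by
  have hr0 : (0:ℝ) ≤ 1 - L := by linarith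
  have hr1 : 1 - L < 1 := by linarith
  have hkey : ∀ i : ℕ, (1 - L) ^ (j + i - 1) * L = ((1 - L) ^ (j - 1) * L) * (1 - L) ^ i := by
    intro i
    have : j + i - 1 = (j - 1) + i := by omega
    rw [this, pow_add]; ring
  simp_rw [hkey]
  have hgs : Summable (fun i : ℕ => (1 - L) ^ i) := summable_geometric_of_lt_one hr0 hr1
  rw [← ENNReal.ofReal_tsum_of_nonneg (fun i => by positivity) (hgs.mul_left _)]
  rw [tsum_mul_left, tsum_geometric_of_lt_one hr0 hr1]
  congr 1
  have h2 : 1 - (1 - L) = L := by ring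
  rw [h2]
  field_simp

/-- Key estimate: the probability that `λ_n ≥ ε` while the next gap is at least `j`
is at most `(1-ε)^(j-1)`. -/
lemma key_estimate (R : RenewalCovering μ) [IsProbabilityMeasure μ] {n j : ℕ}
    (hn : 1 ≤ n) (hj : 1 ≤ j) {ε : ℝ} :
    μ {ω | R.Good ω ∧ ε ≤ R.lam n ω ∧ R.P n ω + j ≤ R.P (n + 1) ω}
      ≤ ENNReal.ofReal ((1 - ε) ^ (j - 1)) := by
  classical
  set S := {v : Fin n → ℕ // Adm n v ∧ ε ≤ Lam n v} with hS
  set C : S × ℕ → Set Ω := fun p =>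
    {ω | R.P (n + 1) ω = aOf n (p.1 : Fin n → ℕ) n + (j + p.2)
      ∧ ∀ i, 1 ≤ i → i ≤ n → R.P i ω = aOf n (p.1 : Fin n → ℕ) i} with hC
  have hcover : {ω | R.Good ω ∧ ε ≤ R.lam n ω ∧ R.P n ω + j ≤ R.P (n + 1) ω}
      ⊆ ⋃ p : S × ℕ, C p := by
    rintro ω ⟨hg, hl, hp⟩
    set v : Fin n → ℕ := fun k => R.P (k.1 + 1) ω with hv
    have haOf : ∀ i, 1 ≤ i → i ≤ n → aOf n v i = R.P i ω := by
      intro i hi1 hi2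
      have hlt : i - 1 < n := by omega
      rw [aOf, dif_pos hlt]
      show R.P (i - 1 + 1) ω = R.P i ω
      congr 1
      omega
    have hadm : Adm n v := by
      constructor
      · intro i hi1 hi2
        rw [haOf i hi1 (le_of_lt hi2), haOf (i + 1) (by omega) hi2]
        exact hg.1 i hi1
      · rw [haOf 1 le_rfl hn]; exact hg.2
    have hlam : Lam n v = R.lam n ω := by
      apply Finset.prod_congr rfl
      intro k hk
      rw [Finset.mem_Icc] at hk
      rw [haOf k hk.1 hk.2]
    refine Set.mem_iUnion.2 ⟨⟨⟨v, hadm, hlam ▸ hl⟩, R.P (n + 1) ω - R.P n ω - j⟩, ?_, ?_⟩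
    · show R.P (n + 1) ω = aOf n v n + (j + (R.P (n + 1) ω - R.P n ω - j))
      rw [haOf n hn le_rfl]
      omega
    · intro i hi1 hi2
      exact (haOf i hi1 hi2).symm
  have hinner : ∀ v : S, ∑' i : ℕ, μ (C (v, i))
      ≤ ENNReal.ofReal ((1 - ε) ^ (j - 1))
        * μ {ω | ∀ i, 1 ≤ i → i ≤ n → R.P i ω = aOf n (v : Fin n → ℕ) i} := by
    intro v
    obtain ⟨hadm, hεv⟩ := v.2
    have hΛpos : 0 < Lam n (v : Fin n → ℕ) := Lam_pos hadm
    have hΛle : Lam n (v : Fin n → ℕ) ≤ 1 := Lam_le_one hadm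
    have hcond : ∀ i : ℕ, μ (C (v, i))
        = ENNReal.ofReal ((1 - Lam n (v : Fin n → ℕ)) ^ (j + i - 1) * Lam n (v : Fin n → ℕ))
          * μ {ω | ∀ i, 1 ≤ i → i ≤ n → R.P i ω = aOf n (v : Fin n → ℕ) i} := by
      intro i
      exact R.cond n hn (aOf n (v : Fin n → ℕ)) hadm.1 hadm.2 (j + i) (by omega)
    calc ∑' i : ℕ, μ (C (v, i))
        = (∑' i : ℕ, ENNReal.ofReal
            ((1 - Lam n (v : Fin n → ℕ)) ^ (j + i - 1) * Lam n (v : Fin n → ℕ)))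
          * μ {ω | ∀ i, 1 ≤ i → i ≤ n → R.P i ω = aOf n (v : Fin n → ℕ) i} := by
          simp_rw [hcond]; rw [ENNReal.tsum_mul_right]
      _ = ENNReal.ofReal ((1 - Lam n (v : Fin n → ℕ)) ^ (j - 1))
          * μ {ω | ∀ i, 1 ≤ i → i ≤ n → R.P i ω = aOf n (v : Fin n → ℕ) i} := by
          rw [geom_tail hΛpos hΛle hj]
      _ ≤ ENNReal.ofReal ((1 - ε) ^ (j - 1))
          * μ {ω | ∀ i, 1 ≤ i → i ≤ n → R.P i ω = aOf n (v : Fin n → ℕ) i} := by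
          apply mul_le_mul_left
          apply ENNReal.ofReal_le_ofReal
          apply pow_le_pow_left₀ (by linarith) (by linarith)
  have hdisjsum : ∑' v : S, μ {ω | ∀ i, 1 ≤ i → i ≤ n → R.P i ω = aOf n (v : Fin n → ℕ) i}
      ≤ 1 := by
    rw [← measure_iUnion (fun v w hvw => R.cyl_disjoint
        (fun h => hvw (Subtype.ext h))) (fun v => R.measurable_cyl n _)]
    exact prob_le_one
  calc μ {ω | R.Good ω ∧ ε ≤ R.lam n ω ∧ R.P n ω + j ≤ R.P (n + 1) ω}
      ≤ μ (⋃ p : S × ℕ, C p) := measure_mono hcover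
    _ ≤ ∑' p : S × ℕ, μ (C p) := measure_iUnion_le _
    _ = ∑' v : S, ∑' i : ℕ, μ (C (v, i)) := by
        exact ENNReal.tsum_prod (f := fun v i => μ (C (v, i)))
    _ ≤ ∑' v : S, ENNReal.ofReal ((1 - ε) ^ (j - 1))
          * μ {ω | ∀ i, 1 ≤ i → i ≤ n → R.P i ω = aOf n (v : Fin n → ℕ) i} :=
        ENNReal.tsum_le_tsum hinner
    _ = ENNReal.ofReal ((1 - ε) ^ (j - 1))
          * ∑' v : S, μ {ω | ∀ i, 1 ≤ i → i ≤ n → R.P i ω = aOf n (v : Fin n → ℕ) i} :=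
        ENNReal.tsum_mul_left
    _ ≤ ENNReal.ofReal ((1 - ε) ^ (j - 1)) * 1 := mul_le_mul_right hdisjsum _
    _ = ENNReal.ofReal ((1 - ε) ^ (j - 1)) := mul_one _

/-- Borel–Cantelli step. -/
lemma bc (R : RenewalCovering μ) [IsProbabilityMeasure μ] (m : ℕ) :
    ∀ᵐ ω ∂μ, ∀ᶠ n in atTop, ω ∉ {ω' | R.Good ω' ∧ epsm m ≤ R.lam (n + 1) ω'
      ∧ R.P (n + 1) ω' + jf m (n + 1) ≤ R.P (n + 1 + 1) ω'} := by
  apply ae_eventually_notMem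
  have hb : ∀ n : ℕ, μ {ω' | R.Good ω' ∧ epsm m ≤ R.lam (n + 1) ω'
      ∧ R.P (n + 1) ω' + jf m (n + 1) ≤ R.P (n + 1 + 1) ω'}
      ≤ ENNReal.ofReal (1 / ((n:ℝ) + 1) ^ 2) := by
    intro n
    refine (R.key_estimate (by omega) (by simp [jf]) (ε := epsm m)).trans ?_
    apply ENNReal.ofReal_le_ofReal
    have := jf_bound m (n + 1) (by omega)
    convert this using 3
    push_cast
    ring
  have hsum : Summable (fun n : ℕ => 1 / ((n:ℝ) + 1) ^ 2) := by
    have h := (summable_nat_add_iff 1).2 ((Real.summable_one_div_nat_pow (p := 2)).2 one_lt_two)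
    refine h.congr (fun n => ?_)
    simp
  have hle : ∑' n, μ {ω' | R.Good ω' ∧ epsm m ≤ R.lam (n + 1) ω'
        ∧ R.P (n + 1) ω' + jf m (n + 1) ≤ R.P (n + 1 + 1) ω'}
      ≤ ENNReal.ofReal (∑' n : ℕ, 1 / ((n:ℝ) + 1) ^ 2) := by
    rw [ENNReal.ofReal_tsum_of_nonneg (fun n => by positivity) hsum]
    exact ENNReal.tsum_le_tsum hb
  exact ne_top_of_le_ne_top ENNReal.ofReal_ne_top hle

set_option maxHeartbeats 1000000 in
/-- The pointwise argument. -/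
lemma tendsto_zero_of_good (R : RenewalCovering μ) (ω : Ω) (hg : R.Good ω)
    (hB : ∀ m : ℕ, ∃ N, ∀ n, N ≤ n →
      ¬(R.Good ω ∧ epsm m ≤ R.lam (n + 1) ω
        ∧ R.P (n + 1) ω + jf m (n + 1) ≤ R.P (n + 1 + 1) ω)) :
    Tendsto (fun n => R.lam n ω) atTop (nhds 0) := by
  -- basic facts
  have hP : ∀ k, 1 ≤ k → 2 ≤ R.P k ω := by
    intro k hk
    induction k with
    | zero => omega
    | succ k ih =>
      by_cases hk0 : k = 0
      · subst hk0; exact le_of_eq hg.2.symm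
      · have h1 : 1 ≤ k := by omega
        have h2 := hg.1 k h1
        have h3 := ih h1
        omega
  have hPreal : ∀ k, (2:ℝ) ≤ (R.P (k + 1) ω : ℝ) := by
    intro k; exact_mod_cast hP (k + 1) (by omega)
  have hfac : ∀ k : ℕ, 0 ≤ 1 - 1 / (R.P (k + 1) ω : ℝ) ∧ 1 - 1 / (R.P (k + 1) ω : ℝ) ≤ 1 := by
    intro k
    have h2 := hPreal k
    have h3 : 0 < (R.P (k+1) ω : ℝ) := by linarith
    have h4 : 1 / (R.P (k+1) ω : ℝ) ≤ 1 / 2 := one_div_le_one_div_of_le (by norm_num) h2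
    have h5 : 0 ≤ 1 / (R.P (k+1) ω : ℝ) := by positivity
    constructor <;> linarith
  have hnn : ∀ n, 0 ≤ R.lam n ω := by
    intro n
    apply Finset.prod_nonneg
    intro k hk
    rw [Finset.mem_Icc] at hk
    obtain ⟨h1, -⟩ := hk
    obtain ⟨k, rfl⟩ : ∃ k', k = k' + 1 := ⟨k - 1, by omega⟩
    exact (hfac k).1
  have hsucc : ∀ n, R.lam (n + 1) ω = R.lam n ω * (1 - 1 / (R.P (n + 1) ω : ℝ)) :=
    fun n => Finset.prod_Icc_succ_top (by omega) _
  have hanti : Antitone (fun n => R.lam n ω) := by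
    apply antitone_nat_of_succ_le
    intro n
    rw [hsucc n]
    nlinarith [hnn n, (hfac n).1, (hfac n).2]
  have hbdd : BddBelow (Set.range fun n => R.lam n ω) := by
    refine ⟨0, ?_⟩
    rintro x ⟨n, rfl⟩
    exact hnn n
  have htend : Tendsto (fun n => R.lam n ω) atTop (nhds (⨅ n, R.lam n ω)) :=
    tendsto_atTop_ciInf hanti hbdd
  set L := ⨅ n, R.lam n ω with hLdef
  suffices hL0 : L = 0 by rwa [hL0] at htend
  have hLnn : 0 ≤ L := le_ciInf fun n => hnn n
  by_contra hL
  have hLpos : 0 < L := lt_of_le_of_ne hLnn (Ne.symm hL)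
  obtain ⟨m, hm⟩ := exists_nat_gt (1 / L)
  have hmL : 1 < (m:ℝ) * L := by
    rw [div_lt_iff₀ hLpos] at hm
    linarith
  have hεL : epsm m ≤ L := by
    rw [epsm, div_le_iff₀ (by positivity)]
    nlinarith
  have hε : ∀ n, epsm m ≤ R.lam n ω := fun n => hεL.trans (ciInf_le hbdd n)
  obtain ⟨N, hN⟩ := hB m
  have hstep : ∀ n, N ≤ n → R.P (n + 1 + 1) ω < R.P (n + 1) ω + jf m (n + 1) := by
    intro n hn
    by_contra h
    push_neg at h
    exact hN n hn ⟨hg, hε _, h⟩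
  have hc : 0 < cm m := cm_pos m
  set D := (R.P (N + 1) ω : ℝ) with hDdef
  have hD : 0 ≤ D := Nat.cast_nonneg _
  have hElb : ∀ n : ℕ, 1 ≤ cm m * Real.log ((n:ℝ) + 1) + 1 := by
    intro n
    have h0 : (0:ℝ) ≤ (n:ℝ) := Nat.cast_nonneg n
    have h1 : 0 ≤ Real.log ((n:ℝ) + 1) := Real.log_nonneg (by linarith)
    nlinarith
  have hstepR : ∀ n, N ≤ n →
      (R.P (n + 1 + 1) ω : ℝ) ≤ (R.P (n + 1) ω : ℝ) + (cm m * Real.log ((n:ℝ) + 1) + 1) := by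
    intro n hn
    have h1 := hstep n hn
    rw [jf] at h1
    have h2 : R.P (n + 1 + 1) ω ≤ R.P (n + 1) ω + ⌈cm m * Real.log ((n + 1 : ℕ) : ℝ)⌉₊ := by
      omega
    have hln : 0 ≤ Real.log (((n + 1 : ℕ)) : ℝ) :=
      Real.log_nonneg (by exact_mod_cast Nat.one_le_iff_ne_zero.2 (by omega))
    have h3 : (⌈cm m * Real.log ((n + 1 : ℕ) : ℝ)⌉₊ : ℝ)
        ≤ cm m * Real.log ((n + 1 : ℕ) : ℝ) + 1 :=
      (Nat.ceil_lt_add_one (mul_nonneg (cm_pos m).le hln)).le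
    have h2' : (R.P (n + 1 + 1) ω : ℝ)
        ≤ (R.P (n + 1) ω : ℝ) + (⌈cm m * Real.log ((n + 1 : ℕ) : ℝ)⌉₊ : ℝ) := by
      exact_mod_cast h2
    have h4 : ((n + 1 : ℕ) : ℝ) = (n:ℝ) + 1 := by push_cast; ring
    rw [h4] at h3 h2'
    linarith
  have hgrow : ∀ n, N ≤ n →
      (R.P (n + 1 + 1) ω : ℝ) ≤ D + ((n:ℝ) + 1) * (cm m * Real.log ((n:ℝ) + 1) + 1) := by
    intro n hn
    induction n, hn using Nat.le_induction with
    | base =>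
      have h1 := hstepR N le_rfl
      have h2 := hElb N
      have h3 : (0:ℝ) ≤ (N:ℝ) := Nat.cast_nonneg N
      rw [← hDdef] at h1
      nlinarith
    | succ n hn ih =>
      have h1 := hstepR (n + 1) (by omega)
      have h2 : Real.log ((n:ℝ) + 1) ≤ Real.log (((n+1:ℕ):ℝ) + 1) := by
        apply Real.log_le_log (by positivity)
        push_cast
        linarith
      have h3 : (0:ℝ) ≤ (n:ℝ) := Nat.cast_nonneg n
      have h5 := hElb (n + 1)
      have hcast : ((n+1:ℕ):ℝ) = (n:ℝ) + 1 := by push_cast; ring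
      rw [hcast] at h1 h2 h5 ⊢
      have hlognn : 0 ≤ Real.log ((n:ℝ) + 1) := Real.log_nonneg (by linarith)
      have hmul : ((n:ℝ) + 1) * (cm m * Real.log ((n:ℝ) + 1) + 1)
          ≤ ((n:ℝ) + 1) * (cm m * Real.log ((n:ℝ) + 1 + 1) + 1) := by
        apply mul_le_mul_of_nonneg_left _ (by linarith)
        nlinarith
      linarith
  -- summability of 1/P
  have hsum : Summable (fun n : ℕ => 1 / (R.P (n + 1) ω : ℝ)) := by
    apply summable_of_sum_range_le (c := 1 / epsm m)
      (fun n => one_div_nonneg.2 (Nat.cast_nonneg _))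
    intro k
    have hterm : ∀ n : ℕ, epsm m * (1 / (R.P (n + 1) ω : ℝ)) ≤ R.lam n ω - R.lam (n + 1) ω := by
      intro n
      rw [hsucc n]
      have h2 := hPreal n
      have heq : R.lam n ω - R.lam n ω * (1 - 1 / (R.P (n + 1) ω : ℝ))
          = R.lam n ω * (1 / (R.P (n + 1) ω : ℝ)) := by ring
      rw [heq]
      exact mul_le_mul_of_nonneg_right (hε n) (by positivity)
    have htel : ∑ n ∈ Finset.range k, (R.lam n ω - R.lam (n + 1) ω)
        = R.lam 0 ω - R.lam k ω := Finset.sum_range_sub' (fun n => R.lam n ω) k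
    have hlam0 : R.lam 0 ω = 1 := by
      rw [RenewalCovering.lam]
      rw [Finset.Icc_eq_empty (by omega)]
      exact Finset.prod_empty
    have hsum_le : epsm m * ∑ n ∈ Finset.range k, 1 / (R.P (n + 1) ω : ℝ) ≤ 1 := by
      rw [Finset.mul_sum]
      calc ∑ n ∈ Finset.range k, epsm m * (1 / (R.P (n + 1) ω : ℝ))
          ≤ ∑ n ∈ Finset.range k, (R.lam n ω - R.lam (n + 1) ω) :=
            Finset.sum_le_sum fun n _ => hterm n
        _ = R.lam 0 ω - R.lam k ω := htel
        _ ≤ 1 := by rw [hlam0]; linarith [hnn k]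
    exact (le_div_iff₀' (epsm_pos m)).2 hsum_le
  -- comparison
  set g : ℕ → ℝ := fun n => 1 / (D + ((n:ℝ) + 1) * (cm m * Real.log ((n:ℝ) + 1) + 1)) with hgdef
  have hgden : ∀ n : ℕ, 0 < D + ((n:ℝ) + 1) * (cm m * Real.log ((n:ℝ) + 1) + 1) := by
    intro n
    have h1 := hElb n
    have h2 : (0:ℝ) ≤ (n:ℝ) := Nat.cast_nonneg n
    nlinarith
  have hgpos : ∀ n, 0 < g n := fun n => one_div_pos.2 (hgden n)
  have hcomp : ∀ i : ℕ, g (i + N) ≤ 1 / (R.P (i + (N + 1) + 1) ω : ℝ) := by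
    intro i
    have h1 := hgrow (i + N) (by omega)
    have h2 : (0:ℝ) < (R.P (i + N + 1 + 1) ω : ℝ) := by
      have := hP (i + N + 1 + 1) (by omega); exact_mod_cast by omega
    have h3 : g (i + N) ≤ 1 / (R.P (i + N + 1 + 1) ω : ℝ) :=
      one_div_le_one_div_of_le h2 h1
    exact h3
  have hsumN : Summable (fun i : ℕ => 1 / (R.P (i + (N + 1) + 1) ω : ℝ)) :=
    (summable_nat_add_iff (N + 1)).2 hsum
  have hsumgN : Summable (fun i : ℕ => g (i + N)) :=
    Summable.of_nonneg_of_le (fun i => (hgpos _).le) hcomp hsumN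
  have hsumg : Summable g := (summable_nat_add_iff N).1 hsumgN
  have haux_le : ∀ n : ℕ, 1 / (((n:ℝ) + 1) * (Real.log ((n:ℝ) + 1) + 1))
      ≤ (D + cm m + 1) * g n := by
    intro n
    have ht : (1:ℝ) ≤ (n:ℝ) + 1 := by have : (0:ℝ) ≤ (n:ℝ) := Nat.cast_nonneg n; linarith
    have hl : 0 ≤ Real.log ((n:ℝ) + 1) := Real.log_nonneg ht
    have h2 : 0 < ((n:ℝ) + 1) * (Real.log ((n:ℝ) + 1) + 1) := by nlinarith
    rw [hgdef]
    rw [mul_one_div, div_le_div_iff₀ h2 (hgden n)]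
    have e1 : D ≤ D * ((n:ℝ) + 1) := by nlinarith
    have e2 : 0 ≤ D * (((n:ℝ) + 1) * Real.log ((n:ℝ) + 1)) :=
      mul_nonneg hD (mul_nonneg (by linarith) hl)
    have e3 : 0 ≤ cm m * ((n:ℝ) + 1) := by nlinarith
    have e4 : 0 ≤ ((n:ℝ) + 1) * Real.log ((n:ℝ) + 1) := mul_nonneg (by linarith) hl
    nlinarith
  have hauxsum : Summable (fun n : ℕ => 1 / (((n:ℝ) + 1) * (Real.log ((n:ℝ) + 1) + 1))) := by
    apply Summable.of_nonneg_of_le ?_ haux_le (hsumg.mul_left _)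
    intro n
    have ht : (1:ℝ) ≤ (n:ℝ) + 1 := by have : (0:ℝ) ≤ (n:ℝ) := Nat.cast_nonneg n; linarith
    have hl : 0 ≤ Real.log ((n:ℝ) + 1) := Real.log_nonneg ht
    have h2 : 0 < ((n:ℝ) + 1) * (Real.log ((n:ℝ) + 1) + 1) := by nlinarith
    positivity
  exact aux_not_summable hauxsum

end RenewalCovering

/-- For the renewal covering of the natural numbers, the sequence
`λ_n = ∏_{k=1}^n (1 − 1/P_k)` converges to 0 almost surely. -/
theorem stmt3 {Ω : Type*} [MeasurableSpace Ω] (μ : Measure Ω) [IsProbabilityMeasure μ]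
    (R : RenewalCovering μ) :
    ∀ᵐ ω ∂μ, Tendsto (fun n => R.lam n ω) atTop (nhds 0) := by
  have hbc : ∀ᵐ ω ∂μ, ∀ m : ℕ, ∀ᶠ n in atTop, ω ∉ {ω' | R.Good ω' ∧ epsm m ≤ R.lam (n + 1) ω'
      ∧ R.P (n + 1) ω' + jf m (n + 1) ≤ R.P (n + 1 + 1) ω'} :=
    (MeasureTheory.ae_all_iff).2 fun m => R.bc m
  filter_upwards [R.incr, R.init, hbc] with ω h1 h2 h3
  apply R.tendsto_zero_of_good ω ⟨h1, h2⟩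
  intro m
  obtain ⟨N, hN⟩ := eventually_atTop.1 (h3 m)
  exact ⟨N, fun n hn => hN n hn⟩
end

section
/- Let (P_n) be the renewal covering of the natural numbers. For every constant C > 0, with probability one there exists n_0 such that P_n > C·n for all n > n_0. -/
open MeasureTheory ProbabilityTheory Filter

open scoped ENNReal

section Aux

-- monotonicity helper
lemma mono_of_incr {P : ℕ → ℕ} (hP : ∀ n, 1 ≤ n → P n < P (n+1)) :
    ∀ k l, 1 ≤ k → k ≤ l → P k ≤ P l := by
  intro k l hk hkl
  induction l with
  | zero => omega
  | succ l ih =>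
    rcases Nat.lt_or_ge k (l+1) with h | h
    · exact le_trans (ih (by omega)) (le_of_lt (hP l (by omega)))
    · have : k = l + 1 := by omega
      simp [this]

lemma ge_two_of_incr {P : ℕ → ℕ} (hP : ∀ n, 1 ≤ n → P n < P (n+1)) (h1 : P 1 = 2) :
    ∀ k, 1 ≤ k → 2 ≤ P k := fun k hk => h1 ▸ mono_of_incr hP 1 k le_rfl hk

-- product bound : ∏ (1-x) * (1 + ∑ x) ≤ 1 for x ∈ [0,1]
lemma prod_sum_le {n : ℕ} {x : ℕ → ℝ} (hx : ∀ k ∈ Finset.Icc 1 n, 0 ≤ x k ∧ x k ≤ 1) :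
    (∏ k ∈ Finset.Icc 1 n, (1 - x k)) * (1 + ∑ k ∈ Finset.Icc 1 n, x k) ≤ 1 := by
  induction n with
  | zero => simp
  | succ n ih =>
    rcases Nat.eq_zero_or_pos n with rfl | hn
    · have := hx 1 (by simp)
      simp [Finset.Icc_self]
      nlinarith [this.1, this.2]
    · have hsub : ∀ k ∈ Finset.Icc 1 n, 0 ≤ x k ∧ x k ≤ 1 := by
        intro k hk; exact hx k (by simp at hk ⊢; omega)
      have hins : Finset.Icc 1 (n+1) = insert (n+1) (Finset.Icc 1 n) := by
        ext k; simp [Finset.mem_Icc]; omega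
      have hnm : (n+1) ∉ Finset.Icc 1 n := by simp
      rw [hins, Finset.prod_insert hnm, Finset.sum_insert hnm]
      have h1 := ih hsub
      have hp : 0 ≤ ∏ k ∈ Finset.Icc 1 n, (1 - x k) :=
        Finset.prod_nonneg (fun k hk => by linarith [(hsub k hk).2])
      have hs : 0 ≤ ∑ k ∈ Finset.Icc 1 n, x k :=
        Finset.sum_nonneg (fun k hk => (hsub k hk).1)
      have hxn := hx (n+1) (by simp)
      nlinarith [hxn.1, hxn.2, mul_nonneg hp hs, mul_nonneg (mul_nonneg hp hxn.1) hs,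
        mul_nonneg (mul_nonneg hp hxn.1) hxn.1]

/-- Deterministic: if the lambda products stay ≥ ε then P grows superlinearly. -/
lemma det_growth (P : ℕ → ℕ) (hP : ∀ n, 1 ≤ n → P n < P (n+1)) (h1 : P 1 = 2)
    (ε : ℝ) (hε : 0 < ε)
    (hlam : ∀ n, 1 ≤ n → ε ≤ ∏ k ∈ Finset.Icc 1 n, (1 - 1/(P k : ℝ)))
    (C : ℝ) (hC : 0 < C) : ∃ n0 : ℕ, ∀ n, n0 < n → C * n < (P n : ℝ) := by
  have h2 := ge_two_of_incr hP h1
  set f : ℕ → ℝ := fun k => if k = 0 then 0 else 1/(P k : ℝ) with hf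
  have hfnn : ∀ k, 0 ≤ f k := by
    intro k; simp only [hf]; split <;> positivity
  -- partial sums bounded
  have hsum : ∀ n, ∑ k ∈ Finset.range n, f k ≤ 1/ε := by
    intro n
    have hr : ∑ k ∈ Finset.range n, f k = ∑ k ∈ Finset.Icc 1 (n-1), 1/(P k : ℝ) := by
      rcases Nat.eq_zero_or_pos n with rfl | hn
      · simp
      · rw [Finset.range_eq_Ico]
        rw [show Finset.Ico 0 n = insert 0 (Finset.Icc 1 (n-1)) by
          ext k; simp [Nat.Ico_zero_eq_range, Finset.mem_Icc]; omega]
        rw [Finset.sum_insert (by simp)]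
        simp only [hf, if_pos rfl, zero_add]
        exact Finset.sum_congr rfl (fun k hk => by
          simp at hk; simp [hf, show k ≠ 0 by omega])
    rw [hr]
    rcases Nat.eq_zero_or_pos (n-1) with h0 | hn1
    · rw [h0]; simp; positivity
    · have hb := prod_sum_le (n := n-1) (x := fun k => 1/(P k : ℝ)) (by
        intro k hk
        simp at hk
        have := h2 k hk.1
        constructor
        · positivity
        · rw [div_le_one (by positivity)]
          exact_mod_cast by omega)
      have hl := hlam (n-1) hn1
      have hs : 0 ≤ ∑ k ∈ Finset.Icc 1 (n-1), 1/(P k : ℝ) :=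
        Finset.sum_nonneg (fun k hk => by positivity)
      have : ε * (1 + ∑ k ∈ Finset.Icc 1 (n-1), 1/(P k : ℝ)) ≤ 1 := by
        calc ε * (1 + ∑ k ∈ Finset.Icc 1 (n-1), 1/(P k : ℝ))
            ≤ (∏ k ∈ Finset.Icc 1 (n-1), (1 - 1/(P k : ℝ))) * (1 + ∑ k ∈ Finset.Icc 1 (n-1), 1/(P k : ℝ)) := by
              apply mul_le_mul_of_nonneg_right hl (by linarith)
          _ ≤ 1 := hb
      rw [le_div_iff₀ hε]
      nlinarith
  have hSummable : Summable f := summable_of_sum_range_le hfnn hsum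
  -- tail small
  have htail : Tendsto (fun m => ∑' k, f (k + m)) atTop (nhds 0) := by
    have := hSummable.hasSum.tendsto_sum_nat
    have heq : ∀ m, ∑' k, f (k + m) = (∑' k, f k) - ∑ k ∈ Finset.range m, f k := by
      intro m
      have := (Summable.sum_add_tsum_nat_add m hSummable)
      linarith
    simp only [heq]
    have : Tendsto (fun m => (∑' k, f k) - ∑ k ∈ Finset.range m, f k) atTop
        (nhds ((∑' k, f k) - (∑' k, f k))) := Tendsto.const_sub _ hSummable.hasSum.tendsto_sum_nat
    simpa using this
  obtain ⟨m, hm⟩ := (htail.eventually (eventually_lt_nhds (show (0:ℝ) < 1/(2*C) by positivity))).exists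
  refine ⟨2*m + 2, fun n hn => ?_⟩
  -- ∑_{k=m+1}^n f k ≥ (n-m)/P n
  have hPn : (0:ℝ) < P n := by
    have := h2 n (by omega); positivity
  have hkey : (n - m : ℝ) * (1/(P n : ℝ)) ≤ ∑' k, f (k + m) := by
    have h1' : ∑ j ∈ Finset.range (n - m), f (j + m + 1) ≤ ∑' k, f (k + (m+1)) := by
      apply Summable.sum_le_tsum
      · intro k _; exact hfnn _
      · exact ((summable_nat_add_iff (m+1)).2 hSummable)
    have h2' : ∑' k, f (k + (m+1)) ≤ ∑' k, f (k + m) := by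
      have hs : Summable (fun k => f (k + m)) := (summable_nat_add_iff m).2 hSummable
      have key := Summable.sum_add_tsum_nat_add (f := fun k => f (k+m)) 1 hs
      have h0 : 0 ≤ ∑ i ∈ Finset.range 1, f (i + m) := Finset.sum_nonneg fun i _ => hfnn _
      have e1 : ∑' k, f (k + (m+1)) = ∑' (i:ℕ), f ((i+1)+m) :=
        tsum_congr (fun k => by congr 1; omega)
      rw [e1]; linarith
    have h3' : (n - m : ℝ) * (1/(P n : ℝ)) ≤ ∑ j ∈ Finset.range (n - m), f (j + m + 1) := by
      have : ∀ j ∈ Finset.range (n - m), (1/(P n : ℝ)) ≤ f (j + m + 1) := by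
        intro j hj
        simp only [hf, if_neg (Nat.succ_ne_zero _)]
        apply one_div_le_one_div_of_le
        · have := h2 (j+m+1) (by omega); positivity
        · exact_mod_cast mono_of_incr hP (j+m+1) n (by omega) (by simp at hj; omega)
      calc (n - m : ℝ) * (1/(P n : ℝ)) = ∑ _j ∈ Finset.range (n-m), (1/(P n : ℝ)) := by
            rw [Finset.sum_const, Finset.card_range]
            rw [nsmul_eq_mul]
            congr 1
            have : m ≤ n := by omega
            push_cast [Nat.cast_sub this]; ring
        _ ≤ _ := Finset.sum_le_sum this
    linarith
  have : (n - m : ℝ) * (1/(P n : ℝ)) < 1/(2*C) := lt_of_le_of_lt hkey hm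
  have hnm : (n:ℝ)/2 ≤ (n - m :ℝ) := by
    have h1'' : (m:ℝ) ≤ (n:ℝ)/2 := by
      have : 2*m ≤ n := by omega
      have : (2*m : ℝ) ≤ n := by exact_mod_cast this
      linarith
    linarith
  have hn0 : (0:ℝ) < n := by exact_mod_cast (show (0:ℕ) < n by omega)
  have heq : (↑n - ↑m) * (1/(P n : ℝ)) = (↑n - ↑m)/(P n : ℝ) := by ring
  rw [heq, div_lt_div_iff₀ hPn (by positivity)] at this
  nlinarith

lemma mono_upto {a : ℕ → ℕ} {T : ℕ} (h : ∀ i, 1 ≤ i → i < T → a i < a (i+1)) :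
    ∀ k l, 1 ≤ k → k ≤ l → l ≤ T → a k ≤ a l := by
  intro k l hk hkl hlT
  induction l with
  | zero => omega
  | succ l ih =>
    rcases Nat.lt_or_ge k (l+1) with hlt | hge
    · exact le_trans (ih (by omega) (by omega)) (le_of_lt (h l (by omega) (by omega)))
    · have : k = l + 1 := by omega
      simp [this]

lemma ge_two_upto {a : ℕ → ℕ} {T : ℕ} (h : ∀ i, 1 ≤ i → i < T → a i < a (i+1))
    (h1 : a 1 = 2) : ∀ k, 1 ≤ k → k ≤ T → 2 ≤ a k :=
  fun k hk hkT => h1 ▸ mono_upto h 1 k le_rfl hk hkT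

section
variable {Ω : Type*} [MeasurableSpace Ω] {μ : Measure Ω}

/-- prefix event -/
def Epre (R : RenewalCovering μ) (a : ℕ → ℕ) (t : ℕ) : Set Ω :=
  {ω | ∀ i, 1 ≤ i → i ≤ t → R.P i ω = a i}

lemma factor_mem {a : ℕ → ℕ} {t : ℕ} (h2 : ∀ k, 1 ≤ k → k ≤ t → 2 ≤ a k) :
    ∀ k ∈ Finset.Icc 1 t, 0 ≤ 1 - 1/(a k : ℝ) ∧ 1 - 1/(a k : ℝ) ≤ 1 := by
  intro k hk
  simp only [Finset.mem_Icc] at hk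
  have h := h2 k hk.1 hk.2
  have hpos : (0:ℝ) < a k := by exact_mod_cast by omega
  constructor
  · have : 1/(a k : ℝ) ≤ 1 := by
      rw [div_le_one hpos]; exact_mod_cast by omega
    linarith
  · have : 0 ≤ 1/(a k:ℝ) := by positivity
    linarith

lemma prod_factor_nonneg {a : ℕ → ℕ} {t : ℕ} (h2 : ∀ k, 1 ≤ k → k ≤ t → 2 ≤ a k) :
    0 ≤ ∏ k ∈ Finset.Icc 1 t, (1 - 1/(a k : ℝ)) :=
  Finset.prod_nonneg (fun k hk => (factor_mem h2 k hk).1)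

lemma prod_factor_le_one {a : ℕ → ℕ} {t : ℕ} (h2 : ∀ k, 1 ≤ k → k ≤ t → 2 ≤ a k) :
    ∏ k ∈ Finset.Icc 1 t, (1 - 1/(a k : ℝ)) ≤ 1 :=
  Finset.prod_le_one (fun k hk => (factor_mem h2 k hk).1) (fun k hk => (factor_mem h2 k hk).2)

lemma prod_anti {a : ℕ → ℕ} {n t : ℕ} (hnt : n ≤ t) (h2 : ∀ k, 1 ≤ k → k ≤ t → 2 ≤ a k) :
    ∏ k ∈ Finset.Icc 1 t, (1 - 1/(a k : ℝ)) ≤ ∏ k ∈ Finset.Icc 1 n, (1 - 1/(a k : ℝ)) := by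
  have hsplit : Finset.Icc 1 t = Finset.Icc 1 n ∪ Finset.Icc (n+1) t := by
    ext k; simp [Finset.mem_Icc]; omega
  have hdisj : Disjoint (Finset.Icc 1 n) (Finset.Icc (n+1) t) := by
    rw [Finset.disjoint_left]; intro k hk hk'; simp [Finset.mem_Icc] at hk hk'; omega
  rw [hsplit, Finset.prod_union hdisj]
  have h2n : ∀ k, 1 ≤ k → k ≤ n → 2 ≤ a k := fun k h h' => h2 k h (by omega)
  apply mul_le_of_le_one_right (prod_factor_nonneg h2n)
  apply Finset.prod_le_one
  · intro k hk; simp only [Finset.mem_Icc] at hk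
    exact (factor_mem h2 k (by simp [Finset.mem_Icc]; omega)).1
  · intro k hk; simp only [Finset.mem_Icc] at hk
    exact (factor_mem h2 k (by simp [Finset.mem_Icc]; omega)).2

lemma step (R : RenewalCovering μ) (t : ℕ) (ht : 1 ≤ t) (a : ℕ → ℕ)
    (hinc : ∀ i, 1 ≤ i → i < t+1 → a i < a (i+1)) (ha1 : a 1 = 2) :
    μ (Epre R a (t+1))
      ≤ ENNReal.ofReal (∏ k ∈ Finset.Icc 1 t, (1 - 1/(a k : ℝ))) * μ (Epre R a t) := by
  have ha2 : ∀ k, 1 ≤ k → k ≤ t → 2 ≤ a k :=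
    fun k hk hk' => ge_two_upto hinc ha1 k hk (by omega)
  set L := ∏ k ∈ Finset.Icc 1 t, (1 - 1/(a k:ℝ)) with hL
  have hL0 : 0 ≤ L := prod_factor_nonneg ha2
  have hL1 : L ≤ 1 := prod_factor_le_one ha2
  have hj : 1 ≤ a (t+1) - a t := by
    have := hinc t ht (by omega); omega
  have hset : {ω | R.P (t+1) ω = a t + (a (t+1) - a t) ∧ ∀ i, 1 ≤ i → i ≤ t → R.P i ω = a i}
      = Epre R a (t+1) := by
    have hat : a t + (a (t+1) - a t) = a (t+1) := by
      have := hinc t ht (by omega); omega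
    ext ω
    constructor
    · rintro ⟨h1, h2⟩ i hi1 hi2
      rcases Nat.lt_or_ge i (t+1) with h | h
      · exact h2 i hi1 (by omega)
      · have : i = t + 1 := by omega
        rw [this, ← hat]; exact h1
    · intro h
      refine ⟨?_, fun i hi1 hi2 => h i hi1 (by omega)⟩
      rw [hat]; exact h (t+1) (by omega) le_rfl
  have hcond := R.cond t ht a (fun i h1 h2 => hinc i h1 (by omega)) ha1
    (a (t+1) - a t) hj
  have : μ (Epre R a (t+1))
      = ENNReal.ofReal ((1 - L) ^ (a (t+1) - a t - 1) * L) * μ (Epre R a t) := by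
    rw [← hset]; exact hcond
  rw [this]
  apply mul_le_mul_left
  apply ENNReal.ofReal_le_ofReal
  have hpow : (1 - L) ^ (a (t+1) - a t - 1) ≤ 1 :=
    pow_le_one₀ (by linarith) (by linarith)
  nlinarith

lemma iter (R : RenewalCovering μ) (n : ℕ) (hn : 1 ≤ n) (r : ℕ) (a : ℕ → ℕ)
    (hinc : ∀ i, 1 ≤ i → i < n + r → a i < a (i+1)) (ha1 : a 1 = 2)
    (ε : ℝ) (hε : ∏ k ∈ Finset.Icc 1 n, (1 - 1/(a k : ℝ)) ≤ ε) :
    μ (Epre R a (n + r)) ≤ ENNReal.ofReal ε ^ r * μ (Epre R a n) := by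
  induction r with
  | zero => simp
  | succ r ih =>
    have hstep := step R (n + r) (by omega) a
      (fun i h1 h2 => hinc i h1 (by omega)) ha1
    have ha2 : ∀ k, 1 ≤ k → k ≤ n + r → 2 ≤ a k :=
      fun k hk hk' => ge_two_upto hinc ha1 k hk (by omega)
    have hle : ∏ k ∈ Finset.Icc 1 (n+r), (1 - 1/(a k : ℝ)) ≤ ε :=
      le_trans (prod_anti (by omega) ha2) hε
    calc μ (Epre R a (n + (r+1))) = μ (Epre R a ((n + r) + 1)) := by ring_nf
      _ ≤ ENNReal.ofReal (∏ k ∈ Finset.Icc 1 (n+r), (1 - 1/(a k : ℝ))) * μ (Epre R a (n+r)) := hstep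
      _ ≤ ENNReal.ofReal ε * (ENNReal.ofReal ε ^ r * μ (Epre R a n)) := by
          exact mul_le_mul' (ENNReal.ofReal_le_ofReal hle) (ih (fun i h1 h2 => hinc i h1 (by omega)))
      _ = ENNReal.ofReal ε ^ (r+1) * μ (Epre R a n) := by ring

end

section core
variable {Ω : Type*} [MeasurableSpace Ω] {μ : Measure Ω}

def good (R : RenewalCovering μ) : Set Ω :=
  {ω | (∀ n, 1 ≤ n → R.P n ω < R.P (n+1) ω) ∧ R.P 1 ω = 2}

lemma mono_of_incr' {P : ℕ → ℕ} (hP : ∀ n, 1 ≤ n → P n < P (n+1)) :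
    ∀ k l, 1 ≤ k → k ≤ l → P k ≤ P l := by
  intro k l hk hkl
  induction l with
  | zero => omega
  | succ l ih =>
    rcases Nat.lt_or_ge k (l+1) with h | h
    · exact le_trans (ih (by omega)) (le_of_lt (hP l (by omega)))
    · have : k = l + 1 := by omega
      simp [this]

lemma strict_mono_upto {P : ℕ → ℕ} (hP : ∀ n, 1 ≤ n → P n < P (n+1)) :
    ∀ k l, 1 ≤ k → k < l → P k < P l := by
  intro k l hk hkl
  calc P k < P (k+1) := hP k hk
    _ ≤ P l := mono_of_incr' hP (k+1) l (by omega) (by omega)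

noncomputable def pathBS (n : ℕ) (b : ℕ → ℕ) (s : Finset ℕ) (i : ℕ) : ℕ :=
  if i ≤ n then b i
  else if h : s.card = n ∧ n < i ∧ i ≤ 2*n then s.orderEmbOfFin h.1 ⟨i - n - 1, by omega⟩
  else 0

open Classical in
noncomputable def PreF (n B : ℕ) : Finset (ℕ → ℕ) :=
  ((Finset.Icc 1 n).pi (fun _ => Finset.range (B+1))).image
    (fun f i => if h : i ∈ Finset.Icc 1 n then f i h else 0)

lemma memPreF {n B : ℕ} (c : ℕ → ℕ) (hc : ∀ i, 1 ≤ i → i ≤ n → c i ≤ B) :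
    (fun i => if i ∈ Finset.Icc 1 n then c i else 0) ∈ PreF n B := by
  classical
  rw [PreF, Finset.mem_image]
  refine ⟨fun i _ => c i, ?_, ?_⟩
  · rw [Finset.mem_pi]
    intro i hi
    simp only [Finset.mem_Icc] at hi
    simp only [Finset.mem_range]
    have := hc i hi.1 hi.2; omega
  · funext i
    by_cases h : i ∈ Finset.Icc 1 n <;> simp [h]

lemma PreF_zero {n B : ℕ} {b : ℕ → ℕ} (hb : b ∈ PreF n B) :
    ∀ i, i ∉ Finset.Icc 1 n → b i = 0 := by
  classical
  rw [PreF, Finset.mem_image] at hb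
  obtain ⟨f, _, rfl⟩ := hb
  intro i hi; simp [hi]

lemma Epre_meas (R : RenewalCovering μ) (a : ℕ → ℕ) (t : ℕ) :
    MeasurableSet (Epre R a t) := by
  have : Epre R a t = ⋂ (i : ℕ) (_ : 1 ≤ i ∧ i ≤ t), (R.P i)⁻¹' {a i} := by
    ext ω
    simp only [Epre, Set.mem_setOf_eq, Set.mem_iInter, Set.mem_preimage, Set.mem_singleton_iff]
    exact ⟨fun h i hi => h i hi.1 hi.2, fun h i h1 h2 => h i ⟨h1, h2⟩⟩
  rw [this]
  exact MeasurableSet.iInter fun i => MeasurableSet.iInter fun _ =>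
    (R.meas i) (measurableSet_singleton _)

lemma core (R : RenewalCovering μ) [IsProbabilityMeasure μ] (M n : ℕ) (hn : 1 ≤ n)
    (ε : ℝ) (hε0 : 0 ≤ ε) :
    μ (good R ∩ {ω | R.lam n ω ≤ ε} ∩ {ω | R.P (2*n) ω ≤ 2*M*n})
      ≤ 2^(2*M*n+1) * ENNReal.ofReal ε ^ n := by
  set B := 2*M*n with hB
  set T := good R ∩ {ω | R.lam n ω ≤ ε} ∩ {ω | R.P (2*n) ω ≤ B} with hT
  set Subs := (Finset.range (B+1)).powerset with hSubs
  -- cover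
  have cover : T ⊆ ⋃ b ∈ PreF n B, ⋃ s ∈ Subs, (T ∩ Epre R (pathBS n b s) (2*n)) := by
    intro ω hω
    obtain ⟨⟨hg, hlam⟩, hbd⟩ := hω
    obtain ⟨hginc, hg1⟩ := hg
    have hmono := mono_of_incr' hginc
    have hval_le : ∀ i, 1 ≤ i → i ≤ 2*n → R.P i ω ≤ B :=
      fun i h1 h2 => le_trans (hmono i (2*n) h1 h2) hbd
    set c : ℕ → ℕ := fun i => if i ∈ Finset.Icc 1 n then R.P i ω else 0 with hc
    set s : Finset ℕ := (Finset.Icc (n+1) (2*n)).image (fun i => R.P i ω) with hs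
    have hcmem : c ∈ PreF n B := memPreF _ (fun i h1 h2 => hval_le i h1 (by omega))
    have hsmem : s ∈ Subs := by
      rw [hSubs, Finset.mem_powerset]
      intro x hx
      rw [hs, Finset.mem_image] at hx
      obtain ⟨i, hi, rfl⟩ := hx
      simp only [Finset.mem_Icc] at hi
      simp only [Finset.mem_range]
      have := hval_le i (by omega) hi.2; omega
    have hinj : Set.InjOn (fun i => R.P i ω) (Finset.Icc (n+1) (2*n)) := by
      intro x hx y hy hxy
      simp only [Finset.coe_Icc, Set.mem_Icc] at hx hy
      by_contra hne
      rcases Nat.lt_or_ge x y with h | h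
      · exact absurd hxy (Nat.ne_of_lt (strict_mono_upto hginc x y (by omega) h))
      · have : y < x := by omega
        exact absurd hxy.symm (Nat.ne_of_lt (strict_mono_upto hginc y x (by omega) this))
    have hcard : s.card = n := by
      rw [hs, Finset.card_image_of_injOn hinj, Nat.card_Icc]
      omega
    have hfeq : (fun x : Fin n => R.P (n+1+(x:ℕ)) ω) = s.orderEmbOfFin hcard := by
      apply Finset.orderEmbOfFin_unique
      · intro x
        rw [hs, Finset.mem_image]
        exact ⟨n+1+(x:ℕ), by simp [Finset.mem_Icc]; omega, rfl⟩
      · intro x y hxy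
        exact strict_mono_upto hginc (n+1+(x:ℕ)) (n+1+(y:ℕ)) (by omega)
          (by simp only [Fin.lt_def] at hxy; omega)
    rw [Set.mem_iUnion₂]
    refine ⟨c, hcmem, ?_⟩
    rw [Set.mem_iUnion₂]
    refine ⟨s, hsmem, ⟨⟨⟨⟨hginc, hg1⟩, hlam⟩, hbd⟩, ?_⟩⟩
    intro i h1 h2
    rcases le_or_gt i n with h | h
    · simp only [pathBS, if_pos h, hc, if_pos (by simp [Finset.mem_Icc]; omega : i ∈ Finset.Icc 1 n)]
    · have hcond : s.card = n ∧ n < i ∧ i ≤ 2*n := ⟨hcard, h, h2⟩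
      simp only [pathBS, if_neg (by omega : ¬ i ≤ n), dif_pos hcond]
      have : s.orderEmbOfFin hcond.1 ⟨i - n - 1, by omega⟩
          = (fun x : Fin n => R.P (n+1+(x:ℕ)) ω) ⟨i - n - 1, by omega⟩ := by
        rw [hfeq]
      rw [this]
      simp only
      congr 1
      omega
  -- per-pair bound
  have pair_bound : ∀ b ∈ PreF n B, ∀ s ∈ Subs,
      μ (T ∩ Epre R (pathBS n b s) (2*n)) ≤ ENNReal.ofReal ε ^ n * μ (Epre R b n) := by
    intro b hb s hs
    rcases Set.eq_empty_or_nonempty (T ∩ Epre R (pathBS n b s) (2*n)) with he | ⟨ω, hω⟩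
    · rw [he]; simp
    · obtain ⟨⟨⟨⟨hginc, hg1⟩, hlam⟩, _⟩, hωE⟩ := hω
      set a := pathBS n b s with ha
      have hval : ∀ i, 1 ≤ i → i ≤ 2*n → a i = R.P i ω := fun i h1 h2 => (hωE i h1 h2).symm
      have hainc : ∀ i, 1 ≤ i → i < 2*n → a i < a (i+1) := by
        intro i h1 h2
        rw [hval i h1 (by omega), hval (i+1) (by omega) (by omega)]
        exact hginc i h1
      have ha1 : a 1 = 2 := by rw [hval 1 le_rfl (by omega)]; exact hg1
      have hprod : ∏ k ∈ Finset.Icc 1 n, (1 - 1/(a k : ℝ)) ≤ ε := by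
        have : ∏ k ∈ Finset.Icc 1 n, (1 - 1/(a k : ℝ)) = R.lam n ω := by
          apply Finset.prod_congr rfl
          intro k hk
          simp only [Finset.mem_Icc] at hk
          rw [hval k hk.1 (by omega)]
        rw [this]; exact hlam
      have h2n : 2*n = n + n := by omega
      have hEb : Epre R a n = Epre R b n := by
        ext ω'
        simp only [Epre, Set.mem_setOf_eq]
        constructor <;> intro h i h1 h2 <;>
        · have := h i h1 h2
          simpa [ha, pathBS, if_pos h2] using this
      calc μ (T ∩ Epre R a (2*n)) ≤ μ (Epre R a (2*n)) := measure_mono Set.inter_subset_right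
        _ = μ (Epre R a (n+n)) := by rw [h2n]
        _ ≤ ENNReal.ofReal ε ^ n * μ (Epre R a n) :=
            iter R n hn n a (by rw [← h2n]; exact hainc) ha1 ε hprod
        _ = ENNReal.ofReal ε ^ n * μ (Epre R b n) := by rw [hEb]
  -- disjointness of prefix events
  have hdisj : Set.PairwiseDisjoint ↑(PreF n B) (fun b => Epre R b n) := by
    intro b hb b' hb' hne
    rw [Function.onFun, Set.disjoint_left]
    intro ω hω hω'
    apply hne
    funext i
    by_cases hi : i ∈ Finset.Icc 1 n
    · simp only [Finset.mem_Icc] at hi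
      rw [← hω i hi.1 hi.2, ← hω' i hi.1 hi.2]
    · rw [PreF_zero hb i hi, PreF_zero hb' i hi]
  have hsum1 : ∑ b ∈ PreF n B, μ (Epre R b n) ≤ 1 := by
    rw [← measure_biUnion_finset hdisj (fun b _ => Epre_meas R b n)]
    exact prob_le_one
  -- put together
  calc μ T ≤ μ (⋃ b ∈ PreF n B, ⋃ s ∈ Subs, (T ∩ Epre R (pathBS n b s) (2*n))) :=
        measure_mono cover
    _ ≤ ∑ b ∈ PreF n B, μ (⋃ s ∈ Subs, (T ∩ Epre R (pathBS n b s) (2*n))) :=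
        measure_biUnion_finset_le _ _
    _ ≤ ∑ b ∈ PreF n B, ∑ s ∈ Subs, μ (T ∩ Epre R (pathBS n b s) (2*n)) :=
        Finset.sum_le_sum (fun b _ => measure_biUnion_finset_le _ _)
    _ ≤ ∑ b ∈ PreF n B, ∑ _s ∈ Subs, ENNReal.ofReal ε ^ n * μ (Epre R b n) :=
        Finset.sum_le_sum (fun b hb => Finset.sum_le_sum (fun s hs => pair_bound b hb s hs))
    _ = ∑ b ∈ PreF n B, (2^(B+1) : ℝ≥0∞) * (ENNReal.ofReal ε ^ n * μ (Epre R b n)) := by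
        apply Finset.sum_congr rfl
        intro b _
        rw [Finset.sum_const, hSubs, Finset.card_powerset, Finset.card_range, nsmul_eq_mul]
        push_cast
        ring
    _ = (2^(B+1) : ℝ≥0∞) * ENNReal.ofReal ε ^ n * ∑ b ∈ PreF n B, μ (Epre R b n) := by
        rw [Finset.mul_sum]
        apply Finset.sum_congr rfl
        intro b _; ring
    _ ≤ (2^(B+1) : ℝ≥0∞) * ENNReal.ofReal ε ^ n * 1 := by
        exact mul_le_mul_right hsum1 _
    _ = 2^(B+1) * ENNReal.ofReal ε ^ n := by rw [mul_one]

end core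

/-- For the renewal covering, for every `C > 0`, almost surely there exists `n₀`
such that `P_n > C·n` for all `n > n₀`. -/
theorem stmt4 {Ω : Type*} [MeasurableSpace Ω] (μ : Measure Ω) [IsProbabilityMeasure μ]
    (R : RenewalCovering μ) :
    ∀ C : ℝ, 0 < C → ∀ᵐ ω ∂μ, ∃ n0 : ℕ, ∀ n, n0 < n → C * n < (R.P n ω : ℝ) := by
  intro C hC
  classical
  set M : ℕ := ⌈C⌉₊ + 1 with hM
  have hMC : C + 1 ≤ (M : ℝ) := by
    have := Nat.le_ceil C
    rw [hM]; push_cast; linarith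
  set ε : ℝ := (1/2)^(2*M+2) with hε
  have hε0 : 0 < ε := by rw [hε]; positivity
  set S : ℕ → Set Ω := fun n =>
    good R ∩ {ω | R.lam (n+1) ω ≤ ε} ∩ {ω | R.P (2*(n+1)) ω ≤ 2*M*(n+1)} with hS
  have hbound : ∀ n : ℕ, μ (S n) ≤ (2⁻¹ : ℝ≥0∞)^n := by
    intro n
    have h1 := core R M (n+1) (by omega) ε hε0.le
    refine le_trans h1 ?_
    have key : ∀ m : ℕ, 1 ≤ m →
        (2:ℝ≥0∞)^(2*M*m+1) * (ENNReal.ofReal ((1/2:ℝ)^(2*M+2)))^m ≤ (2⁻¹:ℝ≥0∞)^(m-1) := by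
      intro m hm
      have hof : ENNReal.ofReal ((1/2:ℝ)^(2*M+2)) = (2⁻¹:ℝ≥0∞)^(2*M+2) := by
        rw [ENNReal.ofReal_pow (by norm_num)]
        congr 1
        rw [one_div, ENNReal.ofReal_inv_of_pos (by norm_num)]
        norm_num
      rw [hof, ← pow_mul]
      have hcancel : (2:ℝ≥0∞)^(2*M*m) * (2⁻¹:ℝ≥0∞)^(2*M*m) = 1 := by
        rw [← mul_pow, ENNReal.mul_inv_cancel (by norm_num) (by norm_num), one_pow]
      have hsplit : (2*M+2)*m = 2*M*m + 2*m := by ring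
      rw [hsplit, pow_add, pow_add]
      calc (2:ℝ≥0∞)^(2*M*m) * 2^1 * ((2⁻¹:ℝ≥0∞)^(2*M*m) * (2⁻¹)^(2*m))
          = ((2:ℝ≥0∞)^(2*M*m) * (2⁻¹)^(2*M*m)) * (2 * (2⁻¹)^(2*m)) := by ring
        _ = 2 * (2⁻¹:ℝ≥0∞)^(2*m) := by rw [hcancel, one_mul]
        _ ≤ 2 * (2⁻¹:ℝ≥0∞)^(m+1) := by
            apply mul_le_mul_right
            apply pow_le_pow_right_of_le_one' (by simp [ENNReal.inv_le_one]) (by omega)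
        _ = (2 * 2⁻¹) * (2⁻¹:ℝ≥0∞)^m := by rw [pow_succ]; ring
        _ = (2⁻¹:ℝ≥0∞)^m := by
            rw [ENNReal.mul_inv_cancel (by norm_num) (by norm_num), one_mul]
        _ ≤ (2⁻¹:ℝ≥0∞)^(m-1) :=
            pow_le_pow_right_of_le_one' (by simp [ENNReal.inv_le_one]) (by omega)
    have := key (n+1) (by omega)
    simpa [hε] using this
  have hsum : ∑' n, μ (S n) ≠ ⊤ := by
    refine ne_top_of_le_ne_top ?_ (ENNReal.tsum_le_tsum hbound)
    rw [ENNReal.tsum_geometric]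
    exact ENNReal.inv_ne_top.2 (by simp [tsub_eq_zero_iff_le])
  have hBC : μ (limsup S atTop) = 0 := measure_limsup_atTop_eq_zero hsum
  have hae1 : ∀ᵐ ω ∂μ, ω ∉ limsup S atTop := by
    rw [ae_iff]
    simpa [not_not] using hBC
  filter_upwards [R.incr, R.init, hae1] with ω hinc hinit hnot
  obtain ⟨N, hN⟩ : ∃ N, ∀ i, N ≤ i → ω ∉ S i := by
    rw [limsup_eq_iInf_iSup_of_nat] at hnot
    simp only [Set.iInf_eq_iInter, Set.iSup_eq_iUnion, Set.mem_iInter, Set.mem_iUnion,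
      not_forall, not_exists] at hnot
    obtain ⟨N, hN⟩ := hnot
    exact ⟨N, fun i hi => hN i hi⟩
  by_cases hcase : ∀ m, 1 ≤ m → ε < R.lam m ω
  · exact det_growth (fun k => R.P k ω) hinc hinit ε hε0
      (fun m hm => (hcase m hm).le) C hC
  · push_neg at hcase
    obtain ⟨m0, hm01, hm0le⟩ := hcase
    have h2P : ∀ k, 1 ≤ k → 2 ≤ R.P k ω := fun k hk => by
      have := mono_of_incr' hinc 1 k le_rfl hk
      omega
    have hanti : ∀ m m', 1 ≤ m → m ≤ m' → R.lam m' ω ≤ R.lam m ω := by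
      intro m m' h1 h12
      exact prod_anti h12 (fun k hk _ => h2P k hk)
    have key : ∀ m, max N m0 + 1 ≤ m → 2*M*m < R.P (2*m) ω := by
      intro m hm
      have hnm : ω ∉ S (m-1) := hN (m-1) (by omega)
      by_contra hle
      apply hnm
      have hm1 : (m-1)+1 = m := by omega
      refine ⟨⟨⟨hinc, hinit⟩, ?_⟩, ?_⟩
      · show R.lam ((m-1)+1) ω ≤ ε
        rw [hm1]
        exact le_trans (hanti m0 m hm01 (by omega)) hm0le
      · show R.P (2*((m-1)+1)) ω ≤ 2*M*((m-1)+1)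
        rw [hm1]; omega
    refine ⟨2*(max N m0 + M + 2) + 1, fun n hn => ?_⟩
    rcases Nat.even_or_odd n with ⟨m, hm⟩ | ⟨m, hm⟩
    · have hmeq : n = 2*m := by omega
      have hkey : 2*M*m < R.P n ω := by rw [hmeq]; exact key m (by omega)
      have hm1 : (1:ℝ) ≤ m := by exact_mod_cast (show 1 ≤ m by omega)
      have hc1 : ((2*M*m : ℕ) : ℝ) < (R.P n ω : ℝ) := by exact_mod_cast hkey
      have hc2 : (n:ℝ) = 2*m := by exact_mod_cast hmeq
      push_cast at hc1
      rw [hc2]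
      nlinarith [Nat.le_ceil C]
    · have hkey : 2*M*m < R.P (2*m) ω := key m (by omega)
      have hstep : R.P (2*m) ω < R.P (2*m+1) ω := hinc (2*m) (by omega)
      have hPn : 2*M*m + 2 ≤ R.P n ω := by rw [hm]; omega
      have hc1 : ((2*M*m + 2 : ℕ) : ℝ) ≤ (R.P n ω : ℝ) := by exact_mod_cast hPn
      have hc2 : (n:ℝ) = 2*m + 1 := by rw [hm]; push_cast; ring
      have hmM : (⌈C⌉₊:ℝ) + 1 ≤ m := by
        have h' : ⌈C⌉₊ + 1 ≤ m := by rw [hM] at hn; omega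
        exact_mod_cast h'
      have hm1 : (1:ℝ) ≤ m := by exact_mod_cast (show 1 ≤ m by omega)
      push_cast at hc1
      rw [hc2]
      nlinarith [Nat.le_ceil C]
end Aux
end

section
/- Let (P_n) be the renewal covering of the natural numbers and λ(x) = λ_{⌈x⌉} where λ_n = ∏_{k=1}^n (1 − 1/P_k). Then with probability one, λ is slowly varying at infinity: for every t > 0, λ(xt)/λ(x) → 1 as x → ∞. -/
open MeasureTheory ProbabilityTheory Filter
open scoped ENNReal NNReal

/-! ### Auxiliary deterministic development -/

/-- The trajectory determined by a sequence of "increments minus one" `b`: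
`traj b 1 = 2`, `traj b (i+2) = traj b (i+1) + b i + 1`. -/
def RCtraj (b : ℕ → ℕ) : ℕ → ℕ
  | 0 => 0
  | 1 => 2
  | (n+2) => RCtraj b (n+1) + (b n + 1)

/-- The parameter sequence along a trajectory. -/
noncomputable def RClam (b : ℕ → ℕ) (n : ℕ) : ℝ :=
  ∏ k ∈ Finset.Icc 1 n, (1 - 1 / (RCtraj b k : ℝ))

/-- Extension of a finite tuple by zeros. -/
def RCext {n : ℕ} (b : Fin n → ℕ) : ℕ → ℕ := fun k => if h : k < n then b ⟨k, h⟩ else 0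

lemma RCtraj_lt_succ (b : ℕ → ℕ) (i : ℕ) (hi : 1 ≤ i) : RCtraj b i < RCtraj b (i + 1) := by
  obtain ⟨k, rfl⟩ := Nat.exists_eq_add_of_le hi
  rw [Nat.add_comm 1 k]
  show RCtraj b (k + 1) < RCtraj b (k + 2)
  show RCtraj b (k + 1) < RCtraj b (k+1) + (b k + 1)
  omega

lemma RCtraj_mono (b : ℕ → ℕ) {i j : ℕ} (hi : 1 ≤ i) (hij : i ≤ j) :
    RCtraj b i ≤ RCtraj b j := by
  induction j with
  | zero => omega
  | succ m ih =>
    rcases Nat.lt_or_ge i (m+1) with h | h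
    · exact (ih (by omega)).trans (RCtraj_lt_succ b m (by omega)).le
    · have : i = m + 1 := by omega
      subst this; rfl

lemma RCtraj_ge (b : ℕ → ℕ) (i : ℕ) (hi : 1 ≤ i) : i + 1 ≤ RCtraj b i := by
  induction i with
  | zero => omega
  | succ m ih =>
    rcases Nat.eq_or_lt_of_le hi with h | h
    · simp [RCtraj, ← h]
    · have h1 : 1 ≤ m := by omega
      have := RCtraj_lt_succ b m h1
      have := ih h1
      omega

lemma RCtraj_congr {b b' : ℕ → ℕ} (i : ℕ) (h : ∀ k, k + 2 ≤ i → b k = b' k) :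
    RCtraj b i = RCtraj b' i := by
  induction i with
  | zero => rfl
  | succ m ih =>
    match m with
    | 0 => rfl
    | Nat.succ l =>
      show RCtraj b (l+1) + (b l + 1) = RCtraj b' (l+1) + (b' l + 1)
      rw [ih (fun k hk => h k (by omega)), h l (by omega)]

lemma RClam_congr {b b' : ℕ → ℕ} (n : ℕ) (h : ∀ k, k + 2 ≤ n → b k = b' k) :
    RClam b n = RClam b' n := by
  unfold RClam
  apply Finset.prod_congr rfl
  intro k hk
  simp only [Finset.mem_Icc] at hk
  rw [RCtraj_congr k (fun l hl => h l (by omega))]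

lemma RCfactor_mem (b : ℕ → ℕ) (k : ℕ) (hk : 1 ≤ k) :
    (1:ℝ)/2 ≤ 1 - 1 / (RCtraj b k : ℝ) ∧ 1 - 1 / (RCtraj b k : ℝ) < 1 := by
  have h2 : (2:ℕ) ≤ RCtraj b k := by have := RCtraj_ge b k hk; omega
  have hpos : (0:ℝ) < (RCtraj b k : ℝ) := by exact_mod_cast Nat.lt_of_lt_of_le (by norm_num) h2
  constructor
  · have : 1 / (RCtraj b k : ℝ) ≤ 1/2 := by
      apply div_le_div_of_nonneg_left (by norm_num) (by norm_num)
      exact_mod_cast h2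
    linarith
  · have : 0 < 1 / (RCtraj b k : ℝ) := by positivity
    linarith

lemma RClam_pos (b : ℕ → ℕ) (n : ℕ) : 0 < RClam b n := by
  apply Finset.prod_pos
  intro k hk
  simp only [Finset.mem_Icc] at hk
  have := RCfactor_mem b k hk.1
  linarith [this.1]

lemma RClam_le_one (b : ℕ → ℕ) (n : ℕ) : RClam b n ≤ 1 := by
  apply Finset.prod_le_one
  · intro k hk
    simp only [Finset.mem_Icc] at hk
    linarith [(RCfactor_mem b k hk.1).1]
  · intro k hk
    simp only [Finset.mem_Icc] at hk
    linarith [(RCfactor_mem b k hk.1).2]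


lemma RChalf : (1:ℝ≥0∞) + 1/2 = 3/2 := by
  rw [show (3:ℝ≥0∞) = 2 + 1 by norm_num, ← ENNReal.div_add_div_same,
    ENNReal.div_self two_ne_zero ENNReal.ofNat_ne_top]

lemma RCofHalf : ENNReal.ofReal (1/2 : ℝ) = (1/2 : ℝ≥0∞) := by
  rw [ENNReal.ofReal_div_of_pos (by norm_num), ENNReal.ofReal_one, ENNReal.ofReal_ofNat]

lemma RCstep (K : ℕ) (hK : 1 ≤ K) {l : ℝ} (h0 : 0 < l) (h1 : l ≤ 1) :
    ∑' c : ℕ, (if c + 1 ≤ K ∧ l ≤ (8 * (K:ℝ))⁻¹ then (4:ℝ≥0∞) else 1)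
        * ENNReal.ofReal ((1 - l) ^ c * l) ≤ 3/2 := by
  have hr0 : (0:ℝ) ≤ 1 - l := by linarith
  have hr1 : 1 - l < 1 := by linarith
  set g : ℕ → ℝ≥0∞ := fun c => ENNReal.ofReal ((1 - l) ^ c * l) with hg
  have hsummable : Summable (fun c : ℕ => (1 - l) ^ c * l) :=
    (summable_geometric_of_lt_one hr0 hr1).mul_right l
  have hgsum : ∑' c, g c = 1 := by
    rw [hg, ← ENNReal.ofReal_tsum_of_nonneg (fun c => by positivity) hsummable]
    rw [tsum_mul_right, tsum_geometric_of_lt_one hr0 hr1]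
    rw [show (1 - (1-l)) = l by ring, inv_mul_cancel₀ (ne_of_gt h0)]
    exact ENNReal.ofReal_one
  have hsplit : ∀ c : ℕ,
      (if c + 1 ≤ K ∧ l ≤ (8 * (K:ℝ))⁻¹ then (4:ℝ≥0∞) else 1) * g c
        = g c + (if c + 1 ≤ K ∧ l ≤ (8 * (K:ℝ))⁻¹ then (3:ℝ≥0∞) else 0) * g c := by
    intro c
    split_ifs <;> ring
  calc ∑' c : ℕ, (if c + 1 ≤ K ∧ l ≤ (8 * (K:ℝ))⁻¹ then (4:ℝ≥0∞) else 1) * g c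
      = ∑' c, (g c + (if c + 1 ≤ K ∧ l ≤ (8 * (K:ℝ))⁻¹ then (3:ℝ≥0∞) else 0) * g c) := by
        exact tsum_congr hsplit
    _ = 1 + ∑' c, (if c + 1 ≤ K ∧ l ≤ (8 * (K:ℝ))⁻¹ then (3:ℝ≥0∞) else 0) * g c := by
        rw [ENNReal.tsum_add, hgsum]
    _ ≤ 1 + 1/2 := by
        gcongr
        by_cases hl : l ≤ (8 * (K:ℝ))⁻¹
        · have hle : ∀ c : ℕ,
              (if c + 1 ≤ K ∧ l ≤ (8 * (K:ℝ))⁻¹ then (3:ℝ≥0∞) else 0) * g c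
                ≤ (if c < K then ENNReal.ofReal (3 * l) else 0) := by
            intro c
            by_cases hc : c + 1 ≤ K
            · rw [if_pos ⟨hc, hl⟩, if_pos (Nat.lt_of_succ_le hc)]
              calc (3:ℝ≥0∞) * g c
                  ≤ (3:ℝ≥0∞) * ENNReal.ofReal l := by
                    refine mul_le_mul_right (ENNReal.ofReal_le_ofReal ?_) 3
                    calc (1-l)^c * l ≤ 1 * l :=
                        mul_le_mul_of_nonneg_right (pow_le_one₀ hr0 (by linarith)) h0.le
                      _ = l := one_mul l
                _ = ENNReal.ofReal (3 * l) := by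
                    rw [ENNReal.ofReal_mul (by norm_num), ENNReal.ofReal_ofNat]
            · rw [if_neg (fun hh => hc hh.1), if_neg (show ¬ c < K by omega), zero_mul]
          refine le_trans (ENNReal.tsum_le_tsum hle) ?_
          rw [tsum_eq_sum (s := Finset.range K)
            (by intro c hc; rw [if_neg (by simpa using hc)])]
          have hcongr : ∀ c ∈ Finset.range K,
              (if c < K then ENNReal.ofReal (3 * l) else 0) = ENNReal.ofReal (3*l) := by
            intro c hc; rw [if_pos (Finset.mem_range.mp hc)]
          rw [Finset.sum_congr rfl hcongr, Finset.sum_const, Finset.card_range, nsmul_eq_mul]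
          have hK0 : (0:ℝ) < (K:ℝ) := by exact_mod_cast hK
          calc (K:ℝ≥0∞) * ENNReal.ofReal (3 * l)
              = ENNReal.ofReal ((K:ℝ) * (3 * l)) := by
                rw [ENNReal.ofReal_mul (le_of_lt hK0), ENNReal.ofReal_natCast]
            _ ≤ ENNReal.ofReal (1/2) := by
                apply ENNReal.ofReal_le_ofReal
                have h2 : (K:ℝ) * (3 * l) ≤ (K:ℝ) * (3 * (8*(K:ℝ))⁻¹) := by gcongr
                have h3 : (K:ℝ) * (3 * (8*(K:ℝ))⁻¹) = 3/8 := by field_simp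
                linarith
            _ = 1/2 := RCofHalf
        · have hz : ∀ c : ℕ,
              (if c + 1 ≤ K ∧ l ≤ (8 * (K:ℝ))⁻¹ then (3:ℝ≥0∞) else 0) * g c = 0 := by
            intro c; rw [if_neg (fun hh => hl hh.2), zero_mul]
          rw [show (∑' c, (if c + 1 ≤ K ∧ l ≤ (8 * (K:ℝ))⁻¹ then (3:ℝ≥0∞) else 0) * g c) = 0
            from by rw [tsum_congr hz]; exact tsum_zero]
          exact bot_le
    _ = 3/2 := RChalf

section Main

variable {Ω : Type*} [MeasurableSpace Ω] {μ : Measure Ω} [IsProbabilityMeasure μ]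

/-- The cylinder event. -/
def RCcyl (R : RenewalCovering μ) (m : ℕ) (a : ℕ → ℕ) : Set Ω :=
  {ω | ∀ i, 1 ≤ i → i ≤ m → R.P i ω = a i}

/-- Weight `4^(number of bad steps)`. -/
noncomputable def RCwt (K : ℕ) {n : ℕ} (b : Fin n → ℕ) : ℝ≥0∞ :=
  ∏ s : Fin n, (if b s + 1 ≤ K ∧ RClam (RCext b) (s + 1) ≤ (8 * K : ℝ)⁻¹ then 4 else 1)

/-- The key Chernoff-type estimate, by induction on the number of steps. -/
lemma RCkey (R : RenewalCovering μ) (K : ℕ) (hK : 1 ≤ K) (n : ℕ) :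
    ∑' b : Fin n → ℕ, RCwt K b * μ (RCcyl R (n+1) (RCtraj (RCext b))) ≤ (3/2 : ℝ≥0∞) ^ n := by
  induction n with
  | zero =>
    have h1 : ∀ b : Fin 0 → ℕ, RCwt K b * μ (RCcyl R 1 (RCtraj (RCext b))) ≤ 1 := by
      intro b
      have : RCwt K b = 1 := by
        unfold RCwt; exact Finset.prod_of_isEmpty _
      rw [this, one_mul]
      exact prob_le_one
    calc ∑' b : Fin 0 → ℕ, RCwt K b * μ (RCcyl R 1 (RCtraj (RCext b)))
        ≤ ∑' _ : Fin 0 → ℕ, (1:ℝ≥0∞) := ENNReal.tsum_le_tsum h1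
      _ = 1 := by
          rw [tsum_eq_single (fun _ => 0) (fun b hb => absurd (Subsingleton.elim b _) hb)]
      _ = (3/2 : ℝ≥0∞) ^ 0 := by rw [pow_zero]
  | succ n ih =>
    set e := Fin.insertNthEquiv (fun _ : Fin (n+1) => ℕ) (Fin.last n) with he
    set F : (Fin (n+1) → ℕ) → ℝ≥0∞ :=
      fun B => RCwt K B * μ (RCcyl R (n+2) (RCtraj (RCext B))) with hF
    have hstep : ∀ p : ℕ × (Fin n → ℕ),
        F (e p) = (RCwt K p.2 * μ (RCcyl R (n+1) (RCtraj (RCext p.2))))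
          * ((if p.1 + 1 ≤ K ∧ RClam (RCext p.2) (n + 1) ≤ (8 * K : ℝ)⁻¹ then (4:ℝ≥0∞) else 1)
            * ENNReal.ofReal ((1 - RClam (RCext p.2) (n + 1)) ^ p.1 * RClam (RCext p.2) (n + 1))) := by
      rintro ⟨c, b⟩
      set B : Fin (n+1) → ℕ := e (c, b) with hB
      have hBs : ∀ s : Fin n, B s.castSucc = b s := by
        intro s; rw [hB, he]; simp [Fin.succAbove_last]
      have hBl : B (Fin.last n) = c := by rw [hB, he]; simp
      have hext : ∀ k, k < n → RCext B k = RCext b k := by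
        intro k hk
        have hk1 : k < n + 1 := by omega
        show (if h : k < n + 1 then B ⟨k, h⟩ else 0) = (if h : k < n then b ⟨k, h⟩ else 0)
        rw [dif_pos hk1, dif_pos hk]
        have : (⟨k, hk1⟩ : Fin (n+1)) = (⟨k, hk⟩ : Fin n).castSucc := rfl
        rw [this, hBs]
      have hextn : RCext B n = c := by
        show (if h : n < n + 1 then B ⟨n, h⟩ else 0) = c
        rw [dif_pos (Nat.lt_succ_self n)]
        have : (⟨n, Nat.lt_succ_self n⟩ : Fin (n+1)) = Fin.last n := rfl
        rw [this, hBl]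
      have htraj : ∀ i, i ≤ n + 1 → RCtraj (RCext B) i = RCtraj (RCext b) i := by
        intro i hi
        exact RCtraj_congr i (fun k hk => hext k (by omega))
      have hlamEq : ∀ m, m ≤ n + 1 → RClam (RCext B) m = RClam (RCext b) m := by
        intro m hm
        exact RClam_congr m (fun k hk => hext k (by omega))
      set lamb := RClam (RCext b) (n + 1) with hlamb
      have hl0 : 0 < lamb := RClam_pos _ _
      have hl1 : lamb ≤ 1 := RClam_le_one _ _
      -- weight splits
      have hwt : RCwt K B = RCwt K b
          * (if c + 1 ≤ K ∧ lamb ≤ (8 * K : ℝ)⁻¹ then (4:ℝ≥0∞) else 1) := by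
        unfold RCwt
        rw [Fin.prod_univ_castSucc]
        congr 1
        · apply Finset.prod_congr rfl
          intro s _
          have h1 : B s.castSucc = b s := hBs s
          have h2 : RClam (RCext B) ((s.castSucc : ℕ) + 1) = RClam (RCext b) ((s : ℕ) + 1) := by
            rw [Fin.coe_castSucc]
            exact hlamEq ((s:ℕ)+1) (by omega)
          rw [h1, h2]
        · have h1 : B (Fin.last n) = c := hBl
          have h2 : RClam (RCext B) ((Fin.last n : ℕ) + 1) = lamb := by
            rw [Fin.val_last]
            exact hlamEq (n+1) le_rfl
          rw [h1, h2]
      -- measure splits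
      have hA2 : RCtraj (RCext B) (n + 2) = RCtraj (RCext B) (n + 1) + (c + 1) := by
        show RCtraj (RCext B) (n+1) + (RCext B n + 1) = _
        rw [hextn]
      have hlamB : ∏ k ∈ Finset.Icc 1 (n+1), (1 - 1 / (RCtraj (RCext B) k : ℝ)) = lamb := by
        rw [show (∏ k ∈ Finset.Icc 1 (n+1), (1 - 1 / (RCtraj (RCext B) k : ℝ)))
          = RClam (RCext B) (n+1) from rfl]
        exact hlamEq (n+1) le_rfl
      have hcylsub : {ω : Ω | ∀ i, 1 ≤ i → i ≤ n + 1 → R.P i ω = RCtraj (RCext B) i}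
          = RCcyl R (n+1) (RCtraj (RCext b)) := by
        ext ω
        unfold RCcyl
        simp only [Set.mem_setOf_eq]
        constructor
        · intro h i h1 h2; rw [← htraj i h2]; exact h i h1 h2
        · intro h i h1 h2; rw [htraj i h2]; exact h i h1 h2
      have hset : RCcyl R (n+2) (RCtraj (RCext B))
          = {ω : Ω | R.P (n+1+1) ω = RCtraj (RCext B) (n+1) + (c+1)
              ∧ ∀ i, 1 ≤ i → i ≤ n + 1 → R.P i ω = RCtraj (RCext B) i} := by
        ext ω
        unfold RCcyl
        simp only [Set.mem_setOf_eq]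
        constructor
        · intro h
          refine ⟨?_, fun i h1 h2 => h i h1 (by omega)⟩
          rw [← hA2]
          exact h (n+2) (by omega) le_rfl
        · rintro ⟨h1, h2⟩ i hi1 hi2
          rcases Nat.lt_or_ge i (n+2) with h | h
          · exact h2 i hi1 (by omega)
          · have : i = n + 2 := by omega
            subst this
            rw [hA2]
            exact h1
      have hcond := R.cond (n+1) (by omega) (RCtraj (RCext B))
        (fun i h1 h2 => RCtraj_lt_succ (RCext B) i h1) rfl (c+1) (by omega)
      have hmeas : μ (RCcyl R (n+2) (RCtraj (RCext B)))
          = ENNReal.ofReal ((1 - lamb) ^ c * lamb) * μ (RCcyl R (n+1) (RCtraj (RCext b))) := by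
        rw [hset, hcond, hlamB]
        rw [show c + 1 - 1 = c from rfl]
        rw [show {ω : Ω | ∀ i, 1 ≤ i → i ≤ n + 1 → R.P i ω = RCtraj (RCext B) i}
          = RCcyl R (n+1) (RCtraj (RCext b)) from hcylsub]
      show RCwt K B * μ (RCcyl R (n+2) (RCtraj (RCext B))) = _
      rw [hwt, hmeas]
      ring
    calc ∑' B : Fin (n+1) → ℕ, F B
        = ∑' p : ℕ × (Fin n → ℕ), F (e p) := (Equiv.tsum_eq e F).symm
      _ = ∑' (c : ℕ) (b : Fin n → ℕ), F (e (c, b)) := ENNReal.tsum_prod'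
      _ = ∑' (b : Fin n → ℕ) (c : ℕ), F (e (c, b)) := ENNReal.tsum_comm
      _ ≤ ∑' b : Fin n → ℕ, (RCwt K b * μ (RCcyl R (n+1) (RCtraj (RCext b)))) * (3/2) := by
          apply ENNReal.tsum_le_tsum
          intro b
          rw [show (∑' c : ℕ, F (e (c, b)))
            = (RCwt K b * μ (RCcyl R (n+1) (RCtraj (RCext b))))
              * ∑' c : ℕ, ((if c + 1 ≤ K ∧ RClam (RCext b) (n + 1) ≤ (8 * K : ℝ)⁻¹
                    then (4:ℝ≥0∞) else 1)
                  * ENNReal.ofReal ((1 - RClam (RCext b) (n + 1)) ^ c * RClam (RCext b) (n + 1)))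
            from by rw [← ENNReal.tsum_mul_left]; exact tsum_congr (fun c => hstep (c, b))]
          exact mul_le_mul_right (RCstep K hK (RClam_pos _ _) (RClam_le_one _ _)) _
      _ = (3/2) * ∑' b : Fin n → ℕ, RCwt K b * μ (RCcyl R (n+1) (RCtraj (RCext b))) := by
          rw [← ENNReal.tsum_mul_left]
          exact tsum_congr (fun b => mul_comm _ _)
      _ ≤ (3/2) * (3/2 : ℝ≥0∞) ^ n := mul_le_mul_right ih _
      _ = (3/2 : ℝ≥0∞) ^ (n+1) := (pow_succ' _ _).symm

/-- A step `s` is bad for `ω`: the increment `P (s+2) - P (s+1)` is at most `K`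
while the parameter `λ_(s+1)` is already at most `(8K)⁻¹`. -/
def RCbad (R : RenewalCovering μ) (K : ℕ) (s : ℕ) (ω : Ω) : Prop :=
  R.P (s+2) ω ≤ R.P (s+1) ω + K ∧ R.lam (s+1) ω ≤ (8 * K : ℝ)⁻¹

/-- The good event: `P 1 = 2` and `P` strictly increasing. -/
def RCgood (R : RenewalCovering μ) : Set Ω :=
  {ω | R.P 1 ω = 2 ∧ ∀ k, 1 ≤ k → R.P k ω < R.P (k + 1) ω}

open Classical in
/-- Bad event at time `n`: at least half of the first `n` steps are bad. -/
def RCBset (R : RenewalCovering μ) (K n : ℕ) : Set Ω :=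
  {ω | n ≤ 2 * ((Finset.range n).filter (fun s => RCbad R K s ω)).card} ∩ RCgood R

open Classical in
lemma RCcard_eq (p : ℕ → Prop) (n : ℕ) :
    ((Finset.range n).filter p).card = (Finset.univ.filter (fun s : Fin n => p s)).card := by
  rw [Finset.card_filter, Finset.card_filter, ← Fin.sum_univ_eq_sum_range]

open Classical in
lemma RCwt_eq_pow (K : ℕ) {n : ℕ} (b : Fin n → ℕ) :
    RCwt K b = 4 ^ (Finset.univ.filter
      (fun s : Fin n => b s + 1 ≤ K ∧ RClam (RCext b) (s + 1) ≤ (8 * K : ℝ)⁻¹)).card := by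
  unfold RCwt
  rw [← Finset.prod_filter_mul_prod_filter_not Finset.univ
      (fun s : Fin n => b s + 1 ≤ K ∧ RClam (RCext b) (s + 1) ≤ (8 * K : ℝ)⁻¹)]
  rw [Finset.prod_congr rfl (fun s hs => if_pos (Finset.mem_filter.mp hs).2),
      Finset.prod_congr rfl (fun s hs => if_neg (Finset.mem_filter.mp hs).2),
      Finset.prod_const, Finset.prod_const_one, mul_one]

open Classical in
lemma RCcover (R : RenewalCovering μ) (K : ℕ) (hK : 1 ≤ K) (n : ℕ) :
    μ (RCBset R K n) ≤ (3/4 : ℝ≥0∞) ^ n := by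
  set ε : ℝ := (8 * K : ℝ)⁻¹ with hε
  set S : Set (Fin n → ℕ) :=
    {b | n ≤ 2 * (Finset.univ.filter
      (fun s : Fin n => b s + 1 ≤ K ∧ RClam (RCext b) (s + 1) ≤ ε)).card} with hS
  have hsub : RCBset R K n ⊆ ⋃ b : S, RCcyl R (n+1) (RCtraj (RCext (b : Fin n → ℕ))) := by
    rintro ω ⟨hcard, hinit, hinc⟩
    set b : Fin n → ℕ := fun s => R.P ((s:ℕ)+2) ω - R.P ((s:ℕ)+1) ω - 1 with hb
    have hmono : ∀ i, 1 ≤ i → R.P i ω < R.P (i+1) ω := hinc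
    have htraj : ∀ i, 1 ≤ i → i ≤ n + 1 → RCtraj (RCext b) i = R.P i ω := by
      intro i hi1 hi2
      induction i with
      | zero => omega
      | succ m ih =>
        match m, ih with
        | 0, _ => exact hinit.symm
        | Nat.succ l, ih =>
          have hl : l + 1 ≤ n := by omega
          have hih := ih (by omega) (by omega)
          show RCtraj (RCext b) (l+1) + (RCext b l + 1) = R.P (l+2) ω
          have hbl : RCext b l = R.P (l+2) ω - R.P (l+1) ω - 1 := by
            show (if h : l < n then b ⟨l, h⟩ else 0) = _
            rw [dif_pos (by omega : l < n)]
          have hm := hmono (l+1) (by omega)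
          have hnorm : R.P (l+1+1) ω = R.P (l+2) ω := rfl
          rw [hnorm] at hm
          simp only [Nat.succ_eq_add_one] at hih hm ⊢
          rw [hih, hbl]
          omega
    have hlam : ∀ m, m ≤ n + 1 → RClam (RCext b) m = R.lam m ω := by
      intro m hm
      unfold RClam RenewalCovering.lam
      apply Finset.prod_congr rfl
      intro k hk
      simp only [Finset.mem_Icc] at hk
      rw [htraj k hk.1 (by omega)]
    have hbad : ∀ s : Fin n,
        (b s + 1 ≤ K ∧ RClam (RCext b) ((s:ℕ) + 1) ≤ ε) ↔ RCbad R K s ω := by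
      intro s
      have h1 : R.P ((s:ℕ)+1) ω < R.P ((s:ℕ)+2) ω := hmono ((s:ℕ)+1) (by omega)
      have h2 : b s + 1 = R.P ((s:ℕ)+2) ω - R.P ((s:ℕ)+1) ω := by
        simp only [hb]
        omega
      unfold RCbad
      rw [hlam ((s:ℕ)+1) (by omega)]
      constructor
      · rintro ⟨ha, hc⟩; exact ⟨by omega, hc⟩
      · rintro ⟨ha, hc⟩; exact ⟨by omega, hc⟩
    have hbS : b ∈ S := by
      rw [hS]
      simp only [Set.mem_setOf_eq]
      have : (Finset.univ.filter
          (fun s : Fin n => b s + 1 ≤ K ∧ RClam (RCext b) ((s:ℕ) + 1) ≤ ε)).card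
          = ((Finset.range n).filter (fun s => RCbad R K s ω)).card := by
        rw [RCcard_eq (fun s => RCbad R K s ω) n]
        congr 1
        apply Finset.filter_congr
        intro s _
        simp only [hbad s]
      rw [this]
      exact hcard
    refine Set.mem_iUnion.mpr ⟨⟨b, hbS⟩, ?_⟩
    intro i h1 h2
    exact (htraj i h1 h2).symm
  calc μ (RCBset R K n)
      ≤ μ (⋃ b : S, RCcyl R (n+1) (RCtraj (RCext (b : Fin n → ℕ)))) := measure_mono hsub
    _ ≤ ∑' b : S, μ (RCcyl R (n+1) (RCtraj (RCext (b : Fin n → ℕ)))) := measure_iUnion_le _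
    _ ≤ ∑' b : S, ((2:ℝ≥0∞)⁻¹)^n * (RCwt K (b : Fin n → ℕ)
          * μ (RCcyl R (n+1) (RCtraj (RCext (b : Fin n → ℕ))))) := by
        apply ENNReal.tsum_le_tsum
        rintro ⟨b, hbS⟩
        have hwt : (2:ℝ≥0∞)^n ≤ RCwt K b := by
          rw [RCwt_eq_pow]
          have hc : n ≤ 2 * (Finset.univ.filter
            (fun s : Fin n => b s + 1 ≤ K ∧ RClam (RCext b) (s + 1) ≤ ε)).card := hbS
          calc (2:ℝ≥0∞)^n ≤ (2:ℝ≥0∞)^(2 * (Finset.univ.filter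
              (fun s : Fin n => b s + 1 ≤ K ∧ RClam (RCext b) (s + 1) ≤ ε)).card) :=
              pow_le_pow_right₀ one_le_two hc
            _ = 4 ^ (Finset.univ.filter
              (fun s : Fin n => b s + 1 ≤ K ∧ RClam (RCext b) (s + 1) ≤ ε)).card := by
              rw [pow_mul]; norm_num
        calc μ (RCcyl R (n+1) (RCtraj (RCext b)))
            = ((2:ℝ≥0∞)⁻¹)^n * ((2:ℝ≥0∞)^n * μ (RCcyl R (n+1) (RCtraj (RCext b)))) := by
              rw [← mul_assoc, ← mul_pow, ENNReal.inv_mul_cancel two_ne_zero ENNReal.ofNat_ne_top,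
                one_pow, one_mul]
          _ ≤ ((2:ℝ≥0∞)⁻¹)^n * (RCwt K b * μ (RCcyl R (n+1) (RCtraj (RCext b)))) := by
              gcongr
    _ = ((2:ℝ≥0∞)⁻¹)^n * ∑' b : S, (RCwt K (b : Fin n → ℕ)
          * μ (RCcyl R (n+1) (RCtraj (RCext (b : Fin n → ℕ))))) := ENNReal.tsum_mul_left
    _ ≤ ((2:ℝ≥0∞)⁻¹)^n * ∑' b : Fin n → ℕ, (RCwt K b * μ (RCcyl R (n+1) (RCtraj (RCext b)))) := by
        gcongr
        exact ENNReal.tsum_comp_le_tsum_of_injective Subtype.val_injective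
          (fun b => RCwt K b * μ (RCcyl R (n+1) (RCtraj (RCext b))))
    _ ≤ ((2:ℝ≥0∞)⁻¹)^n * (3/2)^n := by
        gcongr
        exact RCkey R K hK n
    _ = (3/4 : ℝ≥0∞)^n := by
        rw [← mul_pow]
        congr 1
        rw [ENNReal.div_eq_inv_mul, ENNReal.div_eq_inv_mul]
        rw [show (4:ℝ≥0∞) = 2 * 2 by norm_num, ENNReal.mul_inv (by norm_num) (by norm_num)]
        ring

lemma RCae (R : RenewalCovering μ) :
    ∀ᵐ ω ∂μ, ω ∈ RCgood R ∧ ∀ K : ℕ, 1 ≤ K → ∀ᶠ n in atTop, ω ∉ RCBset R K n := by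
  have hgood : ∀ᵐ ω ∂μ, ω ∈ RCgood R := by
    filter_upwards [R.init, R.incr] with ω h1 h2
    exact ⟨h1, h2⟩
  have hBC : ∀ᵐ ω ∂μ, ∀ K : ℕ, 1 ≤ K → ∀ᶠ n in atTop, ω ∉ RCBset R K n := by
    rw [ae_all_iff]
    intro K
    by_cases hK : 1 ≤ K
    · have hfin : (∑' n, μ (RCBset R K n)) ≠ ⊤ := by
        have hle : (∑' n, μ (RCBset R K n)) ≤ ∑' n : ℕ, (3/4 : ℝ≥0∞) ^ n :=
          ENNReal.tsum_le_tsum (RCcover R K hK)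
        have hgeo : (∑' n : ℕ, (3/4 : ℝ≥0∞) ^ n) = (1 - 3/4)⁻¹ := ENNReal.tsum_geometric _
        have h34 : (3/4 : ℝ≥0∞) < 1 := by
          rw [ENNReal.div_lt_iff (Or.inl (by norm_num)) (Or.inl (by norm_num))]
          norm_num
        have hne : (1 - 3/4 : ℝ≥0∞) ≠ 0 := by
          rw [← pos_iff_ne_zero, tsub_pos_iff_lt]
          exact h34
        refine ne_top_of_le_ne_top ?_ hle
        rw [hgeo]
        exact ENNReal.inv_ne_top.mpr hne
      filter_upwards [ae_eventually_notMem hfin] with ω hω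
      exact fun _ => hω
    · refine ae_of_all μ (fun ω h => absurd h hK)
  filter_upwards [hgood, hBC] with ω h1 h2
  exact ⟨h1, h2⟩

lemma RCIcc (n : ℕ) : Finset.Icc 1 n = Finset.Ioc 0 n := by
  ext x
  simp only [Finset.mem_Icc, Finset.mem_Ioc]
  omega

lemma RCarith (C K k₀ n g PN : ℕ) (hK : K = 8*C+8)
    (hPn : 2 + n + K*g ≤ PN) (hA : n + 1 ≤ 2*g + 2*k₀) (hn2 : 2*K*k₀ + 2*C + 2 ≤ n) :
    C * (n+1) ≤ PN := by
  subst hK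
  nlinarith [Nat.mul_le_mul_left (8*C+8) hA]

set_option maxHeartbeats 1600000 in
/-- The deterministic endgame. -/
lemma RCendgame (R : RenewalCovering μ) (ω : Ω) (hgood : ω ∈ RCgood R)
    (hBC : ∀ K : ℕ, 1 ≤ K → ∀ᶠ n in atTop, ω ∉ RCBset R K n) :
    ∀ t : ℝ, 0 < t →
      Tendsto (fun x : ℝ => R.lam ⌈x * t⌉₊ ω / R.lam ⌈x⌉₊ ω) atTop (nhds 1) := by
  obtain ⟨hinit, hinc⟩ := hgood
  obtain ⟨P, hPdef⟩ : ∃ P : ℕ → ℕ, P = fun i => R.P i ω := ⟨_, rfl⟩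
  obtain ⟨lam, hlamdef⟩ : ∃ lam : ℕ → ℝ, lam = fun n => R.lam n ω := ⟨_, rfl⟩
  have hgoal : ∀ t : ℝ,
      (fun x : ℝ => R.lam ⌈x * t⌉₊ ω / R.lam ⌈x⌉₊ ω)
        = (fun x : ℝ => lam ⌈x * t⌉₊ / lam ⌈x⌉₊) := by
    intro t; rw [hlamdef]
  have hinit' : P 1 = 2 := by rw [hPdef]; exact hinit
  have hinc' : ∀ k, 1 ≤ k → P k < P (k+1) := by
    intro k hk; rw [hPdef]; exact hinc k hk
  have hlamP : ∀ n, lam n = ∏ k ∈ Finset.Icc 1 n, (1 - 1/(P k : ℝ)) := by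
    intro n; rw [hlamdef, hPdef]; rfl
  have hPmono : ∀ i j, 1 ≤ i → i ≤ j → P i ≤ P j := by
    intro i j hi hij
    induction j with
    | zero => omega
    | succ m ih =>
      rcases Nat.lt_or_ge i (m+1) with h | h
      · exact (ih (by omega)).trans (hinc' m (by omega)).le
      · have : i = m + 1 := by omega
        subst this; rfl
  have hP2 : ∀ i, 1 ≤ i → 2 ≤ P i := by
    intro i hi
    have h1 := hPmono 1 i le_rfl hi
    omega
  have hfac : ∀ k, 1 ≤ k → (1:ℝ)/2 ≤ 1 - 1/(P k : ℝ) ∧ 1 - 1/(P k : ℝ) ≤ 1 := by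
    intro k hk
    have h2 : (2:ℝ) ≤ (P k : ℝ) := by exact_mod_cast hP2 k hk
    constructor
    · have : 1/(P k : ℝ) ≤ 1/2 := by
        apply div_le_div_of_nonneg_left (by norm_num) (by norm_num) h2
      linarith
    · have : (0:ℝ) < (P k : ℝ) := by linarith
      have : 0 < 1/(P k : ℝ) := by positivity
      linarith
  have hlam_pos : ∀ n, 0 < lam n := by
    intro n
    rw [hlamP n]
    apply Finset.prod_pos
    intro k hk
    simp only [Finset.mem_Icc] at hk
    linarith [(hfac k hk.1).1]
  have hsplit : ∀ m n : ℕ, m ≤ n →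
      lam n = lam m * ∏ k ∈ Finset.Ioc m n, (1 - 1/(P k : ℝ)) := by
    intro m n hmn
    rw [hlamP n, hlamP m]
    rw [RCIcc, RCIcc, Finset.prod_Ioc_consecutive _ (Nat.zero_le m) hmn]
  have hanti : Antitone lam := by
    intro m n hmn
    rw [hsplit m n hmn]
    have h1 : ∏ k ∈ Finset.Ioc m n, (1 - 1/(P k : ℝ)) ≤ 1 := by
      apply Finset.prod_le_one
      · intro k hk
        simp only [Finset.mem_Ioc] at hk
        linarith [(hfac k (by omega)).1]
      · intro k hk
        simp only [Finset.mem_Ioc] at hk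
        exact (hfac k (by omega)).2
    calc lam m * ∏ k ∈ Finset.Ioc m n, (1 - 1/(P k : ℝ)) ≤ lam m * 1 := by
          apply mul_le_mul_of_nonneg_left h1 (hlam_pos m).le
      _ = lam m := mul_one _
  have hratio : ∀ m n : ℕ, m ≤ n →
      lam m * (1 - ((n - m : ℕ) : ℝ) / (P (m+1) : ℝ)) ≤ lam n := by
    intro m n hmn
    have hp : (0:ℝ) < (P (m+1) : ℝ) := by
      have := hP2 (m+1) (by omega); positivity
    have hconst : (0:ℝ) ≤ 1 - 1/(P (m+1) : ℝ) := by linarith [(hfac (m+1) (by omega)).1]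
    have h1 : (1 - 1/(P (m+1) : ℝ)) ^ (n - m) ≤ ∏ k ∈ Finset.Ioc m n, (1 - 1/(P k : ℝ)) := by
      rw [← Nat.card_Ioc m n, ← Finset.prod_const]
      apply Finset.prod_le_prod
      · intro k _; exact hconst
      · intro k hk
        simp only [Finset.mem_Ioc] at hk
        have hP1 : (P (m+1) : ℝ) ≤ (P k : ℝ) := by
          exact_mod_cast hPmono (m+1) k (by omega) (by omega)
        have : 1/(P k : ℝ) ≤ 1/(P (m+1) : ℝ) :=
          div_le_div_of_nonneg_left (by norm_num) hp hP1
        linarith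
    have h2 : 1 - ((n - m : ℕ) : ℝ) / (P (m+1) : ℝ) ≤ (1 - 1/(P (m+1) : ℝ)) ^ (n - m) := by
      have hb := one_add_mul_le_pow (a := -(1/(P (m+1) : ℝ))) (by
        have : 1/(P (m+1) : ℝ) ≤ 1 := by
          rw [div_le_one hp]
          have := hP2 (m+1) (by omega)
          exact_mod_cast by omega
        linarith) (n - m)
      calc 1 - ((n - m : ℕ) : ℝ) / (P (m+1) : ℝ)
          = 1 + ((n - m : ℕ) : ℝ) * (-(1/(P (m+1) : ℝ))) := by ring
        _ ≤ (1 + -(1/(P (m+1) : ℝ))) ^ (n - m) := hb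
        _ = (1 - 1/(P (m+1) : ℝ)) ^ (n - m) := by ring_nf
    calc lam m * (1 - ((n - m : ℕ) : ℝ) / (P (m+1) : ℝ))
        ≤ lam m * ∏ k ∈ Finset.Ioc m n, (1 - 1/(P k : ℝ)) := by
          apply mul_le_mul_of_nonneg_left (h2.trans h1) (hlam_pos m).le
      _ = lam n := (hsplit m n hmn).symm
  have hbdd : BddBelow (Set.range lam) := by
    refine ⟨0, ?_⟩
    rintro y ⟨n, rfl⟩
    exact (hlam_pos n).le
  have htend : Tendsto lam atTop (nhds (⨅ n, lam n)) := tendsto_atTop_ciInf hanti hbdd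
  have hL0 : 0 ≤ ⨅ n, lam n := le_ciInf (fun n => (hlam_pos n).le)
  intro t ht
  rw [hgoal t]
  rcases eq_or_lt_of_le hL0 with hL | hL
  · -- hard case : the infimum is 0
    have hlam0 : Tendsto lam atTop (nhds 0) := by rwa [← hL] at htend
    have hPgrow : ∀ C : ℕ, ∀ᶠ m in atTop, C * m ≤ P m := by
      intro C
      rcases Nat.eq_zero_or_pos C with rfl | hC
      · exact Eventually.of_forall (fun m => by simp)
      set K : ℕ := 8 * C + 8 with hKdef
      have hK1 : 1 ≤ K := by omega
      have hev2 : ∀ᶠ k in atTop, lam k ≤ (8*(K:ℝ))⁻¹ := by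
        have hpos : (0:ℝ) < (8*(K:ℝ))⁻¹ := by positivity
        exact hlam0.eventually (eventually_le_nhds hpos)
      obtain ⟨k₀, hk₀⟩ := eventually_atTop.mp hev2
      obtain ⟨N₁, hN₁⟩ := eventually_atTop.mp (hBC K hK1)
      refine eventually_atTop.mpr ⟨N₁ + 2*k₀ + 2*K*k₀ + 2*C + 3, ?_⟩
      intro m hm
      obtain ⟨n, rfl⟩ : ∃ n, m = n + 1 := ⟨m - 1, by omega⟩
      have hn : N₁ ≤ n := by omega
      classical
      set Bn := (Finset.range n).filter (fun s => RCbad R K s ω) with hBn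
      have hcard : 2 * Bn.card < n := by
        have hnot := hN₁ n hn
        have : ¬ (n ≤ 2 * Bn.card) := by
          intro hcon
          exact hnot ⟨hcon, hinit, hinc⟩
        omega
      set G := (Finset.range n).filter
        (fun s => ¬ RCbad R K s ω ∧ k₀ ≤ s + 1) with hG
      have hGcard : n ≤ G.card + Bn.card + k₀ := by
        have hsub : Finset.range n ⊆ G ∪ Bn ∪ Finset.range k₀ := by
          intro s hs
          simp only [Finset.mem_union, hG, hBn, Finset.mem_filter, Finset.mem_range] at *
          by_cases hb : RCbad R K s ω
          · exact Or.inl (Or.inr ⟨hs, hb⟩)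
          · rcases Nat.lt_or_ge s k₀ with h | h
            · exact Or.inr h
            · exact Or.inl (Or.inl ⟨hs, hb, by omega⟩)
        calc n = (Finset.range n).card := (Finset.card_range n).symm
          _ ≤ (G ∪ Bn ∪ Finset.range k₀).card := Finset.card_le_card hsub
          _ ≤ (G ∪ Bn).card + (Finset.range k₀).card := Finset.card_union_le _ _
          _ ≤ G.card + Bn.card + (Finset.range k₀).card := by
              have := Finset.card_union_le G Bn; omega
          _ = G.card + Bn.card + k₀ := by rw [Finset.card_range]
      have htele : ∀ N : ℕ, 2 + ∑ s ∈ Finset.range N, (P (s+2) - P (s+1)) ≤ P (N+1) := by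
        intro N
        induction N with
        | zero => simp [hinit']
        | succ M ih =>
          rw [Finset.sum_range_succ]
          have h1 := hinc' (M+1) (by omega)
          have e1 : P (M+1+1) = P (M+2) := rfl
          omega
      have hGinc : ∀ s ∈ G, K + 1 ≤ P (s+2) - P (s+1) := by
        intro s hs
        simp only [hG, Finset.mem_filter] at hs
        obtain ⟨_, hnb, hks⟩ := hs
        have hlamsmall : R.lam (s+1) ω ≤ (8*(K:ℝ))⁻¹ := by
          have := hk₀ (s+1) hks
          rwa [hlamdef] at this
        have hnle : ¬ (P (s+2) ≤ P (s+1) + K) := by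
          intro hcon
          apply hnb
          refine ⟨?_, hlamsmall⟩
          rw [hPdef] at hcon
          exact hcon
        have h1 := hinc' (s+1) (by omega)
        have e1 : P (s+1+1) = P (s+2) := rfl
        omega
      have hsumLB : n + K * G.card ≤ ∑ s ∈ Finset.range n, (P (s+2) - P (s+1)) := by
        have hsplitsum : ∑ s ∈ Finset.range n, (P (s+2) - P (s+1))
            = ∑ s ∈ G, (P (s+2) - P (s+1))
              + ∑ s ∈ (Finset.range n).filter
                  (fun s => ¬(¬ RCbad R K s ω ∧ k₀ ≤ s + 1)), (P (s+2) - P (s+1)) := by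
          rw [hG, Finset.sum_filter_add_sum_filter_not]
        have h1 : K * G.card + G.card ≤ ∑ s ∈ G, (P (s+2) - P (s+1)) := by
          calc K * G.card + G.card = ∑ _s ∈ G, (K + 1) := by
                rw [Finset.sum_const, smul_eq_mul]; ring
            _ ≤ ∑ s ∈ G, (P (s+2) - P (s+1)) := Finset.sum_le_sum hGinc
        have h2 : (Finset.range n).card - G.card
            ≤ ∑ s ∈ (Finset.range n).filter
                (fun s => ¬(¬ RCbad R K s ω ∧ k₀ ≤ s + 1)), (P (s+2) - P (s+1)) := by
          have hle : ∀ s ∈ (Finset.range n).filter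
              (fun s => ¬(¬ RCbad R K s ω ∧ k₀ ≤ s + 1)), 1 ≤ P (s+2) - P (s+1) := by
            intro s _
            have h1 := hinc' (s+1) (by omega)
            have e1 : P (s+1+1) = P (s+2) := rfl
            omega
          calc (Finset.range n).card - G.card
              ≤ ((Finset.range n).filter
                  (fun s => ¬(¬ RCbad R K s ω ∧ k₀ ≤ s + 1))).card := by
                rw [hG]
                have := Finset.card_filter_add_card_filter_not
                  (s := Finset.range n) (p := fun s => ¬ RCbad R K s ω ∧ k₀ ≤ s + 1)
                omega
            _ = ∑ _s ∈ (Finset.range n).filter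
                  (fun s => ¬(¬ RCbad R K s ω ∧ k₀ ≤ s + 1)), 1 := by
                rw [Finset.sum_const, smul_eq_mul, mul_one]
            _ ≤ _ := Finset.sum_le_sum hle
        have hGle : G.card ≤ n := by
          have := Finset.card_filter_le (Finset.range n)
            (fun s => ¬ RCbad R K s ω ∧ k₀ ≤ s + 1)
          rw [← hG] at this
          simpa using this
        rw [hsplitsum]
        rw [Finset.card_range] at h2
        omega
      have hPn : 2 + n + K * G.card ≤ P (n+1) := by
        have := htele n
        omega
      have hA : n + 1 ≤ 2 * G.card + 2 * k₀ := by omega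
      have hn2 : 2*K*k₀ + 2*C + 2 ≤ n := by omega
      exact RCarith C K k₀ n G.card (P (n+1)) hKdef hPn hA hn2
    -- Step 2 : slow variation from superlinear growth
    rw [Metric.tendsto_atTop]
    intro ε' hε'
    have hδpos : 0 < min (ε'/4) (1/2 : ℝ) := lt_min (by linarith) (by norm_num)
    set δ : ℝ := min (ε'/4) (1/2) with hδdef
    have hδhalf : δ ≤ 1/2 := min_le_right _ _
    have hδε : δ ≤ ε'/4 := min_le_left _ _
    have hmin : (0:ℝ) < min 1 t := lt_min one_pos ht
    set C : ℕ := ⌈(2*(1+t)+2) / (δ * min 1 t)⌉₊ + 1 with hCdef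
    have hCbig : (2*(1+t)+2) / (δ * min 1 t) ≤ (C:ℝ) := by
      calc (2*(1+t)+2) / (δ * min 1 t) ≤ (⌈(2*(1+t)+2) / (δ * min 1 t)⌉₊ : ℝ) :=
          Nat.le_ceil _
        _ ≤ (C:ℝ) := by rw [hCdef]; push_cast; linarith
    obtain ⟨N, hN⟩ := eventually_atTop.mp (hPgrow C)
    have hXev : ∀ᶠ x : ℝ in atTop, 1 ≤ x ∧ (N:ℝ) ≤ x * min 1 t := by
      have h2 : Tendsto (fun x : ℝ => x * min 1 t) atTop atTop :=
        tendsto_id.atTop_mul_const hmin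
      filter_upwards [eventually_ge_atTop (1:ℝ), h2.eventually_ge_atTop (N:ℝ)] with x hx1 hx2
      exact ⟨hx1, hx2⟩
    obtain ⟨X₀, hX₀⟩ := eventually_atTop.mp hXev
    refine ⟨X₀, fun x hx => ?_⟩
    obtain ⟨hx1, hxN⟩ := hX₀ x hx
    have hx0 : (0:ℝ) < x := by linarith
    set m : ℕ := ⌈x⌉₊ with hmdef
    set M : ℕ := ⌈x*t⌉₊ with hMdef
    set u : ℕ := min m M with hudef
    set v : ℕ := max m M with hvdef
    have huv : u ≤ v := min_le_max
    have hu_ge : x * min 1 t ≤ (u:ℝ) := by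
      have hcast : ((u:ℕ):ℝ) = min (m:ℝ) (M:ℝ) := by
        rw [hudef, Nat.cast_min]
      rw [hcast]
      apply le_min
      · have h1 : x * min 1 t ≤ x * 1 :=
          mul_le_mul_of_nonneg_left (min_le_left 1 t) hx0.le
        have h2 : x ≤ (m:ℝ) := Nat.le_ceil x
        linarith
      · have h1 : x * min 1 t ≤ x * t :=
          mul_le_mul_of_nonneg_left (min_le_right 1 t) hx0.le
        have h2 : x * t ≤ (M:ℝ) := Nat.le_ceil _
        linarith
    have hv_le : (v:ℝ) ≤ x*(1+t) + 1 := by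
      have hcast : ((v:ℕ):ℝ) = max (m:ℝ) (M:ℝ) := by
        rw [hvdef, Nat.cast_max]
      rw [hcast]
      apply max_le
      · have h1 : (m:ℝ) < x + 1 := Nat.ceil_lt_add_one hx0.le
        nlinarith
      · have h1 : (M:ℝ) < x*t + 1 := Nat.ceil_lt_add_one (by positivity)
        nlinarith
    have hNu : N ≤ u + 1 := by
      have : (N:ℝ) ≤ (u:ℝ) := le_trans hxN hu_ge
      have : N ≤ u := by exact_mod_cast this
      omega
    have hPu := hN (u+1) hNu
    have hp0 : (0:ℝ) < (P (u+1) : ℝ) := by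
      have := hP2 (u+1) (by omega); positivity
    have hkey : ((v - u : ℕ):ℝ) / (P (u+1) : ℝ) ≤ δ := by
      rw [div_le_iff₀ hp0]
      have h1 : ((v - u : ℕ):ℝ) ≤ x*(1+t)+1 := by
        rw [Nat.cast_sub huv]
        have : (0:ℝ) ≤ (u:ℝ) := Nat.cast_nonneg u
        linarith
      have h2 : (C:ℝ) * ((u:ℝ)+1) ≤ (P (u+1) : ℝ) := by
        exact_mod_cast hPu
      have h3 : (C:ℝ) * (x * min 1 t) ≤ (C:ℝ) * ((u:ℝ)+1) := by
        have hC0 : (0:ℝ) ≤ (C:ℝ) := Nat.cast_nonneg C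
        have : x * min 1 t ≤ (u:ℝ) + 1 := by linarith [hu_ge]
        exact mul_le_mul_of_nonneg_left this hC0
      have h4 : (2*(1+t)+2) * x ≤ δ * ((C:ℝ) * (x * min 1 t)) := by
        have h5 : (2*(1+t)+2) ≤ (C:ℝ) * (δ * min 1 t) := by
          rw [div_le_iff₀ (by positivity)] at hCbig
          linarith [hCbig]
        have h6 : (2*(1+t)+2) * x ≤ ((C:ℝ) * (δ * min 1 t)) * x :=
          mul_le_mul_of_nonneg_right h5 hx0.le
        calc (2*(1+t)+2) * x ≤ ((C:ℝ) * (δ * min 1 t)) * x := h6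
          _ = δ * ((C:ℝ) * (x * min 1 t)) := by ring
      have h7 : x*(1+t)+1 ≤ (2*(1+t)+2) * x := by nlinarith
      have h8 : δ * ((C:ℝ) * (x * min 1 t)) ≤ δ * ((C:ℝ) * ((u:ℝ)+1)) := by
        have : (C:ℝ) * (x * min 1 t) ≤ (C:ℝ) * ((u:ℝ)+1) := h3
        exact mul_le_mul_of_nonneg_left this hδpos.le
      have h9 : δ * ((C:ℝ) * ((u:ℝ)+1)) ≤ δ * (P (u+1) : ℝ) :=
        mul_le_mul_of_nonneg_left h2 hδpos.le
      linarith
    have hlow : (1 - δ) * lam u ≤ lam v := by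
      have hr := hratio u v huv
      have h5 : (1-δ) ≤ 1 - ((v - u : ℕ):ℝ)/(P (u+1) : ℝ) := by linarith
      calc (1-δ) * lam u ≤ (1 - ((v - u : ℕ):ℝ)/(P (u+1) : ℝ)) * lam u :=
          mul_le_mul_of_nonneg_right h5 (hlam_pos u).le
        _ = lam u * (1 - ((v - u : ℕ):ℝ)/(P (u+1) : ℝ)) := mul_comm _ _
        _ ≤ lam v := hr
    have hmpos := hlam_pos m
    have hMpos := hlam_pos M
    have hδ1 : δ < 1 := by linarith
    rcases le_total m M with hmM | hMm
    · have hu' : u = m := min_eq_left hmM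
      have hv' : v = M := max_eq_right hmM
      rw [hu', hv'] at hlow
      have hle1 : lam M / lam m ≤ 1 := by
        rw [div_le_one hmpos]
        exact hanti hmM
      have hge : 1 - δ ≤ lam M / lam m := by
        rw [le_div_iff₀ hmpos]
        linarith
      rw [Real.dist_eq]
      rw [abs_lt]
      constructor
      · have : δ < ε' := by linarith
        linarith
      · linarith
    · have hu' : u = M := min_eq_right hMm
      have hv' : v = m := max_eq_left hMm
      rw [hu', hv'] at hlow
      have hge1 : 1 ≤ lam M / lam m := by
        rw [le_div_iff₀ hmpos]
        have := hanti hMm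
        linarith
      have hup : lam M / lam m ≤ 1 + 2*δ := by
        rw [div_le_iff₀ hmpos]
        have hcoef : (1:ℝ) ≤ (1+2*δ)*(1-δ) := by nlinarith [hδpos.le, hδhalf]
        have h1 : (1+2*δ)*((1-δ)*lam M) ≤ (1+2*δ)*lam m :=
          mul_le_mul_of_nonneg_left hlow (by linarith)
        calc lam M = 1 * lam M := (one_mul _).symm
          _ ≤ ((1+2*δ)*(1-δ)) * lam M := mul_le_mul_of_nonneg_right hcoef hMpos.le
          _ = (1+2*δ)*((1-δ)*lam M) := by ring
          _ ≤ (1+2*δ)*lam m := h1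
      rw [Real.dist_eq, abs_lt]
      constructor
      · linarith
      · have : 2*δ < ε' := by linarith
        linarith
  · -- easy case : the infimum is positive
    have hM : Tendsto (fun x : ℝ => lam ⌈x * t⌉₊) atTop (nhds (⨅ n, lam n)) :=
      htend.comp (tendsto_nat_ceil_atTop.comp (tendsto_id.atTop_mul_const ht))
    have hm : Tendsto (fun x : ℝ => lam ⌈x⌉₊) atTop (nhds (⨅ n, lam n)) :=
      htend.comp tendsto_nat_ceil_atTop
    have := hM.div hm (ne_of_gt hL)
    rwa [div_self (ne_of_gt hL)] at this

end Main

/-- Almost surely, the extension `λ(x) = λ_⌈x⌉` of the random sequence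
`λ_n = ∏_{k=1}^n (1 − 1/P_k)` is slowly varying at infinity:
for every `t > 0`, `λ(xt)/λ(x) → 1` as `x → ∞`. -/
theorem stmt5 {Ω : Type*} [MeasurableSpace Ω] (μ : Measure Ω) [IsProbabilityMeasure μ]
    (R : RenewalCovering μ) :
    ∀ᵐ ω ∂μ, ∀ t : ℝ, 0 < t →
      Tendsto (fun x : ℝ => R.lam ⌈x * t⌉₊ ω / R.lam ⌈x⌉₊ ω) atTop (nhds 1) := by
  filter_upwards [RCae R] with ω hω
  exact RCendgame R ω hω.1 hω.2
end

section
/- Let γ: ℝ_{>0} → ℝ_{>0} be slowly varying at infinity and monotone increasing. Then (∑_{k=1}^{⌊x⌋} γ(k)) / (x·γ(x)) → 1 as x → ∞. -/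
open Filter

/-- A function `γ : ℝ → ℝ` (positive on `(0,∞)`) is slowly varying at infinity if
`γ(xt)/γ(x) → 1` as `x → ∞`, for every `t > 0`. -/
def SlowlyVarying (γ : ℝ → ℝ) : Prop :=
  ∀ t : ℝ, 0 < t → Tendsto (fun x : ℝ => γ (x * t) / γ x) atTop (nhds 1)

/-- Karamata-type theorem: if `γ` is positive, monotone increasing, and slowly varying
at infinity, then `(∑_{k=1}^{⌊x⌋} γ(k)) / (x·γ(x)) → 1` as `x → ∞`. -/
theorem stmt7 (γ : ℝ → ℝ) (hpos : ∀ x : ℝ, 0 < x → 0 < γ x) (hmono : Monotone γ)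
    (hsv : SlowlyVarying γ) :
    Tendsto (fun x : ℝ => (∑ k ∈ Finset.Icc 1 ⌊x⌋₊, γ k) / (x * γ x)) atTop (nhds 1) := by
  rw [tendsto_order]
  constructor
  · intro a ha
    set c : ℝ := max a (1/2) with hc
    have hc1 : c < 1 := max_lt ha (by norm_num)
    have hc0 : (1:ℝ)/2 ≤ c := le_max_right _ _
    set t : ℝ := (1 - c)/3 with ht
    have ht0 : 0 < t := div_pos (by linarith) (by norm_num)
    have ht6 : t ≤ 1/6 := by rw [ht]; linarith
    have hct : c = 1 - 3*t := by rw [ht]; ring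
    have hev := (hsv t ht0).eventually (eventually_gt_nhds (show 1 - t < 1 by linarith))
    filter_upwards [hev, eventually_ge_atTop (2/t), eventually_ge_atTop 3] with x hγ hx2 hx3
    have hxt : 2 ≤ x * t := (div_le_iff₀ ht0).1 hx2
    have hxt0 : 0 < x * t := by linarith
    have hx0 : 0 < x := by linarith
    have hγx : 0 < γ x := hpos x hx0
    have hγxt : 0 < γ (x*t) := hpos _ hxt0
    have hγge : (1 - t) * γ x < γ (x*t) := by
      rwa [lt_div_iff₀ hγx] at hγ
    have hxt6 : x * t ≤ x * (1/6) := mul_le_mul_of_nonneg_left ht6 hx0.le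
    have hpos2 : 0 < x - x*t - 1 := by linarith
    have hceil : (⌈x*t⌉₊ : ℝ) < x*t + 1 := Nat.ceil_lt_add_one hxt0.le
    have hfloor : x - 1 < (⌊x⌋₊ : ℝ) := Nat.sub_one_lt_floor x
    have hceil_le : ⌈x*t⌉₊ ≤ ⌊x⌋₊ := by
      rw [Nat.ceil_le]
      calc x*t ≤ x - 1 := by linarith
        _ ≤ ⌊x⌋₊ := hfloor.le
    have hceil1 : 1 ≤ ⌈x*t⌉₊ := Nat.one_le_ceil_iff.2 hxt0
    have hS1 : ∑ k ∈ Finset.Icc ⌈x*t⌉₊ ⌊x⌋₊, γ k ≤ ∑ k ∈ Finset.Icc 1 ⌊x⌋₊, γ k := by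
      apply Finset.sum_le_sum_of_subset_of_nonneg (Finset.Icc_subset_Icc_left hceil1)
      intro k hk _
      have hk1 : (1:ℝ) ≤ (k:ℝ) := by exact_mod_cast (Finset.mem_Icc.1 hk).1
      exact (hpos k (by linarith)).le
    have hS2 : (Finset.Icc ⌈x*t⌉₊ ⌊x⌋₊).card • γ (x*t) ≤ ∑ k ∈ Finset.Icc ⌈x*t⌉₊ ⌊x⌋₊, γ k := by
      apply Finset.card_nsmul_le_sum
      intro k hk
      have hk1 : ⌈x*t⌉₊ ≤ k := (Finset.mem_Icc.1 hk).1
      have hk2 : x*t ≤ (k:ℝ) := le_trans (Nat.le_ceil _) (by exact_mod_cast hk1)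
      exact hmono hk2
    have hcard : (x - x*t - 1) ≤ ((Finset.Icc ⌈x*t⌉₊ ⌊x⌋₊).card : ℝ) := by
      rw [Nat.card_Icc]
      have heq : ((⌊x⌋₊ + 1 - ⌈x*t⌉₊ : ℕ) : ℝ) = (⌊x⌋₊:ℝ) + 1 - (⌈x*t⌉₊:ℝ) := by
        rw [Nat.cast_sub (by omega)]; push_cast; ring
      rw [heq]; linarith
    have key : (x - x*t - 1) * γ (x*t) ≤ ∑ k ∈ Finset.Icc 1 ⌊x⌋₊, γ k := by
      calc (x - x*t - 1) * γ (x*t)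
          ≤ ((Finset.Icc ⌈x*t⌉₊ ⌊x⌋₊).card : ℝ) * γ (x*t) :=
            mul_le_mul_of_nonneg_right hcard hγxt.le
        _ = (Finset.Icc ⌈x*t⌉₊ ⌊x⌋₊).card • γ (x*t) := (nsmul_eq_mul _ _).symm
        _ ≤ _ := le_trans hS2 hS1
    rw [lt_div_iff₀ (by positivity : 0 < x * γ x)]
    have h1 : (x - x*t - 1) * ((1-t)*γ x) < (x - x*t - 1) * γ (x*t) :=
      mul_lt_mul_of_pos_left hγge hpos2
    have h2 : c * (x * γ x) ≤ (x - x*t - 1) * ((1-t)*γ x) := by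
      rw [hct]
      nlinarith [hγx, hxt, ht0, mul_nonneg hxt0.le ht0.le,
        mul_nonneg (mul_nonneg hxt0.le ht0.le) hγx.le,
        mul_le_mul_of_nonneg_right hxt hγx.le, mul_pos ht0 hγx]
    have hca : a * (x * γ x) ≤ c * (x * γ x) :=
      mul_le_mul_of_nonneg_right (le_max_left _ _) (by positivity)
    linarith
  · intro a ha
    filter_upwards [eventually_ge_atTop 1] with x hx1
    have hx0 : (0:ℝ) ≤ x := by linarith
    have hγx : 0 < γ x := hpos x (by linarith)
    have hS : ∑ k ∈ Finset.Icc 1 ⌊x⌋₊, γ k ≤ x * γ x := by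
      calc ∑ k ∈ Finset.Icc 1 ⌊x⌋₊, γ k ≤ ∑ _k ∈ Finset.Icc 1 ⌊x⌋₊, γ x := by
            apply Finset.sum_le_sum
            intro k hk
            have hk2 : (k:ℝ) ≤ (⌊x⌋₊:ℝ) := by exact_mod_cast (Finset.mem_Icc.1 hk).2
            exact hmono (hk2.trans (Nat.floor_le hx0))
        _ = ((Finset.Icc 1 ⌊x⌋₊).card : ℝ) * γ x := by
            rw [Finset.sum_const, nsmul_eq_mul]
        _ ≤ x * γ x := by
            apply mul_le_mul_of_nonneg_right _ hγx.le
            rw [Nat.card_Icc]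
            calc ((⌊x⌋₊ + 1 - 1 : ℕ):ℝ) = (⌊x⌋₊:ℝ) := by simp
              _ ≤ x := Nat.floor_le hx0
    calc (∑ k ∈ Finset.Icc 1 ⌊x⌋₊, γ k) / (x * γ x) ≤ 1 := by
          rw [div_le_one (by positivity)]; exact hS
      _ < a := ha
end

section
/- Let (γ_n) be a positive monotone decreasing sequence whose extension γ(x) = γ_{⌈x⌉} is slowly varying at infinity, and let S_n = ∑_{k=1}^n G_k be a sum of independent Geometric(γ_k) random variables. Then for every α > 1, P(|S_n − ∑_{k=1}^n 1/γ_k| > n^{α/2}) → 0 as n → ∞. -/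
open MeasureTheory ProbabilityTheory Filter

/-- `X` is a geometric random variable with parameter `p`:
it takes values in `{1,2,...}` with `P(X = k) = (1-p)^(k-1) * p`. -/
def IsGeom {Ω : Type*} [MeasurableSpace Ω] (μ : Measure Ω) (X : Ω → ℕ) (p : ℝ) : Prop :=
  (∀ᵐ ω ∂μ, 1 ≤ X ω) ∧
  ∀ k : ℕ, 1 ≤ k → μ {ω | X ω = k} = ENNReal.ofReal ((1 - p) ^ (k - 1) * p)

section aux

open ENNReal

/-- sum of `(n+1) q^n`. -/
lemma tsum_aux1 {q : ℝ} (h0 : 0 ≤ q) (h1 : q < 1) :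
    ∑' n : ℕ, ((n : ℝ) + 1) * q ^ n = (1 - q)⁻¹ ^ 2 := by
  have hnq : ‖q‖ < 1 := by rwa [Real.norm_eq_abs, abs_of_nonneg h0]
  have s0 : Summable (fun n : ℕ => q ^ n) := summable_geometric_of_lt_one h0 h1
  have s1 : Summable (fun n : ℕ => (n : ℝ) * q ^ n) := by
    simpa using summable_pow_mul_geometric_of_norm_lt_one 1 hnq
  have hne : (1 : ℝ) - q ≠ 0 := by linarith
  calc ∑' n : ℕ, ((n : ℝ) + 1) * q ^ n
      = ∑' n : ℕ, ((n : ℝ) * q ^ n + q ^ n) := tsum_congr fun n => by ring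
    _ = (∑' n : ℕ, (n : ℝ) * q ^ n) + ∑' n : ℕ, q ^ n := Summable.tsum_add s1 s0
    _ = q / (1 - q) ^ 2 + (1 - q)⁻¹ := by
        rw [tsum_coe_mul_geometric_of_norm_lt_one hnq, tsum_geometric_of_lt_one h0 h1]
    _ = (1 - q)⁻¹ ^ 2 := by field_simp; ring

/-- sum of `(n+1)^2 q^n`. -/
lemma tsum_aux2 {q : ℝ} (h0 : 0 ≤ q) (h1 : q < 1) :
    ∑' n : ℕ, ((n : ℝ) + 1) ^ 2 * q ^ n = (1 + q) * (1 - q)⁻¹ ^ 3 := by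
  have hnq : ‖q‖ < 1 := by rwa [Real.norm_eq_abs, abs_of_nonneg h0]
  have s0 : Summable (fun n : ℕ => q ^ n) := summable_geometric_of_lt_one h0 h1
  have s1 : Summable (fun n : ℕ => (n : ℝ) * q ^ n) := by
    simpa using summable_pow_mul_geometric_of_norm_lt_one 1 hnq
  have s2 : Summable (fun n : ℕ => (n : ℝ) ^ 2 * q ^ n) :=
    summable_pow_mul_geometric_of_norm_lt_one 2 hnq
  have sB : Summable (fun n : ℕ => ((n : ℝ) + 1) ^ 2 * q ^ n) := by
    refine (s2.add ((s1.mul_left 2).add s0)).congr fun n => by ring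
  have hne : (1 : ℝ) - q ≠ 0 := by linarith
  set T := ∑' n : ℕ, ((n : ℝ) + 1) ^ 2 * q ^ n with hT
  have step1 : q * T = ∑' n : ℕ, (n : ℝ) ^ 2 * q ^ n := by
    rw [hT, ← tsum_mul_left]
    have h2 : ∑' n : ℕ, (n : ℝ) ^ 2 * q ^ n = ∑' n : ℕ, ((n + 1 : ℕ) : ℝ) ^ 2 * q ^ (n + 1) := by
      rw [Summable.tsum_eq_zero_add s2]; simp
    rw [h2]
    exact tsum_congr fun n => by push_cast; ring
  have step2 : T - q * T = 2 * (q / (1 - q) ^ 2) + (1 - q)⁻¹ := by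
    rw [step1, hT, ← Summable.tsum_sub sB s2]
    calc ∑' n : ℕ, (((n : ℝ) + 1) ^ 2 * q ^ n - (n : ℝ) ^ 2 * q ^ n)
        = ∑' n : ℕ, (2 * ((n : ℝ) * q ^ n) + q ^ n) := tsum_congr fun n => by ring
      _ = 2 * (∑' n : ℕ, (n : ℝ) * q ^ n) + ∑' n : ℕ, q ^ n := by
          rw [Summable.tsum_add (s1.mul_left 2) s0, tsum_mul_left]
      _ = _ := by rw [tsum_coe_mul_geometric_of_norm_lt_one hnq,
            tsum_geometric_of_lt_one h0 h1]
  have step3 : T * (1 - q) = 2 * (q / (1 - q) ^ 2) + (1 - q)⁻¹ := by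
    calc T * (1 - q) = T - q * T := by ring
      _ = _ := step2
  have hT' : T = (2 * (q / (1 - q) ^ 2) + (1 - q)⁻¹) / (1 - q) := by
    rw [eq_div_iff hne]; exact step3
  rw [hT']; field_simp; ring

variable {Ω : Type*} [MeasurableSpace Ω]

lemma geom_lint (μ : Measure Ω) {X : Ω → ℕ} {p : ℝ}
    (hX : Measurable X) (hg : IsGeom μ X p) (m : ℕ) :
    ∫⁻ ω, (X ω : ℝ≥0∞) ^ m ∂μ
      = ∑' j : ℕ, ((j : ℝ≥0∞) + 1) ^ m * ENNReal.ofReal ((1 - p) ^ j * p) := by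
  have h0 : μ {ω | X ω = 0} = 0 := by
    have h := hg.1
    rw [MeasureTheory.ae_iff] at h
    refine measure_mono_null ?_ h
    intro ω hω
    simp only [Set.mem_setOf_eq] at hω ⊢
    omega
  set ν := μ.map X with hνdef
  have hν : ∀ j : ℕ, ν {j} = μ {ω | X ω = j} := by
    intro j
    rw [Measure.map_apply hX (measurableSet_singleton j)]
    rfl
  have hmap : ∫⁻ ω, (X ω : ℝ≥0∞) ^ m ∂μ = ∫⁻ j, (j : ℝ≥0∞) ^ m ∂ν :=
    (lintegral_map (f := fun j : ℕ => (j : ℝ≥0∞) ^ m) measurable_from_top hX).symm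
  rw [hmap]
  rw [lintegral_countable']
  rw [tsum_eq_zero_add' (f := fun j : ℕ => (j : ℝ≥0∞) ^ m * ν {j}) ENNReal.summable]
  rw [hν 0, h0, mul_zero, zero_add]
  refine tsum_congr fun j => ?_
  rw [hν (j + 1), hg.2 (j + 1) (by omega)]
  have : (j + 1) - 1 = j := by omega
  rw [this]
  push_cast
  ring

lemma geom_props (μ : Measure Ω) [IsProbabilityMeasure μ] {X : Ω → ℕ} {p : ℝ}
    (hX : Measurable X) (hp : 0 < p) (hp1 : p ≤ 1) (hg : IsGeom μ X p) :
    MemLp (fun ω => (X ω : ℝ)) 2 μ ∧ (∫ ω, (X ω : ℝ) ∂μ) = p⁻¹ ∧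
      variance (fun ω => (X ω : ℝ)) μ ≤ p⁻¹ ^ 2 := by
  set q : ℝ := 1 - p with hq
  have hq0 : 0 ≤ q := by simp [hq]; linarith
  have hq1 : q < 1 := by simp [hq]; linarith
  have hp' : (1 : ℝ) - q = p := by simp [hq]
  have hnq : ‖q‖ < 1 := by rwa [Real.norm_eq_abs, abs_of_nonneg hq0]
  have s0 : Summable (fun n : ℕ => q ^ n) := summable_geometric_of_lt_one hq0 hq1
  have s1 : Summable (fun n : ℕ => (n : ℝ) * q ^ n) := by
    simpa using summable_pow_mul_geometric_of_norm_lt_one 1 hnq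
  have s2 : Summable (fun n : ℕ => (n : ℝ) ^ 2 * q ^ n) :=
    summable_pow_mul_geometric_of_norm_lt_one 2 hnq
  have sA : Summable (fun n : ℕ => ((n : ℝ) + 1) * q ^ n) :=
    (s1.add s0).congr fun n => by ring
  have sB : Summable (fun n : ℕ => ((n : ℝ) + 1) ^ 2 * q ^ n) :=
    (s2.add ((s1.mul_left 2).add s0)).congr fun n => by ring
  -- lintegral computations
  have key : ∀ m : ℕ, Summable (fun j : ℕ => ((j : ℝ) + 1) ^ m * q ^ j) →
      ∫⁻ ω, (X ω : ℝ≥0∞) ^ m ∂μ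
        = ENNReal.ofReal ((∑' j : ℕ, ((j : ℝ) + 1) ^ m * q ^ j) * p) := by
    intro m hs
    rw [geom_lint μ hX hg m]
    have hterm : ∀ j : ℕ, ((j : ℝ≥0∞) + 1) ^ m * ENNReal.ofReal ((1 - p) ^ j * p)
        = ENNReal.ofReal (((j : ℝ) + 1) ^ m * q ^ j * p) := by
      intro j
      have e1 : ((j : ℝ≥0∞) + 1) = ENNReal.ofReal ((j : ℝ) + 1) := by
        rw [ENNReal.ofReal_add (by positivity) zero_le_one, ENNReal.ofReal_natCast,
          ENNReal.ofReal_one]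
      rw [e1, ← ENNReal.ofReal_pow (by positivity), ← ENNReal.ofReal_mul (by positivity)]
      congr 1
      rw [← hq]
      ring
    rw [tsum_congr hterm,
      ← ENNReal.ofReal_tsum_of_nonneg
        (fun j => mul_nonneg (mul_nonneg (by positivity) (pow_nonneg hq0 j)) hp.le)
        (hs.mul_right p)]
    congr 1
    exact tsum_mul_right
  have L1 : ∫⁻ ω, (X ω : ℝ≥0∞) ∂μ = ENNReal.ofReal p⁻¹ := by
    have h := key 1 (by simpa using sA)
    simp only [pow_one] at h
    have e : ∫⁻ ω, (X ω : ℝ≥0∞) ∂μ = ∫⁻ ω, (X ω : ℝ≥0∞) ^ 1 ∂μ := by simp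
    rw [e]
    have h' := key 1 (by simpa using sA)
    rw [h']
    congr 1
    simp only [pow_one]
    rw [tsum_aux1 hq0 hq1, hp']
    field_simp
  have L2 : ∫⁻ ω, (X ω : ℝ≥0∞) ^ 2 ∂μ = ENNReal.ofReal ((1 + q) * (1 - q)⁻¹ ^ 3 * p) := by
    rw [key 2 sB, tsum_aux2 hq0 hq1]
  have hXm : Measurable (fun ω => (X ω : ℝ)) := measurable_from_top.comp hX
  -- MemLp
  have hint2 : Integrable (fun ω => (X ω : ℝ) ^ 2) μ := by
    refine ⟨(hXm.pow_const 2).aestronglyMeasurable, ?_⟩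
    rw [hasFiniteIntegral_iff_ofReal (ae_of_all μ fun ω => by positivity)]
    have e : ∀ ω, ENNReal.ofReal ((X ω : ℝ) ^ 2) = (X ω : ℝ≥0∞) ^ 2 := by
      intro ω
      rw [ENNReal.ofReal_pow (by positivity), ENNReal.ofReal_natCast]
    calc ∫⁻ ω, ENNReal.ofReal ((X ω : ℝ) ^ 2) ∂μ = ∫⁻ ω, (X ω : ℝ≥0∞) ^ 2 ∂μ :=
          lintegral_congr e
      _ < ⊤ := by rw [L2]; exact ENNReal.ofReal_lt_top
  have hmem : MemLp (fun ω => (X ω : ℝ)) 2 μ :=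
    (memLp_two_iff_integrable_sq hXm.aestronglyMeasurable).2 hint2
  -- mean
  have hmean : ∫ ω, (X ω : ℝ) ∂μ = p⁻¹ := by
    rw [integral_eq_lintegral_of_nonneg_ae (ae_of_all μ fun ω => by positivity)
      hXm.aestronglyMeasurable]
    have e : (fun ω => ENNReal.ofReal ((X ω : ℝ))) = fun ω => (X ω : ℝ≥0∞) :=
      funext fun ω => ENNReal.ofReal_natCast _
    rw [e, L1, ENNReal.toReal_ofReal (by positivity)]
  -- second moment
  have hval : (1 + q) * (1 - q)⁻¹ ^ 3 * p = (2 - p) / p ^ 2 := by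
    rw [hp', hq]
    field_simp
    ring
  have hsq : ∫ ω, (X ω : ℝ) ^ 2 ∂μ = (2 - p) / p ^ 2 := by
    rw [integral_eq_lintegral_of_nonneg_ae (ae_of_all μ fun ω => by positivity)
      (hXm.pow_const 2).aestronglyMeasurable]
    have e : (fun ω => ENNReal.ofReal ((X ω : ℝ) ^ 2)) = fun ω => (X ω : ℝ≥0∞) ^ 2 :=
      funext fun ω => by rw [ENNReal.ofReal_pow (by positivity), ENNReal.ofReal_natCast]
    rw [e, L2, hval, ENNReal.toReal_ofReal (div_nonneg (by linarith) (by positivity))]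
  refine ⟨hmem, hmean, ?_⟩
  rw [variance_eq_sub hmem]
  have e2 : μ[(fun ω => (X ω : ℝ)) ^ 2] = ∫ ω, (X ω : ℝ) ^ 2 ∂μ := rfl
  rw [e2, hsq, hmean]
  have hp2 : (0 : ℝ) < p ^ 2 := by positivity
  have h2 : (2 - p) / p ^ 2 - p⁻¹ ^ 2 = (1 - p) / p ^ 2 := by
    field_simp
    ring
  have h3 : p⁻¹ ^ 2 = 1 / p ^ 2 := by
    field_simp
  rw [h2, h3, div_le_div_iff₀ hp2 hp2]
  nlinarith

end aux

/-- Slow variation implies a polynomial lower bound on `γ`. -/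
lemma slow_var_bound (γ : ℕ → ℝ) (hpos : ∀ k, 0 < γ k) (hanti : Antitone γ)
    (hsv2 : Tendsto (fun x : ℝ => γ ⌈x * 2⌉₊ / γ ⌈x⌉₊) atTop (nhds 1))
    {ε : ℝ} (hε : 0 < ε) :
    ∃ N₀ : ℕ, 1 ≤ N₀ ∧ ∀ n : ℕ, N₀ ≤ n → γ N₀ * ((2 * n : ℕ) : ℝ) ^ (-ε) ≤ γ n := by
  set r : ℝ := (2 : ℝ) ^ (-ε) with hr
  have hr0 : 0 < r := Real.rpow_pos_of_pos two_pos _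
  have hr1 : r < 1 := Real.rpow_lt_one_of_one_lt_of_neg one_lt_two (by linarith)
  have hev : ∀ᶠ x : ℝ in atTop, r < γ ⌈x * 2⌉₊ / γ ⌈x⌉₊ :=
    hsv2.eventually (eventually_gt_nhds hr1)
  obtain ⟨x₀, hx₀⟩ := eventually_atTop.mp hev
  refine ⟨max 1 ⌈x₀⌉₊, le_max_left _ _, ?_⟩
  set N₀ : ℕ := max 1 ⌈x₀⌉₊ with hN₀
  have hN₀pos : 0 < N₀ := lt_of_lt_of_le one_pos (le_max_left _ _)
  -- doubling
  have hdouble : ∀ n : ℕ, N₀ ≤ n → r * γ n ≤ γ (2 * n) := by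
    intro n hn
    have hxn : x₀ ≤ (n : ℝ) := by
      calc x₀ ≤ (⌈x₀⌉₊ : ℝ) := Nat.le_ceil x₀
        _ ≤ (N₀ : ℝ) := by exact_mod_cast Nat.cast_le.mpr (le_max_right 1 ⌈x₀⌉₊)
        _ ≤ (n : ℝ) := by exact_mod_cast Nat.cast_le.mpr hn
    have h := hx₀ (n : ℝ) hxn
    have e1 : ⌈(n : ℝ)⌉₊ = n := Nat.ceil_natCast n
    have e2 : ⌈(n : ℝ) * 2⌉₊ = 2 * n := by
      rw [show (n : ℝ) * 2 = ((2 * n : ℕ) : ℝ) by push_cast; ring, Nat.ceil_natCast]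
    rw [e1, e2] at h
    have := (lt_div_iff₀ (hpos n)).mp h
    linarith
  -- iterate
  have hiter : ∀ j : ℕ, r ^ j * γ N₀ ≤ γ (2 ^ j * N₀) := by
    intro j
    induction j with
    | zero => simp
    | succ j ih =>
      have h1 : N₀ ≤ 2 ^ j * N₀ := Nat.le_mul_of_pos_left _ (Nat.pow_pos two_pos)
      have h2 := hdouble (2 ^ j * N₀) h1
      have h3 : r * (r ^ j * γ N₀) ≤ r * γ (2 ^ j * N₀) :=
        mul_le_mul_of_nonneg_left ih hr0.le
      have e : 2 * (2 ^ j * N₀) = 2 ^ (j + 1) * N₀ := by ring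
      rw [e] at h2
      calc r ^ (j + 1) * γ N₀ = r * (r ^ j * γ N₀) := by ring
        _ ≤ r * γ (2 ^ j * N₀) := h3
        _ ≤ γ (2 ^ (j + 1) * N₀) := h2
  intro n hn
  have hdiv1 : 1 ≤ n / N₀ := (Nat.one_le_div_iff hN₀pos).mpr hn
  set k : ℕ := Nat.log 2 (n / N₀) with hk
  have hup : n < 2 ^ (k + 1) * N₀ := by
    have h := Nat.lt_pow_succ_log_self (by norm_num : 1 < 2) (n / N₀)
    exact (Nat.div_lt_iff_lt_mul hN₀pos).mp h
  have hlow : 2 ^ (k + 1) ≤ 2 * n := by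
    have h1 : 2 ^ k ≤ n / N₀ := Nat.pow_log_le_self 2 (by omega)
    have h2 : 2 ^ k ≤ n := le_trans h1 (Nat.div_le_self n N₀)
    calc 2 ^ (k + 1) = 2 * 2 ^ k := by ring
      _ ≤ 2 * n := by omega
  have hmono : γ (2 ^ (k + 1) * N₀) ≤ γ n := hanti (le_of_lt hup)
  have hstep : r ^ (k + 1) * γ N₀ ≤ γ n := le_trans (hiter (k + 1)) hmono
  have hrpow : ((2 * n : ℕ) : ℝ) ^ (-ε) ≤ r ^ (k + 1) := by
    have e1 : r ^ (k + 1) = (((2 : ℝ) ^ (k + 1) : ℝ)) ^ (-ε) := by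
      rw [hr, ← Real.rpow_natCast ((2:ℝ) ^ (-ε)) (k+1), ← Real.rpow_mul (by norm_num : (0:ℝ) ≤ 2),
        mul_comm, Real.rpow_mul (by norm_num : (0:ℝ) ≤ 2), Real.rpow_natCast]
    rw [e1]
    refine Real.rpow_le_rpow_of_nonpos (by positivity) ?_ (by linarith)
    calc ((2:ℝ) ^ (k + 1)) = (((2 ^ (k + 1) : ℕ)) : ℝ) := by push_cast; ring
      _ ≤ ((2 * n : ℕ) : ℝ) := by exact_mod_cast Nat.cast_le.mpr hlow
  calc γ N₀ * ((2 * n : ℕ) : ℝ) ^ (-ε) ≤ γ N₀ * r ^ (k + 1) :=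
        mul_le_mul_of_nonneg_left hrpow (hpos N₀).le
    _ = r ^ (k + 1) * γ N₀ := by ring
    _ ≤ γ n := hstep

/-- Let `(γ_n)` be a positive, monotone decreasing sequence whose extension
`γ(x) = γ_⌈x⌉` is slowly varying at infinity, and let `S_n = ∑_{k=1}^n G_k` with the
`G_k` independent Geometric(`γ_k`) random variables. Then for every `α > 1`,
`P(|S_n − ∑_{k=1}^n 1/γ_k| > n^(α/2)) → 0` as `n → ∞`. -/
theorem stmt11 {Ω : Type*} [MeasurableSpace Ω] (μ : Measure Ω) [IsProbabilityMeasure μ]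
    (γ : ℕ → ℝ) (hpos : ∀ k, 0 < γ k) (hle : ∀ k, γ k ≤ 1) (hanti : Antitone γ)
    (hsv : ∀ t : ℝ, 0 < t →
      Tendsto (fun x : ℝ => γ ⌈x * t⌉₊ / γ ⌈x⌉₊) atTop (nhds 1))
    (G : ℕ → Ω → ℕ) (hmeas : ∀ k, Measurable (G k))
    (hindep : iIndepFun G μ)
    (hgeom : ∀ k, IsGeom μ (G k) (γ k)) :
    ∀ α : ℝ, 1 < α →
      Tendsto (fun n : ℕ =>
          μ {ω | (n : ℝ) ^ (α / 2) <
              |(∑ k ∈ Finset.Icc 1 n, (G k ω : ℝ)) - ∑ k ∈ Finset.Icc 1 n, (γ k)⁻¹|})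
        atTop (nhds 0) := by
  intro α hα
  set ε : ℝ := (α - 1) / 4 with hεdef
  have hεpos : 0 < ε := by rw [hεdef]; linarith
  obtain ⟨N₀, hN₀1, hbd⟩ := slow_var_bound γ hpos hanti (hsv 2 two_pos) hεpos
  set Y : ℕ → Ω → ℝ := fun k ω => (G k ω : ℝ) with hYdef
  have hY : ∀ k, MemLp (Y k) 2 μ ∧ (∫ ω, Y k ω ∂μ) = (γ k)⁻¹ ∧
      variance (Y k) μ ≤ (γ k)⁻¹ ^ 2 :=
    fun k => geom_props μ (hmeas k) (hpos k) (hle k) (hgeom k)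
  have hmem : ∀ k, MemLp (Y k) 2 μ := fun k => (hY k).1
  have hmeani : ∀ k, ∫ ω, Y k ω ∂μ = (γ k)⁻¹ := fun k => (hY k).2.1
  have hvari : ∀ k, variance (Y k) μ ≤ (γ k)⁻¹ ^ 2 := fun k => (hY k).2.2
  have hmemS : ∀ n : ℕ, MemLp (∑ k ∈ Finset.Icc 1 n, Y k) 2 μ :=
    fun n => memLp_finset_sum' _ (fun i _ => hmem i)
  have hsum_apply : ∀ (n : ℕ) (ω : Ω),
      (∑ k ∈ Finset.Icc 1 n, Y k) ω = ∑ k ∈ Finset.Icc 1 n, (G k ω : ℝ) := by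
    intro n ω
    simp [hYdef]
  have hmeanS : ∀ n : ℕ, μ[(∑ k ∈ Finset.Icc 1 n, Y k)] = ∑ k ∈ Finset.Icc 1 n, (γ k)⁻¹ := by
    intro n
    have e : (∑ k ∈ Finset.Icc 1 n, Y k) = fun ω => ∑ k ∈ Finset.Icc 1 n, Y k ω := by
      funext ω
      simp
    rw [e, integral_finset_sum _ (fun i _ => (hmem i).integrable one_le_two)]
    exact Finset.sum_congr rfl fun i _ => hmeani i
  have hpair : ∀ n : ℕ, Set.Pairwise ↑(Finset.Icc 1 n) fun i j => IndepFun (Y i) (Y j) μ := by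
    intro n i _ j _ hij
    exact (hindep.indepFun hij).comp measurable_from_top measurable_from_top
  have hvarS : ∀ n : ℕ, variance (∑ k ∈ Finset.Icc 1 n, Y k) μ ≤ (n : ℝ) * (γ n)⁻¹ ^ 2 := by
    intro n
    rw [IndepFun.variance_sum (fun i _ => hmem i) (hpair n)]
    calc ∑ i ∈ Finset.Icc 1 n, variance (Y i) μ
        ≤ ∑ i ∈ Finset.Icc 1 n, (γ n)⁻¹ ^ 2 := by
          refine Finset.sum_le_sum fun i hi => le_trans (hvari i) ?_
          have hin : i ≤ n := (Finset.mem_Icc.mp hi).2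
          have h1 : γ n ≤ γ i := hanti hin
          have h2 : (γ i)⁻¹ ≤ (γ n)⁻¹ := by
            apply inv_anti₀ (hpos n) h1
          exact pow_le_pow_left₀ (inv_nonneg.mpr (hpos i).le) h2 2
      _ = ((Finset.Icc 1 n).card : ℝ) * (γ n)⁻¹ ^ 2 := by
          rw [Finset.sum_const, nsmul_eq_mul]
      _ = (n : ℝ) * (γ n)⁻¹ ^ 2 := by
          rw [Nat.card_Icc]
          norm_num
  set K : ℝ := (γ N₀)⁻¹ ^ 2 * (2 : ℝ) ^ (2 * ε) with hK
  set B : ℕ → ℝ := fun n => K * (n : ℝ) ^ (1 + 2 * ε - α) with hB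
  -- main bound
  have hb : ∀ n : ℕ, max N₀ 1 ≤ n →
      μ {ω | (n : ℝ) ^ (α / 2) <
          |(∑ k ∈ Finset.Icc 1 n, (G k ω : ℝ)) - ∑ k ∈ Finset.Icc 1 n, (γ k)⁻¹|}
        ≤ ENNReal.ofReal (B n) := by
    intro n hn
    have hn1 : 1 ≤ n := le_trans (le_max_right _ _) hn
    have hnN₀ : N₀ ≤ n := le_trans (le_max_left _ _) hn
    have hn0 : (0 : ℝ) < n := by exact_mod_cast hn1
    have hc : (0 : ℝ) < (n : ℝ) ^ (α / 2) := Real.rpow_pos_of_pos hn0 _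
    have cheb := meas_ge_le_variance_div_sq (μ := μ) (hmemS n) hc
    have hsubset : {ω | (n : ℝ) ^ (α / 2) <
          |(∑ k ∈ Finset.Icc 1 n, (G k ω : ℝ)) - ∑ k ∈ Finset.Icc 1 n, (γ k)⁻¹|}
        ⊆ {ω | (n : ℝ) ^ (α / 2) ≤
            |(∑ k ∈ Finset.Icc 1 n, Y k) ω - μ[(∑ k ∈ Finset.Icc 1 n, Y k)]|} := by
      intro ω hω
      simp only [Set.mem_setOf_eq] at hω ⊢
      rw [hsum_apply n ω, hmeanS n]
      exact le_of_lt hω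
    refine le_trans (le_trans (measure_mono hsubset) cheb) (ENNReal.ofReal_le_ofReal ?_)
    -- real inequality
    have hc2 : ((n : ℝ) ^ (α / 2)) ^ 2 = (n : ℝ) ^ α := by
      rw [← Real.rpow_natCast ((n : ℝ) ^ (α / 2)) 2, ← Real.rpow_mul hn0.le]
      norm_num
    have hu : ((2 * n : ℕ) : ℝ) = 2 * (n : ℝ) := by push_cast; ring
    have hubound : (γ n)⁻¹ ≤ (γ N₀)⁻¹ * (2 * (n : ℝ)) ^ ε := by
      have h1 := hbd n hnN₀
      have hupos : (0 : ℝ) < ((2 * n : ℕ) : ℝ) ^ (-ε) :=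
        Real.rpow_pos_of_pos (by rw [hu]; linarith) _
      have h2 : (γ n)⁻¹ ≤ (γ N₀ * ((2 * n : ℕ) : ℝ) ^ (-ε))⁻¹ :=
        inv_anti₀ (mul_pos (hpos N₀) hupos) h1
      calc (γ n)⁻¹ ≤ (γ N₀ * ((2 * n : ℕ) : ℝ) ^ (-ε))⁻¹ := h2
        _ = (γ N₀)⁻¹ * (2 * (n : ℝ)) ^ ε := by
            rw [mul_inv, Real.rpow_neg (by rw [hu]; positivity), inv_inv, hu]
    have hsq : (γ n)⁻¹ ^ 2 ≤ (γ N₀)⁻¹ ^ 2 * ((2 : ℝ) ^ (2 * ε) * (n : ℝ) ^ (2 * ε)) := by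
      have h3 : (γ n)⁻¹ ^ 2 ≤ ((γ N₀)⁻¹ * (2 * (n : ℝ)) ^ ε) ^ 2 :=
        pow_le_pow_left₀ (inv_nonneg.mpr (hpos n).le) hubound 2
      have h4 : ((γ N₀)⁻¹ * (2 * (n : ℝ)) ^ ε) ^ 2
          = (γ N₀)⁻¹ ^ 2 * ((2 : ℝ) ^ (2 * ε) * (n : ℝ) ^ (2 * ε)) := by
        rw [mul_pow]
        congr 1
        rw [← Real.rpow_natCast ((2 * (n : ℝ)) ^ ε) 2, ← Real.rpow_mul (by positivity),
          Real.mul_rpow (by norm_num) (by positivity)]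
        norm_num [mul_comm]
      rw [h4] at h3
      exact h3
    calc variance (∑ k ∈ Finset.Icc 1 n, Y k) μ / ((n : ℝ) ^ (α / 2)) ^ 2
        = variance (∑ k ∈ Finset.Icc 1 n, Y k) μ / (n : ℝ) ^ α := by rw [hc2]
      _ ≤ ((n : ℝ) * ((γ N₀)⁻¹ ^ 2 * ((2 : ℝ) ^ (2 * ε) * (n : ℝ) ^ (2 * ε)))) / (n : ℝ) ^ α := by
          gcongr
          exact le_trans (hvarS n) (by
            have := mul_le_mul_of_nonneg_left hsq hn0.le
            linarith)
      _ = B n := by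
          simp only [hB, hK]
          have e1 : (n : ℝ) ^ (1 + 2 * ε - α) = (n : ℝ) * (n : ℝ) ^ (2 * ε) / (n : ℝ) ^ α := by
            rw [Real.rpow_sub hn0, Real.rpow_add hn0, Real.rpow_one]
          rw [e1]
          ring
  -- conclude by squeezing
  have h1 : Tendsto (fun n : ℕ => (n : ℝ) ^ (1 + 2 * ε - α)) atTop (nhds 0) := by
    have he : 1 + 2 * ε - α = -((α - 1) / 2) := by rw [hεdef]; ring
    simp only [he]
    exact (tendsto_rpow_neg_atTop (by linarith)).comp tendsto_natCast_atTop_atTop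
  have h2 : Tendsto (fun n : ℕ => B n) atTop (nhds 0) := by
    have := h1.const_mul K
    simpa using this
  have hBtend : Tendsto (fun n : ℕ => ENNReal.ofReal (B n)) atTop (nhds 0) := by
    have := ENNReal.tendsto_ofReal h2
    simpa using this
  refine tendsto_of_tendsto_of_tendsto_of_le_of_le' tendsto_const_nhds hBtend
    (Eventually.of_forall fun n => zero_le) ?_
  exact eventually_atTop.mpr ⟨max N₀ 1, hb⟩
end

section
/- Suppose a sequence of reals (P_n) satisfies P_n ≥ (1+ε) n ln n for all n > N, for some ε > 0 and integer N ≥ 3. Then there is a constant C = C(N, ε) such that for all n > N, ∑_{k=N}^{n} ∏_{j=N+1}^{k} (1 − 1/P_j)^{-1} ≤ C · n (ln n)^{1/(1+ε)}. In particular this sum is eventually smaller than (1+ε) n ln n. -/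
open Filter

lemma log3' {x : ℝ} (hx : 3 ≤ x) : 1 ≤ Real.log x := by
  rw [Real.le_log_iff_exp_le (by linarith)]
  have := Real.exp_one_lt_d9
  linarith

lemma log_diff' {a b : ℝ} (ha : 0 < a) (hab : a ≤ b) :
    (b - a) / b ≤ Real.log b - Real.log a := by
  have hb : 0 < b := lt_of_lt_of_le ha hab
  have h := Real.log_le_sub_one_of_pos (show 0 < a / b by positivity)
  rw [Real.log_div (ne_of_gt ha) (ne_of_gt hb)] at h
  have h2 : a / b = 1 - (b - a) / b := by field_simp; ring
  rw [h2] at h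
  linarith

lemma loglog_step' {n : ℝ} (hn : 3 ≤ n) :
    1 / ((n + 1) * Real.log (n + 1)) ≤
      Real.log (Real.log (n + 1)) - Real.log (Real.log n) := by
  have h0 : (0:ℝ) < n := by linarith
  have hl : 1 ≤ Real.log n := log3' hn
  have hl1 : 1 ≤ Real.log (n + 1) := log3' (by linarith)
  have hmono : Real.log n ≤ Real.log (n + 1) := Real.log_le_log h0 (by linarith)
  have A : 1 / (n + 1) ≤ Real.log (n + 1) - Real.log n := by
    have h := log_diff' h0 (by linarith : n ≤ n + 1)
    have e : (n + 1 - n) / (n + 1) = 1 / (n + 1) := by ring_nf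
    linarith [e ▸ h]
  have B := log_diff' (show (0:ℝ) < Real.log n by linarith) hmono
  have hlp : (0:ℝ) < Real.log (n + 1) := by linarith
  calc 1 / ((n + 1) * Real.log (n + 1)) = (1 / (n + 1)) / Real.log (n + 1) := by
        rw [div_div]
    _ ≤ (Real.log (n + 1) - Real.log n) / Real.log (n + 1) := by gcongr
    _ ≤ _ := B

lemma factor_le' {P : ℝ} (hP : 2 ≤ P) : (1 - 1 / P)⁻¹ ≤ Real.exp (1 / P + 2 / P ^ 2) := by
  have hP0 : 0 < P := by linarith
  have ha : 0 < 1 / P := by positivity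
  have ha2 : 1 / P ≤ 1 / 2 := by
    rw [div_le_div_iff₀ hP0 (by norm_num : (0:ℝ) < 2)]; linarith
  set a := 1 / P with haP
  have h1 : 0 < 1 - a := by linarith
  have hlog := Real.log_le_sub_one_of_pos (show 0 < (1 - a)⁻¹ by positivity)
  have e1 : (1 - a)⁻¹ - 1 = a / (1 - a) := by field_simp; ring
  have e2 : a / (1 - a) ≤ a + 2 * a ^ 2 := by
    rw [div_le_iff₀ h1]; nlinarith
  have hle : Real.log ((1 - a)⁻¹) ≤ a + 2 * a ^ 2 := by
    rw [e1] at hlog; linarith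
  calc (1 - a)⁻¹ = Real.exp (Real.log ((1 - a)⁻¹)) := (Real.exp_log (by positivity)).symm
    _ ≤ Real.exp (a + 2 * a ^ 2) := Real.exp_le_exp.mpr hle
    _ = Real.exp (1 / P + 2 / P ^ 2) := by
        congr 1
        rw [haP]; field_simp

open Filter

set_option maxHeartbeats 1600000 in
/-- Deterministic upper bound: if `P_n ≥ (1+ε) n ln n` for all `n > N` (with `ε > 0`,
`N ≥ 3`), then there is a constant `C = C(N,ε)` with
`∑_{k=N}^n ∏_{j=N+1}^k (1 − 1/P_j)⁻¹ ≤ C · n (ln n)^(1/(1+ε))` for all `n > N`;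
in particular this sum is eventually smaller than `(1+ε) n ln n`. -/
theorem stmt15 (P : ℕ → ℝ) (ε : ℝ) (hε : 0 < ε) (N : ℕ) (hN : 3 ≤ N)
    (hP : ∀ n : ℕ, N < n → (1 + ε) * n * Real.log n ≤ P n) :
    ∃ C : ℝ,
      (∀ n : ℕ, N < n →
        ∑ k ∈ Finset.Icc N n, ∏ j ∈ Finset.Icc (N + 1) k, (1 - 1 / P j)⁻¹
          ≤ C * n * (Real.log n) ^ (1 / (1 + ε))) ∧
      ∃ n1 : ℕ, ∀ n : ℕ, n1 < n →
        ∑ k ∈ Finset.Icc N n, ∏ j ∈ Finset.Icc (N + 1) k, (1 - 1 / P j)⁻¹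
          < (1 + ε) * n * Real.log n := by
  have hε1 : (0:ℝ) < 1 + ε := by linarith
  set c : ℝ := 1 / (1 + ε) with hc_def
  have hc : 0 < c := by positivity
  have hNR : (3:ℝ) ≤ (N:ℝ) := by exact_mod_cast hN
  -- basic facts about P j for j > N
  have hfacts : ∀ j : ℕ, N < j → (3:ℝ) ≤ (j:ℝ) ∧ 1 ≤ Real.log j ∧ (j:ℝ) ≤ P j ∧ 2 ≤ P j := by
    intro j hj
    have hj3 : (3:ℝ) ≤ (j:ℝ) := by
      have : 3 ≤ j := by omega
      exact_mod_cast this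
    have hlj : 1 ≤ Real.log j := log3' hj3
    have hPj := hP j hj
    have ha : (1:ℝ) ≤ (1 + ε) * Real.log j := by nlinarith
    have hb := mul_le_mul_of_nonneg_left ha (by linarith : (0:ℝ) ≤ (j:ℝ))
    have hc' : (1 + ε) * (j:ℝ) * Real.log j = (j:ℝ) * ((1 + ε) * Real.log j) := by ring
    have hjP : (j:ℝ) ≤ P j := by rw [hc'] at hPj; linarith
    exact ⟨hj3, hlj, hjP, by linarith⟩
  -- telescoping bound on the sum of exponents
  have key : ∀ n : ℕ, N ≤ n →
      ∑ j ∈ Finset.Icc (N + 1) n, (1 / P j + 2 / (P j) ^ 2)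
        ≤ (c * Real.log (Real.log n) - 2 / n) - (c * Real.log (Real.log N) - 2 / N) := by
    intro n hn
    induction n, hn using Nat.le_induction with
    | base =>
        rw [Finset.Icc_eq_empty (by omega)]
        simp
    | succ n hn ih =>
        rw [Finset.sum_Icc_succ_top (by omega : N + 1 ≤ n + 1)]
        have hn3 : (3:ℝ) ≤ (n:ℝ) := by
          have : 3 ≤ n := by omega
          exact_mod_cast this
        obtain ⟨hj3, hlj, hjP, h2P⟩ := hfacts (n + 1) (by omega)
        have hcast : ((n + 1 : ℕ) : ℝ) = (n:ℝ) + 1 := by push_cast; ring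
        rw [hcast] at hj3 hlj hjP
        push_cast
        have hP1 := hP (n + 1) (by omega)
        rw [hcast] at hP1
        have hstep := loglog_step' hn3
        have hposl : (0:ℝ) < ((n:ℝ) + 1) * Real.log ((n:ℝ) + 1) := by nlinarith
        have hP0 : (0:ℝ) < P (n + 1) := by linarith
        -- 1/P(n+1) ≤ c / ((n+1) log(n+1))
        have h1 : 1 / P (n + 1) ≤ c * (1 / (((n:ℝ) + 1) * Real.log ((n:ℝ) + 1))) := by
          rw [hc_def]
          rw [div_mul_div_comm, one_mul]
          apply one_div_le_one_div_of_le (by positivity)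
          nlinarith [hP1]
        have h2 : 2 / (P (n + 1)) ^ 2 ≤ 2 / ((n:ℝ) + 1) ^ 2 := by
          rw [div_le_div_iff₀ (by positivity) (by positivity)]
          nlinarith [hjP, hj3]
        have h3 : 2 / ((n:ℝ) + 1) ^ 2 ≤ 2 / (n:ℝ) - 2 / ((n:ℝ) + 1) := by
          have he : 2 / (n:ℝ) - 2 / ((n:ℝ) + 1) = 2 / ((n:ℝ) * ((n:ℝ) + 1)) := by
            field_simp
            ring
          rw [he]
          rw [div_le_div_iff₀ (by positivity) (by positivity)]
          nlinarith
        have h4 : c * (1 / (((n:ℝ) + 1) * Real.log ((n:ℝ) + 1)))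
            ≤ c * (Real.log (Real.log ((n:ℝ) + 1)) - Real.log (Real.log (n:ℝ))) :=
          mul_le_mul_of_nonneg_left hstep hc.le
        linarith
  -- product bound
  have prodb : ∀ n : ℕ, N ≤ n →
      (∏ j ∈ Finset.Icc (N + 1) n, (1 - 1 / P j)⁻¹) ≤ Real.exp 1 * (Real.log n) ^ c := by
    intro n hn
    have hn3 : (3:ℝ) ≤ (n:ℝ) := le_trans hNR (by exact_mod_cast hn)
    have hln : 1 ≤ Real.log n := log3' hn3
    have hlN : 1 ≤ Real.log N := log3' hNR
    have step1 : (∏ j ∈ Finset.Icc (N + 1) n, (1 - 1 / P j)⁻¹)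
        ≤ ∏ j ∈ Finset.Icc (N + 1) n, Real.exp (1 / P j + 2 / (P j) ^ 2) := by
      apply Finset.prod_le_prod
      · intro j hj
        obtain ⟨_, _, _, h2P⟩ := hfacts j (by simp [Finset.mem_Icc] at hj; omega)
        have : (0:ℝ) < 1 - 1 / P j := by
          have hP0 : (0:ℝ) < P j := by linarith
          have : 1 / P j ≤ 1 / 2 := by
            rw [div_le_div_iff₀ hP0 (by norm_num : (0:ℝ) < 2)]; linarith
          linarith
        positivity
      · intro j hj
        exact factor_le' (hfacts j (by simp [Finset.mem_Icc] at hj; omega)).2.2.2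
    rw [← Real.exp_sum] at step1
    have step2 := key n hn
    have step3 : ∑ j ∈ Finset.Icc (N + 1) n, (1 / P j + 2 / (P j) ^ 2)
        ≤ c * Real.log (Real.log n) + 1 := by
      have hA : (0:ℝ) ≤ 2 / (n:ℝ) := by positivity
      have hB : (0:ℝ) ≤ Real.log (Real.log N) := Real.log_nonneg hlN
      have hD : 2 / (N:ℝ) ≤ 1 := by
        rw [div_le_one (by linarith)]; linarith
      nlinarith [mul_nonneg hc.le hB]
    have step4 : Real.exp (∑ j ∈ Finset.Icc (N + 1) n, (1 / P j + 2 / (P j) ^ 2))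
        ≤ Real.exp (c * Real.log (Real.log n) + 1) := Real.exp_le_exp.mpr step3
    have step5 : Real.exp (c * Real.log (Real.log n) + 1) = Real.exp 1 * (Real.log n) ^ c := by
      rw [Real.exp_add, Real.rpow_def_of_pos (by linarith : (0:ℝ) < Real.log n)]
      ring
    linarith
  -- the uniform bound, with C = exp 1
  have main : ∀ n : ℕ, N < n →
      ∑ k ∈ Finset.Icc N n, ∏ j ∈ Finset.Icc (N + 1) k, (1 - 1 / P j)⁻¹
        ≤ Real.exp 1 * n * (Real.log n) ^ c := by
    intro n hn
    have hn3 : (3:ℝ) ≤ (n:ℝ) := le_trans hNR (by exact_mod_cast hn.le)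
    have hln : 1 ≤ Real.log n := log3' hn3
    have hterm : ∀ k ∈ Finset.Icc N n,
        (∏ j ∈ Finset.Icc (N + 1) k, (1 - 1 / P j)⁻¹) ≤ Real.exp 1 * (Real.log n) ^ c := by
      intro k hk
      rw [Finset.mem_Icc] at hk
      have hk3 : (3:ℝ) ≤ (k:ℝ) := le_trans hNR (by exact_mod_cast hk.1)
      have hlk : 1 ≤ Real.log k := log3' hk3
      calc (∏ j ∈ Finset.Icc (N + 1) k, (1 - 1 / P j)⁻¹)
          ≤ Real.exp 1 * (Real.log k) ^ c := prodb k hk.1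
        _ ≤ Real.exp 1 * (Real.log n) ^ c := by
            apply mul_le_mul_of_nonneg_left _ (Real.exp_pos 1).le
            exact Real.rpow_le_rpow (by linarith)
              (Real.log_le_log (by linarith) (by exact_mod_cast hk.2)) hc.le
    calc ∑ k ∈ Finset.Icc N n, ∏ j ∈ Finset.Icc (N + 1) k, (1 - 1 / P j)⁻¹
        ≤ (Finset.Icc N n).card • (Real.exp 1 * (Real.log n) ^ c) :=
          Finset.sum_le_card_nsmul _ _ _ hterm
      _ = ((Finset.Icc N n).card : ℝ) * (Real.exp 1 * (Real.log n) ^ c) := by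
          rw [nsmul_eq_mul]
      _ ≤ (n:ℝ) * (Real.exp 1 * (Real.log n) ^ c) := by
          apply mul_le_mul_of_nonneg_right _ (by positivity)
          rw [Nat.card_Icc]
          have : n + 1 - N ≤ n := by omega
          exact_mod_cast this
      _ = Real.exp 1 * n * (Real.log n) ^ c := by ring
  refine ⟨Real.exp 1, main, ?_⟩
  -- eventual comparison
  have htend : Tendsto (fun n : ℕ => (Real.log n) ^ (ε / (1 + ε))) atTop atTop := by
    have h1 : Tendsto (fun x : ℝ => x ^ (ε / (1 + ε))) atTop atTop :=
      tendsto_rpow_atTop (by positivity)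
    exact h1.comp (Real.tendsto_log_atTop.comp tendsto_natCast_atTop_atTop)
  have hev : ∀ᶠ n : ℕ in atTop,
      Real.exp 1 / (1 + ε) < (Real.log n) ^ (ε / (1 + ε)) :=
    htend.eventually_gt_atTop _
  have hev2 : ∀ᶠ n : ℕ in atTop, N < n := eventually_gt_atTop N
  obtain ⟨n1, hn1⟩ := (hev.and hev2).exists_forall_of_atTop
  refine ⟨n1, fun n hn => ?_⟩
  obtain ⟨hgt, hNn⟩ := hn1 n hn.le
  have hn3 : (3:ℝ) ≤ (n:ℝ) := le_trans hNR (by exact_mod_cast hNn.le)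
  have hln : 1 ≤ Real.log n := log3' hn3
  have hln0 : (0:ℝ) < Real.log n := by linarith
  have hlc : (0:ℝ) < (Real.log n) ^ c := Real.rpow_pos_of_pos hln0 c
  have key2 : (Real.log n) ^ (ε / (1 + ε)) * (Real.log n) ^ c = Real.log n := by
    rw [← Real.rpow_add hln0]
    have : ε / (1 + ε) + c = 1 := by
      rw [hc_def, ← add_div]
      field_simp
      ring
    rw [this, Real.rpow_one]
  have hmul := mul_lt_mul_of_pos_right hgt hlc
  rw [key2] at hmul
  -- hmul : exp 1 / (1+ε) * (log n)^c < log n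
  have hfin : Real.exp 1 * (Real.log n) ^ c < (1 + ε) * Real.log n := by
    have hd : (1 + ε) * (Real.exp 1 / (1 + ε)) = Real.exp 1 := by
      rw [← mul_div_assoc, mul_comm, mul_div_assoc, div_self (ne_of_gt hε1), mul_one]
    calc Real.exp 1 * (Real.log n) ^ c
        = (1 + ε) * (Real.exp 1 / (1 + ε)) * (Real.log n) ^ c := by rw [hd]
      _ = (1 + ε) * (Real.exp 1 / (1 + ε) * (Real.log n) ^ c) := by ring
      _ < (1 + ε) * Real.log n := mul_lt_mul_of_pos_left hmul hε1
  have hnpos : (0:ℝ) < (n:ℝ) := by linarith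
  calc ∑ k ∈ Finset.Icc N n, ∏ j ∈ Finset.Icc (N + 1) k, (1 - 1 / P j)⁻¹
      ≤ Real.exp 1 * n * (Real.log n) ^ c := main n hNn
    _ = (n:ℝ) * (Real.exp 1 * (Real.log n) ^ c) := by ring
    _ < (n:ℝ) * ((1 + ε) * Real.log n) := mul_lt_mul_of_pos_left hfin hnpos
    _ = (1 + ε) * n * Real.log n := by ring
end

section
/- Suppose a sequence of reals (P_n) with P_n ≥ 2 satisfies P_n ≤ (1−ε) n ln n for all n > N, for some ε ∈ (0,1) and N large enough (so that 1 − 1/P_n ≤ exp(−(1−ε/2)^{-1}/((1−ε) n ln n)) type bounds hold). Then there is a constant c = c(N, ε) > 0 such that for all n > N, ∑_{k=N}^{n} ∏_{j=N+1}^{k} (1 − 1/P_j)^{-1} ≥ c · n (ln n)^{1/(1−ε/2)}. In particular this sum eventually exceeds (1−ε) n ln n. -/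
open Filter

private lemma logstep (x : ℝ) (hx : 3 ≤ x) :
    Real.log (Real.log (x+1)) - Real.log (Real.log x) ≤ 1/(x * Real.log x) := by
  have hx0 : (0:ℝ) < x := by linarith
  have hlx : 1 < Real.log x := by
    rw [Real.lt_log_iff_exp_lt hx0]
    calc Real.exp 1 < 2.7182818286 := Real.exp_one_lt_d9
    _ ≤ x := by linarith
  have hlx0 : 0 < Real.log x := by linarith
  have h1 : Real.log (x+1) ≤ Real.log x + 1/x := by
    have hxx : x + 1 = x * (1 + 1/x) := by field_simp
    rw [hxx, Real.log_mul (by positivity) (by positivity)]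
    have := Real.log_le_sub_one_of_pos (show (0:ℝ) < 1 + 1/x by positivity)
    have h1x : (0:ℝ) < 1/x := by positivity
    linarith
  have h2 : Real.log (Real.log (x+1)) ≤ Real.log (Real.log x + 1/x) :=
    Real.log_le_log (Real.log_pos (by linarith)) h1
  have h3 : Real.log x + 1/x = Real.log x * (1 + 1/(x * Real.log x)) := by
    field_simp
  have h4 : Real.log (Real.log x + 1/x)
      = Real.log (Real.log x) + Real.log (1 + 1/(x * Real.log x)) := by
    rw [h3, Real.log_mul (by positivity) (by positivity)]
  have h5 : Real.log (1 + 1/(x*Real.log x)) ≤ 1/(x*Real.log x) := by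
    have := Real.log_le_sub_one_of_pos (show (0:ℝ) < 1 + 1/(x*Real.log x) by positivity)
    linarith
  linarith

set_option maxHeartbeats 1000000 in
/-- Deterministic lower bound: if `P_n ≥ 2` and `P_n ≤ (1−ε) n ln n` for all `n > N`
(with `ε ∈ (0,1)` and `N` large enough so that the bound
`1 − 1/P_n ≤ exp(−(1−ε/2)⁻¹ / ((1−ε) n ln n))` holds for `n > N`), then there is a
constant `c = c(N,ε) > 0` with
`∑_{k=N}^n ∏_{j=N+1}^k (1 − 1/P_j)⁻¹ ≥ c · n (ln n)^(1/(1−ε/2))` for all `n > N`;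
in particular this sum eventually exceeds `(1−ε) n ln n`. -/
theorem stmt16 (P : ℕ → ℝ) (hP2 : ∀ n, 2 ≤ P n) (ε : ℝ) (hε0 : 0 < ε) (hε1 : ε < 1)
    (N : ℕ) (hN : 3 ≤ N)
    (hP : ∀ n : ℕ, N < n → P n ≤ (1 - ε) * n * Real.log n)
    (hNlarge : ∀ n : ℕ, N < n →
      1 - 1 / P n ≤ Real.exp (-((1 - ε / 2)⁻¹ / ((1 - ε) * n * Real.log n)))) :
    ∃ c : ℝ, 0 < c ∧
      (∀ n : ℕ, N < n →
        c * n * (Real.log n) ^ (1 / (1 - ε / 2))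
          ≤ ∑ k ∈ Finset.Icc N n, ∏ j ∈ Finset.Icc (N + 1) k, (1 - 1 / P j)⁻¹) ∧
      ∃ n1 : ℕ, ∀ n : ℕ, n1 < n →
        (1 - ε) * n * Real.log n
          < ∑ k ∈ Finset.Icc N n, ∏ j ∈ Finset.Icc (N + 1) k, (1 - 1 / P j)⁻¹ := by
  have hε2 : (0:ℝ) < 1 - ε/2 := by linarith
  have hε1' : (0:ℝ) < 1 - ε := by linarith
  set γ : ℝ := 1/(1 - ε/2) with hγdef
  have hγ1 : 1 < γ := by
    rw [hγdef, lt_div_iff₀ hε2]; linarith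
  have hγ0 : 0 < γ := by linarith
  set b : ℝ := γ / (1 - ε) with hbdef
  have hγb : γ ≤ b := by
    rw [hbdef, le_div_iff₀ hε1']; nlinarith
  have hb1 : 1 < b := lt_of_lt_of_le hγ1 hγb
  have hb0 : 0 < b := by linarith
  -- positivity of each factor
  have hfacpos : ∀ j : ℕ, (0:ℝ) < (1 - 1/P j)⁻¹ := by
    intro j
    have hPj := hP2 j
    have : 1/P j ≤ 1/2 := by
      apply one_div_le_one_div_of_le <;> linarith
    have : (0:ℝ) < 1 - 1/P j := by linarith
    positivity
  have htermpos : ∀ k : ℕ, (0:ℝ) < ∏ j ∈ Finset.Icc (N+1) k, (1 - 1/P j)⁻¹ :=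
    fun k => Finset.prod_pos (fun j _ => hfacpos j)
  -- per-factor bound
  have hfac : ∀ j : ℕ, N < j → Real.exp (b / ((j:ℝ) * Real.log j)) ≤ (1 - 1/P j)⁻¹ := by
    intro j hj
    have hPj := hP2 j
    have hj4 : (4:ℝ) ≤ (j:ℝ) := by exact_mod_cast by omega
    have hlj : 0 < Real.log j := Real.log_pos (by linarith)
    have h1 : (0:ℝ) < 1 - 1/P j := by
      have : 1/P j ≤ 1/2 := by
        apply one_div_le_one_div_of_le <;> linarith
      linarith
    have h2 := hNlarge j hj
    have heq : (1 - ε/2)⁻¹ / ((1 - ε) * (j:ℝ) * Real.log j) = b / ((j:ℝ) * Real.log j) := by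
      have hne1 : (1 - ε/2) ≠ 0 := ne_of_gt hε2
      have hne2 : (1 - ε) ≠ 0 := ne_of_gt hε1'
      have hne3 : (j:ℝ) ≠ 0 := by positivity
      have hne4 : Real.log (j:ℝ) ≠ 0 := ne_of_gt hlj
      rw [hbdef, hγdef]
      field_simp
    rw [heq] at h2
    calc Real.exp (b / ((j:ℝ)*Real.log j))
        = (Real.exp (-(b/((j:ℝ)*Real.log j))))⁻¹ := by rw [Real.exp_neg, inv_inv]
    _ ≤ (1 - 1/P j)⁻¹ := inv_anti₀ h1 h2
  -- product bound
  have hprod : ∀ k : ℕ,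
      Real.exp (b * ∑ j ∈ Finset.Icc (N+1) k, 1/((j:ℝ) * Real.log j))
        ≤ ∏ j ∈ Finset.Icc (N+1) k, (1 - 1/P j)⁻¹ := by
    intro k
    rw [Finset.mul_sum, Real.exp_sum]
    apply Finset.prod_le_prod
    · intro j _; positivity
    · intro j hj
      have hjN : N < j := by
        simp only [Finset.mem_Icc] at hj; omega
      rw [mul_one_div]
      exact hfac j hjN
  -- sum vs log log
  have hsum : ∀ k : ℕ, N ≤ k →
      Real.log (Real.log ((k:ℝ)+1)) - Real.log (Real.log ((N:ℝ)+1))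
        ≤ ∑ j ∈ Finset.Icc (N+1) k, 1/((j:ℝ) * Real.log j) := by
    intro k hk
    induction k, hk using Nat.le_induction with
    | base =>
      rw [Finset.Icc_eq_empty (by omega), Finset.sum_empty]
      simp
    | succ k hk ih =>
      rw [Finset.sum_Icc_succ_top (by omega)]
      have h3k : (3:ℝ) ≤ (k:ℝ)+1 := by
        have : (3:ℝ) ≤ (k:ℝ) := by exact_mod_cast by omega
        linarith
      have hst := logstep ((k:ℝ)+1) h3k
      push_cast
      push_cast at ih
      linarith
  set L : ℝ := Real.log ((N:ℝ)+1) with hLdef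
  have hL1 : 1 < L := by
    rw [hLdef, Real.lt_log_iff_exp_lt (by positivity)]
    have hN4 : (4:ℝ) ≤ (N:ℝ)+1 := by
      have : (3:ℝ) ≤ (N:ℝ) := by exact_mod_cast hN
      linarith
    calc Real.exp 1 < 2.7182818286 := Real.exp_one_lt_d9
    _ ≤ (N:ℝ)+1 := by linarith
  have hL0 : 0 < L := by linarith
  -- term bound
  have hterm : ∀ k : ℕ, N ≤ k →
      (Real.log ((k:ℝ)+1)/L) ^ b ≤ ∏ j ∈ Finset.Icc (N+1) k, (1-1/P j)⁻¹ := by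
    intro k hk
    have hk3 : (3:ℝ) ≤ (k:ℝ) := by exact_mod_cast by omega
    have hlk : 0 < Real.log ((k:ℝ)+1) := Real.log_pos (by linarith)
    have hkey : (Real.log ((k:ℝ)+1)/L) ^ b
        = Real.exp (b * (Real.log (Real.log ((k:ℝ)+1)) - Real.log L)) := by
      rw [← Real.log_div (ne_of_gt hlk) (ne_of_gt hL0)]
      rw [Real.rpow_def_of_pos (div_pos hlk hL0), mul_comm]
    rw [hkey]
    refine le_trans (Real.exp_le_exp.mpr ?_) (hprod k)
    exact mul_le_mul_of_nonneg_left (hsum k hk) (le_of_lt hb0)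
  -- constants
  set M : ℕ := max (2*N) 8 with hMdef
  have hM8 : 8 ≤ M := le_max_right _ _
  have hMR : (8:ℝ) ≤ (M:ℝ) := by exact_mod_cast hM8
  have hlM : 0 < Real.log M := Real.log_pos (by linarith)
  set c₁ : ℝ := 1/(2 * 2^γ * L^b) with hc₁def
  set c₂ : ℝ := 1/((M:ℝ) * (Real.log M)^γ) with hc₂def
  have hc₁0 : 0 < c₁ := by rw [hc₁def]; positivity
  have hc₂0 : 0 < c₂ := by rw [hc₂def]; positivity
  set c : ℝ := min c₁ c₂ with hcdef
  have hc0 : 0 < c := lt_min hc₁0 hc₂0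
  -- main bound
  have main : ∀ n : ℕ, N < n →
      c * n * (Real.log n) ^ γ
        ≤ ∑ k ∈ Finset.Icc N n, ∏ j ∈ Finset.Icc (N + 1) k, (1 - 1 / P j)⁻¹ := by
    intro n hn
    have hn4 : (4:ℝ) ≤ (n:ℝ) := by exact_mod_cast by omega
    have hln : 0 < Real.log n := Real.log_pos (by linarith)
    by_cases hcase : n ≤ M
    · -- small n : sum ≥ 1 ≥ c n (log n)^γ
      have hone : (1:ℝ) ≤ ∑ k ∈ Finset.Icc N n, ∏ j ∈ Finset.Icc (N + 1) k, (1 - 1/P j)⁻¹ := by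
        have hmem : N ∈ Finset.Icc N n := by
          simp only [Finset.mem_Icc]; omega
        calc (1:ℝ) = ∏ j ∈ Finset.Icc (N+1) N, (1 - 1/P j)⁻¹ := by
              rw [Finset.Icc_eq_empty (show ¬(N+1 ≤ N) by omega), Finset.prod_empty]
        _ ≤ _ := Finset.single_le_sum
          (f := fun k => ∏ j ∈ Finset.Icc (N + 1) k, (1 - 1/P j)⁻¹)
          (fun k _ => le_of_lt (htermpos k)) hmem
      have hnM : (n:ℝ) ≤ (M:ℝ) := by exact_mod_cast hcase
      have hlnM : Real.log n ≤ Real.log M := Real.log_le_log (by linarith) hnM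
      have h1 : c * n * (Real.log n) ^ γ ≤ c₂ * M * (Real.log M)^γ := by
        have h2 : (Real.log n)^γ ≤ (Real.log M)^γ :=
          Real.rpow_le_rpow (le_of_lt hln) hlnM (le_of_lt hγ0)
        have hc2 : c ≤ c₂ := min_le_right _ _
        gcongr <;> first
          | positivity
          | assumption
          | linarith
      have h3 : c₂ * M * (Real.log M)^γ = 1 := by
        have hne1 : (M:ℝ) ≠ 0 := by positivity
        have hne2 : (Real.log M)^γ ≠ 0 := by positivity
        rw [hc₂def]
        field_simp
      linarith
    · -- large n
      push_neg at hcase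
      have hn2N : 2*N < n := lt_of_le_of_lt (le_max_left _ _) hcase
      have hn9 : 9 ≤ n := by omega
      set m : ℕ := n/2 + 1 with hmdef
      have hmN : N + 1 ≤ m := by omega
      have hmn : m ≤ n := by omega
      have hsub : Finset.Icc m n ⊆ Finset.Icc N n := by
        intro x hx
        simp only [Finset.mem_Icc] at hx ⊢
        omega
      have hstep1 : ∑ k ∈ Finset.Icc m n, ∏ j ∈ Finset.Icc (N + 1) k, (1 - 1/P j)⁻¹
          ≤ ∑ k ∈ Finset.Icc N n, ∏ j ∈ Finset.Icc (N + 1) k, (1 - 1/P j)⁻¹ :=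
        Finset.sum_le_sum_of_subset_of_nonneg hsub (fun k _ _ => le_of_lt (htermpos k))
      -- each term in Icc m n is ≥ (log n)^γ / (2^γ * L^b)
      have hlow : ∀ k ∈ Finset.Icc m n,
          (Real.log n)^γ / (2^γ * L^b) ≤ ∏ j ∈ Finset.Icc (N + 1) k, (1 - 1/P j)⁻¹ := by
        intro k hk
        simp only [Finset.mem_Icc] at hk
        have hkN : N ≤ k := by omega
        refine le_trans ?_ (hterm k hkN)
        -- log n / 2 ≤ log (k+1)
        have hksq : (n:ℝ) ≤ ((k:ℝ)+1)^2 := by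
          have h2k : n ≤ 2*(k+1) := by omega
          have h2kR : (n:ℝ) ≤ 2*((k:ℝ)+1) := by exact_mod_cast h2k
          have hk4 : (4:ℝ) ≤ (k:ℝ)+1 := by
            have : 4 ≤ k + 1 := by omega
            exact_mod_cast this
          nlinarith
        have hlk : Real.log n / 2 ≤ Real.log ((k:ℝ)+1) := by
          have h1 : Real.log n ≤ Real.log (((k:ℝ)+1)^2) :=
            Real.log_le_log (by linarith) hksq
          rw [Real.log_pow] at h1
          push_cast at h1
          linarith
        -- (log n / (2 L))^b bound chain
        have hln2 : 1 ≤ Real.log n / 2 := by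
          have h9 : (9:ℝ) ≤ (n:ℝ) := by exact_mod_cast hn9
          have he1 : Real.exp 1 < 2.7182818286 := Real.exp_one_lt_d9
          have he2 : Real.exp 2 = Real.exp 1 * Real.exp 1 := by
            rw [← Real.exp_add]; norm_num
          have he : Real.exp 2 ≤ (n:ℝ) := by nlinarith [Real.exp_pos 1]
          have h4 := Real.log_le_log (Real.exp_pos 2) he
          rw [Real.log_exp] at h4
          linarith
        have e1 : ((Real.log n/2)/L)^b ≤ (Real.log ((k:ℝ)+1)/L)^b := by
          gcongr <;> first
            | positivity
            | exact hlk
        have e2 : ((Real.log n/2)/L)^b = (Real.log n/2)^b / L^b :=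
          Real.div_rpow (show (0:ℝ) ≤ Real.log n/2 by linarith) (le_of_lt hL0) b
        have e3 : (Real.log n/2)^γ ≤ (Real.log n/2)^b :=
          Real.rpow_le_rpow_of_exponent_le hln2 hγb
        have e4 : (Real.log n/2)^γ = (Real.log n)^γ / 2^γ :=
          Real.div_rpow (show (0:ℝ) ≤ Real.log n by linarith) (by norm_num) γ
        have hLb : (0:ℝ) < L^b := by positivity
        rw [e2] at e1
        rw [e4] at e3
        calc (Real.log n)^γ / (2^γ * L^b) = ((Real.log n)^γ / 2^γ) / L^b := by
              rw [div_div]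
        _ ≤ (Real.log n/2)^b / L^b := by gcongr
        _ ≤ (Real.log ((k:ℝ)+1)/L)^b := e1
      have hcard : ((Finset.Icc m n).card : ℝ) ≥ (n:ℝ)/2 := by
        rw [Nat.card_Icc]
        have : n ≤ 2 * (n + 1 - m) := by omega
        have := (by exact_mod_cast this : (n:ℝ) ≤ 2 * ((n + 1 - m : ℕ):ℝ))
        linarith
      have hsum2 : ((Finset.Icc m n).card : ℝ) * ((Real.log n)^γ / (2^γ * L^b))
          ≤ ∑ k ∈ Finset.Icc m n, ∏ j ∈ Finset.Icc (N + 1) k, (1 - 1/P j)⁻¹ := by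
        calc ((Finset.Icc m n).card : ℝ) * ((Real.log n)^γ / (2^γ * L^b))
            = ∑ _k ∈ Finset.Icc m n, (Real.log n)^γ / (2^γ * L^b) := by
              rw [Finset.sum_const, nsmul_eq_mul]
        _ ≤ _ := Finset.sum_le_sum hlow
      have hfinal : c * n * (Real.log n) ^ γ
          ≤ ((Finset.Icc m n).card : ℝ) * ((Real.log n)^γ / (2^γ * L^b)) := by
        have hc1 : c ≤ c₁ := min_le_left _ _
        have hpos : (0:ℝ) < (Real.log n)^γ / (2^γ * L^b) := by positivity
        have h1 : c * n * (Real.log n)^γ ≤ c₁ * n * (Real.log n)^γ := by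
          have : (0:ℝ) ≤ (n:ℝ) * (Real.log n)^γ := by positivity
          nlinarith
        have h2 : c₁ * n * (Real.log n)^γ = ((n:ℝ)/2) * ((Real.log n)^γ / (2^γ * L^b)) := by
          have hne1 : (2:ℝ)^γ ≠ 0 := by positivity
          have hne2 : L^b ≠ 0 := by positivity
          rw [hc₁def]
          field_simp
        rw [h2] at h1
        refine h1.trans ?_
        exact mul_le_mul_of_nonneg_right hcard (le_of_lt hpos)
      exact hfinal.trans (hsum2.trans hstep1)
  refine ⟨c, hc0, main, ?_⟩
  -- eventual comparison
  have htend : Tendsto (fun n : ℕ => c * (Real.log n)^(γ-1)) atTop atTop := by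
    apply Tendsto.const_mul_atTop hc0
    apply (tendsto_rpow_atTop (by linarith : 0 < γ - 1)).comp
    exact Real.tendsto_log_atTop.comp tendsto_natCast_atTop_atTop
  have hev := htend.eventually_gt_atTop (1 - ε)
  obtain ⟨a, ha⟩ := eventually_atTop.mp hev
  refine ⟨max a N, fun n hn => ?_⟩
  have hNn : N < n := lt_of_le_of_lt (le_max_right a N) hn
  have han : a ≤ n := le_of_lt (lt_of_le_of_lt (le_max_left a N) hn)
  have h1 := main n hNn
  have hn4 : (4:ℝ) ≤ (n:ℝ) := by exact_mod_cast by omega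
  have hln : 0 < Real.log n := Real.log_pos (by linarith)
  have hc := ha n han
  have hsplit : (Real.log n)^γ = (Real.log n)^(γ-1) * Real.log n := by
    nth_rewrite 1 [show γ = (γ-1)+1 by ring]
    rw [Real.rpow_add hln, Real.rpow_one]
  have h2 : (1-ε) * n * Real.log n < c * n * (Real.log n)^γ := by
    rw [hsplit]
    have hnl : (0:ℝ) < (n:ℝ) * Real.log n := by positivity
    nlinarith
  linarith
end
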